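/- arXiv:hep-th/9901021 — 6 statements merged into one kernel-verified Lean document; each statement's English description precedes it below -/
import Mathlib

section
/- Let k be an even nonnegative integer and let (N, ν) be a measure space with ν a finite measure. For each even j with 0 ≤ j ≤ k let v_j : N → ℝ be a bounded measurable function. Let ε₀ > 0, C > 0, c₀ > 0; for each even i with 0 ≤ i ≤ k+1 let b_i : N → ℝ be bounded measurable with b_0(x) ≥ c₀ for all x, and let b : N × (0, ε₀) → (0, ∞) be measurable satisfying |b(x,ε) − Σ_{i even, 0 ≤ i ≤ k+1} b_i(x) ε^i| ≤ C ε^{k+2} for all (x, ε). Define D(ε) = ∫_N ( ∫_ε^{ε·b(x,ε)} Σ_{j even, 0 ≤ j ≤ k} v_j(x) r^{j−k−1} dr ) dν(x), where the inner integral is the signed integral over the interval from ε to ε·b(x,ε). Then there exist real numbers a_2, a_4, …, a_k (one for each even m with 2 ≤ m ≤ k) and c ∈ ℝ such that D(ε) − Σ_{m even, 2 ≤ m ≤ k} a_m ε^{−m} → c as ε → 0⁺. In particular, D(ε) contains no log(1/ε) term as ε → 0⁺. -/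
/-!
Term by term, `∫_ε^{εb} r^{j-k-1} dr` is `log b` for `j = k` and `ε^{-n} (b^{-n} - 1) / (-n)`
with `n = k - j` even and positive otherwise. Up to `O(ε^{k+2})` uniformly in `x`, `b` is a
polynomial in `ε²` with bounded measurable coefficients and constant term `b₀ ≥ c₀ > 0`; by a
truncated geometric series so is `b⁻¹`, hence every `b^{-n}`. Multiplying by `ε^{-n}`, the
coefficients of degree `< n/2` give even poles `ε^{-m}` with `2 ≤ m ≤ n`, and what is left is
bounded uniformly in `x` and converges pointwise as `ε → 0⁺`. The only term that could produce
`log ε` is the one with `n = 0`, and it is `v_k log b`, which is bounded and tends to `v_k log b₀`.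
Integrating over `N`, dominated convergence gives the constant term.
-/

open MeasureTheory Filter Set Polynomial Asymptotics Topology

theorem sum_range_two_mul_ite_even {M : Type*} [AddCommMonoid M] (g : ℕ → M) (n : ℕ) :
    ∑ i ∈ Finset.range (2 * n), (if Even i then g i else 0) = ∑ t ∈ Finset.range n, g (2 * t) := by
  induction n with
  | zero => simp
  | succ n ih =>
    rw [show 2 * (n + 1) = 2 * n + 1 + 1 by ring, Finset.sum_range_succ, Finset.sum_range_succ, ih,
      Finset.sum_range_succ]
    simp

theorem inv_sub_sum_geom {K : Type*} [Field K] {a b : K} (ha : a ≠ 0) (hb : b ≠ 0) (n : ℕ) :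
    b⁻¹ - ∑ s ∈ Finset.range n, a⁻¹ ^ (s + 1) * (a - b) ^ s = (a - b) ^ n * a⁻¹ ^ n * b⁻¹ := by
  induction n with
  | zero => simp
  | succ n ih =>
    rw [Finset.sum_range_succ, ← sub_sub, ih]
    linear_combination (a - b) ^ n * a⁻¹ ^ n * (a⁻¹ * mul_inv_cancel₀ hb - b⁻¹ * mul_inv_cancel₀ ha)

theorem abs_log_le_add_inv {y : ℝ} (hy : 0 < y) : |Real.log y| ≤ y + y⁻¹ := by
  have h₁ := Real.log_le_sub_one_of_pos hy
  have h₂ := Real.log_le_sub_one_of_pos (inv_pos.2 hy)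
  rw [Real.log_inv] at h₂
  exact abs_le.2 ⟨by linarith, by linarith [inv_pos.2 hy]⟩

theorem abs_sum_mul_pow_le {a : ℕ → ℝ} {M u : ℝ} (ha : ∀ i, |a i| ≤ M) (hu : |u| ≤ 1) (n : ℕ) :
    |∑ i ∈ Finset.range n, a i * u ^ i| ≤ n * M := by
  calc |∑ i ∈ Finset.range n, a i * u ^ i| ≤ ∑ i ∈ Finset.range n, |a i * u ^ i| :=
        Finset.abs_sum_le_sum_abs _ _
    _ ≤ ∑ i ∈ Finset.range n, M := Finset.sum_le_sum fun i _ => by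
        rw [abs_mul, abs_pow]
        exact (mul_le_of_le_one_right (abs_nonneg _) (pow_le_one₀ (abs_nonneg _) hu)).trans (ha i)
    _ = n * M := by simp

noncomputable def evenPoleSum (k : ℕ) (a : ℕ → ℝ) (ε : ℝ) : ℝ :=
  ∑ m ∈ Finset.range (k + 1), if Even m ∧ 2 ≤ m then a m * ε ^ (-(m : ℤ)) else 0

theorem evenPoleSum_add (k : ℕ) (a b : ℕ → ℝ) (ε : ℝ) :
    evenPoleSum k (fun m => a m + b m) ε = evenPoleSum k a ε + evenPoleSum k b ε := by
  simp only [evenPoleSum, ← Finset.sum_add_distrib]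
  exact Finset.sum_congr rfl fun m _ => by split_ifs <;> ring

theorem evenPoleSum_zero (k : ℕ) (ε : ℝ) : evenPoleSum k (fun _ => 0) ε = 0 := by
  simp [evenPoleSum]

theorem zpow_mul_sum_eq_evenPoleSum {k p : ℕ} (hpk : 2 * p ≤ k) (c : ℕ → ℝ) {ε : ℝ}
    (hε : ε ≠ 0) :
    ε ^ (-(2 * p : ℤ)) * ∑ i ∈ Finset.range p, c i * (ε ^ 2) ^ i
      = evenPoleSum k (fun m => if m ≤ 2 * p then c (p - m / 2) else 0) ε := by
  have hterm : ∀ m, (if Even m ∧ 2 ≤ m then (if m ≤ 2 * p then c (p - m / 2) else 0)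
      * ε ^ (-(m : ℤ)) else 0) = if Even m ∧ 2 ≤ m ∧ m ≤ 2 * p then c (p - m / 2)
      * ε ^ (-(m : ℤ)) else 0 := fun m => by
    by_cases h : Even m ∧ 2 ≤ m <;> by_cases h' : m ≤ 2 * p <;> simp [h, h']
  rw [evenPoleSum, Finset.sum_congr rfl fun m _ => hterm m, ← Finset.sum_filter, Finset.mul_sum]
  refine Finset.sum_nbij' (fun i => 2 * (p - i)) (fun m => p - m / 2) ?_ ?_ ?_ ?_ ?_
  all_goals simp only [Finset.mem_filter, Finset.mem_range, Nat.even_iff]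
  · intro i hi; omega
  · intro m hm; omega
  · intro i hi; omega
  · intro m hm; omega
  · intro i hi
    have h2 : p - 2 * (p - i) / 2 = i := by omega
    rw [h2, mul_left_comm, ← pow_mul, ← zpow_natCast, ← zpow_add₀ hε]
    congr 2
    push_cast [Nat.cast_sub hi.le]
    ring

noncomputable def zpowIntegral (m : ℤ) (ε β : ℝ) : ℝ :=
  if m = 0 then Real.log β else ε ^ m * (β ^ m - 1) / m

theorem measurable_zpowIntegral (m : ℤ) (ε : ℝ) : Measurable (zpowIntegral m ε) := by
  unfold zpowIntegral
  split_ifs <;> fun_prop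

theorem zero_notMem_uIcc_self_mul {ε β : ℝ} (hε : 0 < ε) (hβ : 0 < β) :
    (0 : ℝ) ∉ uIcc ε (ε * β) := by
  rw [mem_uIcc]
  rintro (⟨h, -⟩ | ⟨h, -⟩) <;> nlinarith [mul_pos hε hβ]

theorem integral_zpow_sub_one {ε β : ℝ} (hε : 0 < ε) (hβ : 0 < β) (m : ℤ) :
    ∫ r in ε..ε * β, r ^ (m - 1) = zpowIntegral m ε β := by
  have h0 := zero_notMem_uIcc_self_mul hε hβ
  unfold zpowIntegral
  split_ifs with hm
  · simp only [hm, zero_sub, zpow_neg_one, integral_inv h0]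
    rw [mul_div_cancel_left₀ _ hε.ne']
  · have hm' : m - 1 ≠ -1 := fun h => hm (by omega)
    rw [integral_zpow (Or.inr ⟨hm', h0⟩), sub_add_cancel, mul_zpow]
    push_cast
    ring

theorem integral_sum_ite_even_zpow (k : ℕ) (c : ℕ → ℝ) {ε β : ℝ} (hε : 0 < ε) (hβ : 0 < β) :
    ∫ r in ε..ε * β, ∑ j ∈ Finset.range (k + 1),
        (if Even j then c j * r ^ ((j : ℤ) - (k : ℤ) - 1) else 0)
      = ∑ j ∈ Finset.range (k + 1),
          if Even j then c j * zpowIntegral ((j : ℤ) - k) ε β else 0 := by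
  have h0 := zero_notMem_uIcc_self_mul hε hβ
  rw [intervalIntegral.integral_finsetSum fun j _ => ?_]
  · refine Finset.sum_congr rfl fun j _ => ?_
    by_cases hj : Even j <;>
      simp [hj, intervalIntegral.integral_const_mul, integral_zpow_sub_one hε hβ]
  · by_cases hj : Even j
    · simpa [hj] using (intervalIntegral.intervalIntegrable_zpow (Or.inr h0)).const_mul (c j)
    · simp [hj]

/-- The limit `ε → 0⁺` on pairs `(x, ε)`, uniformly in `x`: `f =O[nhdsGTZeroUnif N] g` means
`|f (x, ε)| ≤ C |g (x, ε)|` for all `x` and all small `ε > 0`. -/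
def nhdsGTZeroUnif (N : Type*) : Filter (N × ℝ) := (𝓝[>] (0 : ℝ)).comap Prod.snd

section

variable {N : Type*}

theorem eventually_nhdsGTZeroUnif {p : N × ℝ → Prop} :
    (∀ᶠ q in nhdsGTZeroUnif N, p q) ↔ ∀ᶠ ε in 𝓝[>] 0, ∀ x, p (x, ε) := by
  simp only [nhdsGTZeroUnif, eventually_comap, Prod.forall]
  exact eventually_congr (.of_forall fun ε => ⟨fun h x => h x ε rfl, fun h x _ hε => hε ▸ h x⟩)

theorem tendsto_snd_nhdsGTZeroUnif : Tendsto Prod.snd (nhdsGTZeroUnif N) (𝓝[>] 0) :=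
  tendsto_comap

theorem tendsto_prodMk_nhdsGTZeroUnif (x : N) :
    Tendsto (fun ε => (x, ε)) (𝓝[>] 0) (nhdsGTZeroUnif N) :=
  tendsto_comap_iff.2 tendsto_id

theorem eventually_snd_mem_Ioo {δ : ℝ} (hδ : 0 < δ) :
    ∀ᶠ q in nhdsGTZeroUnif N, q.2 ∈ Ioo 0 δ :=
  tendsto_snd_nhdsGTZeroUnif.eventually (Ioo_mem_nhdsGT hδ)

theorem isBigO_pow_pow {m n : ℕ} (h : n ≤ m) :
    (fun q : N × ℝ => q.2 ^ m) =O[nhdsGTZeroUnif N] fun q => q.2 ^ n := by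
  refine .of_bound 1 ((eventually_snd_mem_Ioo one_pos).mono fun q hq => ?_)
  rw [one_mul, Real.norm_eq_abs, Real.norm_eq_abs, abs_pow, abs_pow, abs_of_pos hq.1]
  exact pow_le_pow_of_le_one hq.1.le hq.2.le h

theorem isBigO_pow_one (m : ℕ) :
    (fun q : N × ℝ => q.2 ^ m) =O[nhdsGTZeroUnif N] fun _ => (1 : ℝ) := by
  simpa using isBigO_pow_pow (N := N) (Nat.zero_le m)

theorem tendsto_pow_nhdsGTZeroUnif {m : ℕ} (hm : m ≠ 0) :
    Tendsto (fun q : N × ℝ => q.2 ^ m) (nhdsGTZeroUnif N) (𝓝 0) :=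
  ((continuous_pow m).tendsto' 0 0 (zero_pow hm)).comp
    (tendsto_snd_nhdsGTZeroUnif.mono_right nhdsWithin_le_nhds)

theorem Asymptotics.IsBigO.exists_forall_abs_le {f : N × ℝ → ℝ}
    (hf : f =O[nhdsGTZeroUnif N] fun _ => (1 : ℝ)) :
    ∃ M, ∀ᶠ ε in 𝓝[>] 0, ∀ x, |f (x, ε)| ≤ M := by
  obtain ⟨M, hM⟩ := hf.bound
  exact ⟨M, eventually_nhdsGTZeroUnif.1 (hM.mono fun q hq => by simpa using hq)⟩

end

def boundedMeasurable (N : Type*) [MeasurableSpace N] : Subring (N → ℝ) where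
  carrier := {f | Measurable f ∧ ∃ M, ∀ x, |f x| ≤ M}
  mul_mem' := by
    rintro f g ⟨hf, A, hA⟩ ⟨hg, B, hB⟩
    refine ⟨hf.mul hg, A * B, fun x => ?_⟩
    rw [Pi.mul_apply, abs_mul]
    exact mul_le_mul (hA x) (hB x) (abs_nonneg _) ((abs_nonneg _).trans (hA x))
  one_mem' := ⟨measurable_const, 1, fun _ => by simp⟩
  add_mem' := by
    rintro f g ⟨hf, A, hA⟩ ⟨hg, B, hB⟩
    exact ⟨hf.add hg, A + B, fun x => (abs_add_le _ _).trans (add_le_add (hA x) (hB x))⟩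
  zero_mem' := ⟨measurable_const, 0, fun _ => by simp⟩
  neg_mem' := by
    rintro f ⟨hf, A, hA⟩
    exact ⟨hf.neg, A, fun x => by simpa using hA x⟩

instance {N : Type*} [MeasurableSpace N] : CoeFun (boundedMeasurable N) fun _ => N → ℝ :=
  ⟨Subtype.val⟩

section

variable {N : Type*} [MeasurableSpace N]

namespace boundedMeasurable

theorem measurable (f : boundedMeasurable N) : Measurable (f : N → ℝ) := f.2.1

theorem exists_bound (f : boundedMeasurable N) : ∃ M, ∀ x, |f x| ≤ M := f.2.2

theorem integrable (f : boundedMeasurable N) (ν : Measure N) [IsFiniteMeasure ν] :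
    Integrable (f : N → ℝ) ν :=
  let ⟨M, hM⟩ := exists_bound f
  .of_bound (measurable f).aestronglyMeasurable M (ae_of_all _ hM)

theorem const_mem (c : ℝ) : (fun _ => c) ∈ boundedMeasurable N :=
  ⟨measurable_const, |c|, fun _ => le_rfl⟩

theorem inv_mem {f : N → ℝ} (hf : f ∈ boundedMeasurable N) {c₀ : ℝ} (hc₀ : 0 < c₀)
    (hfc₀ : ∀ x, c₀ ≤ f x) : f⁻¹ ∈ boundedMeasurable N := by
  refine ⟨hf.1.inv, c₀⁻¹, fun x => ?_⟩
  rw [Pi.inv_apply, abs_inv, abs_of_pos (hc₀.trans_le (hfc₀ x))]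
  exact inv_anti₀ hc₀ (hfc₀ x)

theorem exists_abs_coeff_le (P : (boundedMeasurable N)[X]) :
    ∃ M, ∀ i x, |P.coeff i x| ≤ M := by
  choose M hM using fun i => exists_bound (P.coeff i)
  refine ⟨∑ i ∈ Finset.range (P.natDegree + 1), |M i|, fun i x => ?_⟩
  by_cases hi : i ≤ P.natDegree
  · exact (hM i x).trans ((le_abs_self _).trans (Finset.single_le_sum (fun j _ => abs_nonneg (M j))
      (Finset.mem_range.2 (Nat.lt_succ_of_le hi))))
  · rw [coeff_eq_zero_of_natDegree_lt (not_le.1 hi)]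
    simpa using Finset.sum_nonneg fun j _ => abs_nonneg (M j)

end boundedMeasurable

/-- A polynomial whose coefficients `P_i` are bounded measurable functions, read as the function
`(x, ε) ↦ ∑ i, P_i x * ε ^ (2 * i)`. -/
noncomputable def evalSq : (boundedMeasurable N)[X] →+* (N × ℝ → ℝ) :=
  eval₂RingHom (RingHom.pi fun q => (Pi.evalRingHom (fun _ => ℝ) q.1).comp
    (boundedMeasurable N).subtype) fun q => q.2 ^ 2

theorem evalSq_C (c : boundedMeasurable N) : evalSq (C c) = fun q => c q.1 :=
  eval₂_C _ _

theorem evalSq_X : evalSq (X : (boundedMeasurable N)[X]) = fun q => q.2 ^ 2 :=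
  eval₂_X _ _

theorem evalSq_apply_eq_sum (P : (boundedMeasurable N)[X]) {n : ℕ} (hn : P.natDegree < n)
    (q : N × ℝ) : evalSq P q = ∑ i ∈ Finset.range n, P.coeff i q.1 * (q.2 ^ 2) ^ i := by
  simp [evalSq, eval₂_eq_sum_range' _ hn, Finset.sum_apply]

/-- `ε ^ (-2 * p)` times the part of `evalSq P` of degree `≥ p` in `ε²`. -/
noncomputable def evalSqShift (P : (boundedMeasurable N)[X]) (p : ℕ) (q : N × ℝ) : ℝ :=
  ∑ i ∈ Finset.range (P.natDegree + 1), P.coeff (p + i) q.1 * (q.2 ^ 2) ^ i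

theorem evalSq_eq_sum_add_evalSqShift (P : (boundedMeasurable N)[X]) (p : ℕ) (q : N × ℝ) :
    evalSq P q = ∑ i ∈ Finset.range p, P.coeff i q.1 * (q.2 ^ 2) ^ i
      + (q.2 ^ 2) ^ p * evalSqShift P p q := by
  rw [evalSq_apply_eq_sum P (by omega : P.natDegree < p + (P.natDegree + 1)),
    Finset.sum_range_add, evalSqShift, Finset.mul_sum]
  congr 1
  exact Finset.sum_congr rfl fun i _ => by ring

theorem evalSqShift_zero (P : (boundedMeasurable N)[X]) : evalSqShift P 0 = evalSq P := by
  ext q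
  simp [evalSq_eq_sum_add_evalSqShift P 0 q]

theorem isBigO_evalSqShift (P : (boundedMeasurable N)[X]) (p : ℕ) :
    evalSqShift P p =O[nhdsGTZeroUnif N] fun _ => (1 : ℝ) := by
  obtain ⟨M, hM⟩ := boundedMeasurable.exists_abs_coeff_le P
  refine .of_bound ((P.natDegree + 1) * M) ((eventually_snd_mem_Ioo one_pos).mono fun q hq => ?_)
  have hu : |q.2 ^ 2| ≤ 1 := by
    rw [abs_of_nonneg (sq_nonneg _)]
    exact pow_le_one₀ hq.1.le hq.2.le
  simpa [evalSqShift] using abs_sum_mul_pow_le (fun i => hM (p + i) q.1) hu (P.natDegree + 1)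

theorem tendsto_evalSqShift (P : (boundedMeasurable N)[X]) (p : ℕ) (x : N) :
    Tendsto (fun ε => evalSqShift P p (x, ε)) (𝓝[>] 0) (𝓝 (P.coeff p x)) := by
  have hcont : Continuous fun ε : ℝ => evalSqShift P p (x, ε) := by
    unfold evalSqShift; fun_prop
  have h0 : evalSqShift P p (x, 0) = P.coeff p x := by
    simp [evalSqShift, Finset.sum_range_succ']
  exact h0 ▸ hcont.continuousAt.tendsto.mono_left nhdsWithin_le_nhds

theorem isBigO_evalSq_sub_coeff_zero (P : (boundedMeasurable N)[X]) :
    (evalSq P - fun q => P.coeff 0 q.1) =O[nhdsGTZeroUnif N] fun q => q.2 ^ 2 := by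
  have h : (evalSq P - fun q => P.coeff 0 q.1) = fun q => q.2 ^ 2 * evalSqShift P 1 q := by
    ext q
    simp [evalSq_eq_sum_add_evalSqShift P 1 q]
  rw [h]
  simpa using (isBigO_refl (fun q : N × ℝ => q.2 ^ 2) _).mul (isBigO_evalSqShift P 1)

theorem isBigO_evalSq (P : (boundedMeasurable N)[X]) :
    evalSq P =O[nhdsGTZeroUnif N] fun _ => (1 : ℝ) :=
  evalSqShift_zero P ▸ isBigO_evalSqShift P 0

theorem isBigO_coeff_zero_sub {r : ℕ} {f : N × ℝ → ℝ} {P : (boundedMeasurable N)[X]}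
    (hP : (f - evalSq P) =O[nhdsGTZeroUnif N] fun q => q.2 ^ r) (hr : r ≠ 0) :
    ((fun q => P.coeff 0 q.1) - f) =O[nhdsGTZeroUnif N] fun q => q.2 := by
  have h := (isBigO_evalSq_sub_coeff_zero P).trans (isBigO_pow_pow one_le_two) |>.add
    (hP.trans (isBigO_pow_pow (Nat.one_le_iff_ne_zero.2 hr)))
  exact h.neg_left.congr (fun q => by simp only [Pi.sub_apply]; ring) fun q => pow_one _

theorem tendsto_coeff_zero_sub {r : ℕ} {f : N × ℝ → ℝ} {P : (boundedMeasurable N)[X]}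
    (hP : (f - evalSq P) =O[nhdsGTZeroUnif N] fun q => q.2 ^ r) (hr : r ≠ 0) :
    Tendsto ((fun q => P.coeff 0 q.1) - f) (nhdsGTZeroUnif N) (𝓝 0) :=
  (isBigO_coeff_zero_sub hP hr).trans_tendsto
    (tendsto_snd_nhdsGTZeroUnif.mono_right nhdsWithin_le_nhds)

theorem eventually_half_le {r : ℕ} {f : N × ℝ → ℝ} {P : (boundedMeasurable N)[X]}
    (hP : (f - evalSq P) =O[nhdsGTZeroUnif N] fun q => q.2 ^ r) (hr : r ≠ 0) {c₀ : ℝ}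
    (hc₀ : 0 < c₀) (hP₀ : ∀ x, c₀ ≤ P.coeff 0 x) : ∀ᶠ q in nhdsGTZeroUnif N, c₀ / 2 ≤ f q :=
  ((tendsto_order.1 (tendsto_coeff_zero_sub hP hr)).2 (c₀ / 2) (half_pos hc₀)).mono fun q hq => by
    have := hP₀ q.1
    simp only [Pi.sub_apply] at hq
    linarith

theorem tendsto_apply_coeff_zero {r : ℕ} {f : N × ℝ → ℝ} {P : (boundedMeasurable N)[X]}
    (hP : (f - evalSq P) =O[nhdsGTZeroUnif N] fun q => q.2 ^ r) (hr : r ≠ 0) (x : N) :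
    Tendsto (fun ε => f (x, ε)) (𝓝[>] 0) (𝓝 (P.coeff 0 x)) := by
  have h := ((tendsto_coeff_zero_sub hP hr).comp (tendsto_prodMk_nhdsGTZeroUnif x)).neg.add_const
    (P.coeff 0 x)
  simpa using h

def HasEvenExpansion (r : ℕ) (f : N × ℝ → ℝ) : Prop :=
  ∃ P : (boundedMeasurable N)[X], (f - evalSq P) =O[nhdsGTZeroUnif N] fun q => q.2 ^ r

theorem hasEvenExpansion_evalSq (r : ℕ) (P : (boundedMeasurable N)[X]) :
    HasEvenExpansion r (evalSq P) :=
  ⟨P, (isBigO_zero _ _).congr_left fun q => by simp⟩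

theorem hasEvenExpansion_const (r : ℕ) (c : boundedMeasurable N) :
    HasEvenExpansion r fun q => c q.1 :=
  evalSq_C c ▸ hasEvenExpansion_evalSq r (C c)

namespace HasEvenExpansion

variable {r : ℕ} {f g : N × ℝ → ℝ}

theorem of_isBigO_sub (hf : HasEvenExpansion r f)
    (h : (g - f) =O[nhdsGTZeroUnif N] fun q => q.2 ^ r) : HasEvenExpansion r g :=
  let ⟨P, hP⟩ := hf
  ⟨P, (h.add hP).congr_left fun q => by simp⟩

theorem add (hf : HasEvenExpansion r f) (hg : HasEvenExpansion r g) :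
    HasEvenExpansion r (f + g) :=
  let ⟨P, hP⟩ := hf
  let ⟨Q, hQ⟩ := hg
  ⟨P + Q, (hP.add hQ).congr_left fun q => by simp only [Pi.add_apply, Pi.sub_apply, map_add]; ring⟩

theorem sub (hf : HasEvenExpansion r f) (hg : HasEvenExpansion r g) :
    HasEvenExpansion r (f - g) :=
  let ⟨P, hP⟩ := hf
  let ⟨Q, hQ⟩ := hg
  ⟨P - Q, (hP.sub hQ).congr_left fun q => by simp only [Pi.sub_apply, map_sub]; ring⟩

theorem isBigO_one (hf : HasEvenExpansion r f) : f =O[nhdsGTZeroUnif N] fun _ => (1 : ℝ) :=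
  let ⟨P, hP⟩ := hf
  ((hP.trans (isBigO_pow_one r)).add (isBigO_evalSq P)).congr_left fun q => by simp

theorem mul (hf : HasEvenExpansion r f) (hg : HasEvenExpansion r g) :
    HasEvenExpansion r (f * g) := by
  have hf₁ := hf.isBigO_one
  obtain ⟨P, hP⟩ := hf
  obtain ⟨Q, hQ⟩ := hg
  refine ⟨P * Q, ?_⟩
  exact ((hf₁.mul hQ).add ((isBigO_evalSq Q).mul hP)).congr
    (fun q => by simp only [Pi.sub_apply, Pi.mul_apply, map_mul]; ring) fun q => one_mul _

theorem pow (hf : HasEvenExpansion r f) (n : ℕ) : HasEvenExpansion r (f ^ n) := by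
  induction n with
  | zero => simpa using hasEvenExpansion_evalSq r 1
  | succ n ih => simpa [pow_succ] using ih.mul hf

theorem sum {ι : Type*} (s : Finset ι) {F : ι → N × ℝ → ℝ}
    (h : ∀ i ∈ s, HasEvenExpansion r (F i)) : HasEvenExpansion r (∑ i ∈ s, F i) :=
  Finset.sum_induction F _ (fun _ _ => add) (by simpa using hasEvenExpansion_evalSq r 0) h

end HasEvenExpansion

/-- Truncated geometric series around `P_0`: the remainder `(P_0 - f) ^ r * P_0⁻¹ ^ r * f⁻¹` is
`O(ε ^ r)` because `P_0 - f = O(ε)`. -/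
theorem hasEvenExpansion_inv {r : ℕ} {f : N × ℝ → ℝ} {P : (boundedMeasurable N)[X]}
    (hP : (f - evalSq P) =O[nhdsGTZeroUnif N] fun q => q.2 ^ r) (hr : r ≠ 0) {c₀ : ℝ}
    (hc₀ : 0 < c₀) (hP₀ : ∀ x, c₀ ≤ P.coeff 0 x) : HasEvenExpansion r f⁻¹ := by
  set c := P.coeff 0
  let cinv : boundedMeasurable N := ⟨(c : N → ℝ)⁻¹, boundedMeasurable.inv_mem c.2 hc₀ hP₀⟩
  have hpos := eventually_half_le hP hr hc₀ hP₀
  have hfinv : f⁻¹ =O[nhdsGTZeroUnif N] fun _ => (1 : ℝ) := by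
    refine .of_bound (c₀ / 2)⁻¹ (hpos.mono fun q hq => ?_)
    rw [Pi.inv_apply, norm_inv, Real.norm_of_nonneg ((half_pos hc₀).le.trans hq), norm_one, mul_one]
    exact inv_anti₀ (half_pos hc₀) hq
  have hgeom : HasEvenExpansion r (∑ s ∈ Finset.range r,
      (fun q => cinv q.1) ^ (s + 1) * ((fun q => c q.1) - f) ^ s) :=
    .sum _ fun s _ => ((hasEvenExpansion_const r cinv).pow _).mul
      (((hasEvenExpansion_const r c).sub ⟨P, hP⟩).pow s)
  refine hgeom.of_isBigO_sub ?_
  refine (((isBigO_coeff_zero_sub hP hr).pow r).mul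
    ((hasEvenExpansion_const r cinv).isBigO_one.pow r) |>.mul hfinv).congr' ?_
    (.of_forall fun q => by simp)
  filter_upwards [hpos] with q hq
  have hc : c q.1 ≠ 0 := (hc₀.trans_le (hP₀ q.1)).ne'
  have hf : f q ≠ 0 := ((half_pos hc₀).trans_le hq).ne'
  simp only [Pi.sub_apply, Pi.inv_apply, Finset.sum_apply, Pi.mul_apply, Pi.pow_apply]
  exact (inv_sub_sum_geom hc hf r).symm

def HasEvenPoleExpansion (k : ℕ) (F : N × ℝ → ℝ) : Prop :=
  ∃ (W : ℕ → boundedMeasurable N) (h : N → ℝ),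
    (fun q => F q - evenPoleSum k (fun m => W m q.1) q.2) =O[nhdsGTZeroUnif N]
      (fun _ => (1 : ℝ)) ∧
    ∀ x, Tendsto (fun ε => F (x, ε) - evenPoleSum k (fun m => W m x) ε) (𝓝[>] 0) (𝓝 (h x))

theorem hasEvenPoleExpansion_of_tendsto {k : ℕ} {F : N × ℝ → ℝ} {h : N → ℝ}
    (hF : F =O[nhdsGTZeroUnif N] fun _ => (1 : ℝ))
    (hlim : ∀ x, Tendsto (fun ε => F (x, ε)) (𝓝[>] 0) (𝓝 (h x))) :
    HasEvenPoleExpansion k F :=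
  ⟨0, h, by simpa [evenPoleSum_zero] using hF, fun x => by simpa [evenPoleSum_zero] using hlim x⟩

theorem hasEvenPoleExpansion_zero (k : ℕ) : HasEvenPoleExpansion k (0 : N × ℝ → ℝ) :=
  hasEvenPoleExpansion_of_tendsto (h := 0) (isBigO_zero _ _) fun _ => tendsto_const_nhds

namespace HasEvenPoleExpansion

variable {k : ℕ} {F G : N × ℝ → ℝ}

theorem add (hF : HasEvenPoleExpansion k F) (hG : HasEvenPoleExpansion k G) :
    HasEvenPoleExpansion k (F + G) := by
  obtain ⟨W₁, h₁, hb₁, hl₁⟩ := hF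
  obtain ⟨W₂, h₂, hb₂, hl₂⟩ := hG
  have e : ∀ q : N × ℝ, F q - evenPoleSum k (fun m => W₁ m q.1) q.2
      + (G q - evenPoleSum k (fun m => W₂ m q.1) q.2)
      = (F + G) q - evenPoleSum k (fun m => (W₁ + W₂) m q.1) q.2 := fun q => by
    simp only [Pi.add_apply, Subring.coe_add, evenPoleSum_add]; ring
  exact ⟨W₁ + W₂, h₁ + h₂, (hb₁.add hb₂).congr_left e,
    fun x => ((hl₁ x).add (hl₂ x)).congr fun ε => e (x, ε)⟩

theorem sum {ι : Type*} (s : Finset ι) {F : ι → N × ℝ → ℝ}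
    (h : ∀ i ∈ s, HasEvenPoleExpansion k (F i)) : HasEvenPoleExpansion k (∑ i ∈ s, F i) :=
  Finset.sum_induction F _ (fun _ _ => add) (hasEvenPoleExpansion_zero k) h

end HasEvenPoleExpansion

/-- The coefficients `P_i` with `i < p` become the poles `ε ^ (-(2 * p - 2 * i))`; the rest of
`ε ^ (-2 * p) * evalSq P` is `evalSqShift P p`, and the error term is `O(ε ^ (r - 2 * p))`. -/
theorem HasEvenExpansion.hasEvenPoleExpansion_zpow_mul {r k p : ℕ} {g : N × ℝ → ℝ}
    (hg : HasEvenExpansion r g) (hpk : 2 * p ≤ k) (hpr : 2 * p < r) :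
    HasEvenPoleExpansion k fun q => q.2 ^ (-(2 * p : ℤ)) * g q := by
  obtain ⟨P, hP⟩ := hg
  set W : ℕ → boundedMeasurable N := fun m => if m ≤ 2 * p then P.coeff (p - m / 2) else 0
  have hsplit : ∀ q : N × ℝ, q.2 ≠ 0 → q.2 ^ (-(2 * p : ℤ)) * (g - evalSq P) q
      + evalSqShift P p q = q.2 ^ (-(2 * p : ℤ)) * g q - evenPoleSum k (fun m => W m q.1) q.2 := by
    intro q hq
    have hW : (fun m => W m q.1) = fun m => if m ≤ 2 * p then P.coeff (p - m / 2) q.1 else 0 := by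
      ext m; split_ifs <;> simp [W, *]
    have hcancel : q.2 ^ (-(2 * p : ℤ)) * (q.2 ^ 2) ^ p = 1 := by
      rw [← pow_mul, ← zpow_natCast, ← zpow_add₀ hq]; simp
    have hhead := zpow_mul_sum_eq_evenPoleSum hpk (fun i => P.coeff i q.1) hq
    rw [hW, ← hhead, Pi.sub_apply, evalSq_eq_sum_add_evalSqShift]
    linear_combination (-evalSqShift P p q) * hcancel
  have hfirst : (fun q : N × ℝ => q.2 ^ (-(2 * p : ℤ)) * (g - evalSq P) q)
      =O[nhdsGTZeroUnif N] fun q => q.2 ^ (r - 2 * p) := by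
    refine ((isBigO_refl (fun q : N × ℝ => q.2 ^ (-(2 * p : ℤ))) _).mul hP).congr'
      (.of_forall fun q => rfl) ((eventually_snd_mem_Ioo one_pos).mono fun q hq => ?_)
    dsimp only
    rw [← zpow_natCast, ← zpow_natCast, ← zpow_add₀ hq.1.ne']
    congr 1
    push_cast [Nat.cast_sub hpr.le]
    ring
  refine ⟨W, fun x => P.coeff p x, ?_, fun x => ?_⟩
  · exact ((hfirst.trans (isBigO_pow_one _)).add (isBigO_evalSqShift P p)).congr'
      ((eventually_snd_mem_Ioo one_pos).mono fun q hq => hsplit q hq.1.ne')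
      (.of_forall fun _ => rfl)
  · have h := ((hfirst.trans_tendsto (tendsto_pow_nhdsGTZeroUnif (by omega))).comp
      (tendsto_prodMk_nhdsGTZeroUnif x)).add (tendsto_evalSqShift P p x)
    rw [zero_add] at h
    exact h.congr' (eventually_mem_nhdsWithin.mono fun ε hε => hsplit (x, ε) (ne_of_gt hε))

theorem hasEvenPoleExpansion_mul_log {k r : ℕ} {f : N × ℝ → ℝ} {P : (boundedMeasurable N)[X]}
    (hP : (f - evalSq P) =O[nhdsGTZeroUnif N] fun q => q.2 ^ r) (hr : r ≠ 0) {c₀ : ℝ}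
    (hc₀ : 0 < c₀) (hP₀ : ∀ x, c₀ ≤ P.coeff 0 x) (w : boundedMeasurable N) :
    HasEvenPoleExpansion k fun q => w q.1 * Real.log (f q) := by
  have hlog : (fun q => Real.log (f q)) =O[nhdsGTZeroUnif N] fun _ => (1 : ℝ) := by
    refine (IsBigO.of_bound' ?_).trans
      ((HasEvenExpansion.isBigO_one ⟨P, hP⟩).add (hasEvenExpansion_inv hP hr hc₀ hP₀).isBigO_one)
    filter_upwards [eventually_half_le hP hr hc₀ hP₀] with q hq
    have hf : 0 < f q := (half_pos hc₀).trans_le hq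
    simp only [Real.norm_eq_abs, Pi.inv_apply]
    rw [abs_of_pos (add_pos hf (inv_pos.2 hf))]
    exact abs_log_le_add_inv hf
  refine hasEvenPoleExpansion_of_tendsto (h := fun x => w x * Real.log (P.coeff 0 x))
    (by simpa using (hasEvenExpansion_const r w).isBigO_one.mul hlog) fun x => ?_
  have hc : P.coeff 0 x ≠ 0 := (hc₀.trans_le (hP₀ x)).ne'
  exact (((Real.continuousAt_log hc).tendsto.comp (tendsto_apply_coeff_zero hP hr x))).const_mul _

theorem hasEvenPoleExpansion_mul_zpowIntegral {k j : ℕ} (hk : Even k) (hj : Even j) (hjk : j ≤ k)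
    {f : N × ℝ → ℝ} {P : (boundedMeasurable N)[X]}
    (hP : (f - evalSq P) =O[nhdsGTZeroUnif N] fun q => q.2 ^ (k + 2)) {c₀ : ℝ}
    (hc₀ : 0 < c₀) (hP₀ : ∀ x, c₀ ≤ P.coeff 0 x) (w : boundedMeasurable N) :
    HasEvenPoleExpansion k fun q => w q.1 * zpowIntegral ((j : ℤ) - k) q.2 (f q) := by
  rcases eq_or_lt_of_le hjk with rfl | hlt
  · simpa [zpowIntegral] using hasEvenPoleExpansion_mul_log hP (by omega) hc₀ hP₀ w
  obtain ⟨p, hp⟩ : ∃ p, k = j + 2 * p := by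
    obtain ⟨a, rfl⟩ := hk; obtain ⟨b, rfl⟩ := hj; exact ⟨a - b, by omega⟩
  have hm : (j : ℤ) - k = -(2 * p : ℤ) := by rw [hp]; push_cast; ring
  have hg : HasEvenExpansion (k + 2) ((fun q => w q.1) * ((f⁻¹) ^ (2 * p) - 1)
      * fun _ => (-(2 * p : ℝ))⁻¹) :=
    ((hasEvenExpansion_const _ w).mul (((hasEvenExpansion_inv hP (by omega) hc₀ hP₀).pow _).sub
      (by simpa using hasEvenExpansion_evalSq (k + 2) 1))).mul
      (hasEvenExpansion_const _ ⟨_, boundedMeasurable.const_mem _⟩)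
  convert hg.hasEvenPoleExpansion_zpow_mul (k := k) (p := p) (by omega) (by omega) using 2 with q
  rw [hm, zpowIntegral, if_neg (by omega)]
  rw [show (2 * p : ℤ) = ((2 * p : ℕ) : ℤ) by push_cast; ring]
  simp only [Pi.mul_apply, Pi.sub_apply, Pi.pow_apply, Pi.inv_apply, Pi.one_apply, zpow_neg,
    zpow_natCast, inv_pow]
  push_cast
  ring

theorem hasEvenPoleExpansion_sum_mul_zpowIntegral {k : ℕ} (hk : Even k) {v : ℕ → N → ℝ}
    (hv_meas : ∀ j, Even j → j ≤ k → Measurable (v j))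
    (hv_bdd : ∀ j, Even j → j ≤ k → ∃ M : ℝ, ∀ x, |v j x| ≤ M)
    {f : N × ℝ → ℝ} {P : (boundedMeasurable N)[X]}
    (hP : (f - evalSq P) =O[nhdsGTZeroUnif N] fun q => q.2 ^ (k + 2)) {c₀ : ℝ}
    (hc₀ : 0 < c₀) (hP₀ : ∀ x, c₀ ≤ P.coeff 0 x) :
    HasEvenPoleExpansion k (∑ j ∈ Finset.range (k + 1),
      if Even j then fun q => v j q.1 * zpowIntegral ((j : ℤ) - k) q.2 (f q) else 0) :=
  .sum _ fun j hj => by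
    have hjk : j ≤ k := Nat.lt_succ_iff.1 (Finset.mem_range.1 hj)
    split_ifs with hje
    · exact hasEvenPoleExpansion_mul_zpowIntegral hk hje hjk hP hc₀ hP₀
        ⟨v j, hv_meas j hje hjk, hv_bdd j hje hjk⟩
    · exact hasEvenPoleExpansion_zero k

theorem integral_evenPoleSum (ν : Measure N) {W : ℕ → N → ℝ} (hW : ∀ m, Integrable (W m) ν)
    (k : ℕ) (ε : ℝ) :
    ∫ x, evenPoleSum k (fun m => W m x) ε ∂ν = evenPoleSum k (fun m => ∫ x, W m x ∂ν) ε := by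
  unfold evenPoleSum
  rw [integral_finsetSum _ fun m _ => ?_]
  · refine Finset.sum_congr rfl fun m _ => ?_
    by_cases hm : Even m ∧ 2 ≤ m <;> simp [hm, integral_mul_const]
  · by_cases hm : Even m ∧ 2 ≤ m <;> simp [hm, (hW m).mul_const]

theorem HasEvenPoleExpansion.exists_tendsto_integral_sub (ν : Measure N) [IsFiniteMeasure ν]
    {k : ℕ} {F : N × ℝ → ℝ} (hF : HasEvenPoleExpansion k F)
    (hmeas : ∀ᶠ ε in 𝓝[>] 0, Measurable fun x => F (x, ε)) :
    ∃ (a : ℕ → ℝ) (c : ℝ),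
      Tendsto (fun ε => ∫ x, F (x, ε) ∂ν - evenPoleSum k a ε) (𝓝[>] 0) (𝓝 c) := by
  obtain ⟨W, h, hbdd, hlim⟩ := hF
  obtain ⟨M, hM⟩ := hbdd.exists_forall_abs_le
  have hWint : ∀ m, Integrable (W m) ν := fun m => boundedMeasurable.integrable (W m) ν
  have hpole_meas : ∀ ε, Measurable fun x => evenPoleSum k (fun m => W m x) ε := fun ε =>
    Finset.measurable_sum _ fun m _ => by
      by_cases hm : Even m ∧ 2 ≤ m <;> simp [hm, (boundedMeasurable.measurable (W m)).mul_const]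
  have hR : ∀ᶠ ε in 𝓝[>] 0, Integrable (fun x => F (x, ε) - evenPoleSum k (fun m => W m x) ε) ν :=
    (hM.and hmeas).mono fun ε ⟨hb, hm⟩ =>
      .of_bound (hm.sub (hpole_meas ε)).aestronglyMeasurable M (ae_of_all _ hb)
  refine ⟨fun m => ∫ x, W m x ∂ν, ∫ x, h x ∂ν, ?_⟩
  refine (tendsto_integral_filter_of_dominated_convergence (fun _ => M)
    (hR.mono fun ε hε => hε.aestronglyMeasurable) (hM.mono fun ε hε => ae_of_all _ hε)
    (integrable_const M) (ae_of_all _ hlim)).congr' (hR.mono fun ε hε => ?_)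
  have hpole : Integrable (fun x => evenPoleSum k (fun m => W m x) ε) ν := by
    unfold evenPoleSum
    refine integrable_finsetSum _ fun m _ => ?_
    by_cases hm : Even m ∧ 2 ≤ m <;> simp [hm, (hWint m).mul_const]
  have hF : Integrable (fun x => F (x, ε)) ν :=
    (hε.add hpole).congr (ae_of_all _ fun x => sub_add_cancel _ _)
  rw [integral_sub hF hpole, integral_evenPoleSum ν hWint]

theorem exists_evalSq_isBigO_sub {k : ℕ} (hk : Even k) {a : ℕ → N → ℝ}
    (ha_meas : ∀ i, Even i → i ≤ k + 1 → Measurable (a i))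
    (ha_bdd : ∀ i, Even i → i ≤ k + 1 → ∃ M : ℝ, ∀ x, |a i x| ≤ M)
    {f : N × ℝ → ℝ} {ε₀ A : ℝ} (hε₀ : 0 < ε₀)
    (hf : ∀ x, ∀ ε ∈ Ioo (0 : ℝ) ε₀,
      |f (x, ε) - ∑ i ∈ Finset.range (k + 2), (if Even i then a i x * ε ^ i else 0)|
        ≤ A * ε ^ (k + 2)) :
    ∃ P : (boundedMeasurable N)[X],
      (f - evalSq P) =O[nhdsGTZeroUnif N] (fun q => q.2 ^ (k + 2)) ∧ ∀ x, P.coeff 0 x = a 0 x := by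
  obtain ⟨K, rfl⟩ := hk
  let aS : ℕ → boundedMeasurable N := fun t => if h : 2 * t ≤ K + K + 1 then
    ⟨a (2 * t), ha_meas _ (even_two_mul t) h, ha_bdd _ (even_two_mul t) h⟩ else 0
  refine ⟨∑ t ∈ Finset.range (K + 1), C (aS t) * X ^ t, .of_bound A ?_, fun x => ?_⟩
  · filter_upwards [eventually_snd_mem_Ioo hε₀] with q hq
    have hpoly : evalSq (∑ t ∈ Finset.range (K + 1), C (aS t) * X ^ t) q
        = ∑ i ∈ Finset.range (K + K + 2), if Even i then a i q.1 * q.2 ^ i else 0 := by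
      rw [show K + K + 2 = 2 * (K + 1) by ring, sum_range_two_mul_ite_even]
      simp only [map_sum, map_mul, evalSq_C, map_pow, evalSq_X, Finset.sum_apply, Pi.mul_apply,
        Pi.pow_apply]
      refine Finset.sum_congr rfl fun t ht => ?_
      rw [Finset.mem_range] at ht
      simp only [aS, dif_pos (by omega : 2 * t ≤ K + K + 1), pow_mul]
    rw [Pi.sub_apply, hpoly, Real.norm_eq_abs, Real.norm_eq_abs, abs_of_pos (pow_pos hq.1 _)]
    exact hf q.1 q.2 hq
  · simp [aS, finsetSum_coeff]

end

theorem stmt_1_general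
    {N : Type*} [MeasurableSpace N] (ν : Measure N) [IsFiniteMeasure ν]
    (k : ℕ) (hk_even : Even k)
    (v : ℕ → N → ℝ)
    (hv_meas : ∀ j, Even j → j ≤ k → Measurable (v j))
    (hv_bdd : ∀ j, Even j → j ≤ k → ∃ M : ℝ, ∀ x, |v j x| ≤ M)
    (ε₀ C c₀ : ℝ) (hε₀ : 0 < ε₀) (hc₀ : 0 < c₀)
    (bc : ℕ → N → ℝ)
    (hbc_meas : ∀ i, Even i → i ≤ k + 1 → Measurable (bc i))
    (hbc_bdd : ∀ i, Even i → i ≤ k + 1 → ∃ M : ℝ, ∀ x, |bc i x| ≤ M)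
    (hb0 : ∀ x, c₀ ≤ bc 0 x)
    (b : N → ℝ → ℝ)
    (hb_meas : Measurable (Function.uncurry b))
    (hb_approx : ∀ x, ∀ ε ∈ Ioo (0 : ℝ) ε₀,
      |b x ε - ∑ i ∈ Finset.range (k + 2), (if Even i then bc i x * ε ^ i else 0)|
        ≤ C * ε ^ (k + 2)) :
    ∃ (a : ℕ → ℝ) (c : ℝ),
      Tendsto (fun ε : ℝ =>
          (∫ x, (∫ r in ε..(ε * b x ε),
              ∑ j ∈ Finset.range (k + 1),
                (if Even j then v j x * r ^ ((j : ℤ) - (k : ℤ) - 1) else 0)) ∂ν)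
          - ∑ m ∈ Finset.range (k + 1),
              (if Even m ∧ 2 ≤ m then a m * ε ^ (-(m : ℤ)) else 0))
        (nhdsWithin 0 (Ioi 0)) (nhds c) := by
  obtain ⟨P, hP, hP₀⟩ := exists_evalSq_isBigO_sub (f := Function.uncurry b) hk_even hbc_meas
    hbc_bdd hε₀ hb_approx
  have hc₀P : ∀ x, c₀ ≤ P.coeff 0 x := fun x => hP₀ x ▸ hb0 x
  have hF := hasEvenPoleExpansion_sum_mul_zpowIntegral hk_even hv_meas hv_bdd hP hc₀ hc₀P
  set F := ∑ j ∈ Finset.range (k + 1), if Even j then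
    fun q => v j q.1 * zpowIntegral ((j : ℤ) - k) q.2 (Function.uncurry b q) else 0
  have hF_apply : ∀ x ε, F (x, ε) = ∑ j ∈ Finset.range (k + 1),
      if Even j then v j x * zpowIntegral ((j : ℤ) - k) ε (b x ε) else 0 := fun x ε => by
    simp only [F, Finset.sum_apply]
    exact Finset.sum_congr rfl fun j _ => by split_ifs <;> rfl
  have hF_meas : ∀ ε, Measurable fun x => F (x, ε) := fun ε => by
    simp_rw [hF_apply]
    refine Finset.measurable_sum _ fun j hj => ?_
    split_ifs with hje
    · exact (hv_meas j hje (Nat.lt_succ_iff.1 (Finset.mem_range.1 hj))).mul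
        ((measurable_zpowIntegral _ _).comp (hb_meas.comp measurable_prodMk_right))
    · exact measurable_const
  obtain ⟨a, c, h⟩ := hF.exists_tendsto_integral_sub ν (.of_forall hF_meas)
  refine ⟨a, c, h.congr' ?_⟩
  filter_upwards [eventually_nhdsGTZeroUnif.1 (eventually_half_le hP (by omega) hc₀ hc₀P),
    self_mem_nhdsWithin] with ε hb hε
  congr 1
  exact integral_congr_ae (ae_of_all _ fun x => (hF_apply x ε).trans
    (integral_sum_ite_even_zpow k (v · x) hε ((half_pos hc₀).trans_le (hb x))).symm)

/-- Graham–Witten, Proposition 2 (case `k` even): the difference of regularized areas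
computed with two special defining functions has only even negative powers of `ε`, no
`log(1/ε)` term, and a finite constant term as `ε → 0⁺`. -/
theorem stmt_1
    {N : Type*} [MeasurableSpace N] (ν : Measure N) [IsFiniteMeasure ν]
    (k : ℕ) (hk_even : Even k)
    (v : ℕ → N → ℝ)
    (hv_meas : ∀ j, Even j → j ≤ k → Measurable (v j))
    (hv_bdd : ∀ j, Even j → j ≤ k → ∃ M : ℝ, ∀ x, |v j x| ≤ M)
    (ε₀ C c₀ : ℝ) (hε₀ : 0 < ε₀) (hC : 0 < C) (hc₀ : 0 < c₀)
    (bc : ℕ → N → ℝ)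
    (hbc_meas : ∀ i, Even i → i ≤ k + 1 → Measurable (bc i))
    (hbc_bdd : ∀ i, Even i → i ≤ k + 1 → ∃ M : ℝ, ∀ x, |bc i x| ≤ M)
    (hb0 : ∀ x, c₀ ≤ bc 0 x)
    (b : N → ℝ → ℝ)
    (hb_meas : Measurable (Function.uncurry b))
    (hb_pos : ∀ x, ∀ ε ∈ Ioo (0 : ℝ) ε₀, 0 < b x ε)
    (hb_approx : ∀ x, ∀ ε ∈ Ioo (0 : ℝ) ε₀,
      |b x ε - ∑ i ∈ Finset.range (k + 2), (if Even i then bc i x * ε ^ i else 0)|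
        ≤ C * ε ^ (k + 2)) :
    ∃ (a : ℕ → ℝ) (c : ℝ),
      Tendsto (fun ε : ℝ =>
          (∫ x, (∫ r in ε..(ε * b x ε),
              ∑ j ∈ Finset.range (k + 1),
                (if Even j then v j x * r ^ ((j : ℤ) - (k : ℤ) - 1) else 0)) ∂ν)
          - ∑ m ∈ Finset.range (k + 1),
              (if Even m ∧ 2 ≤ m then a m * ε ^ (-(m : ℤ)) else 0))
        (nhdsWithin 0 (Ioi 0)) (nhds c) :=
  stmt_1_general ν k hk_even v hv_meas hv_bdd ε₀ C c₀ hε₀ hc₀ bc hbc_meas hbc_bdd hb0 b hb_meas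
    hb_approx
end

section
/- Let (N, ν) be a measure space with ν a finite measure and let Υ, A, Q : N → ℝ be bounded measurable functions. Let ε₀ > 0, C > 0, and let b : N × (0, ε₀) → (0, ∞) be measurable satisfying |b(x,ε) − exp( −Υ(x) − (1/4) e^{−2Υ(x)} A(x) ε² )| ≤ C ε³ for all x ∈ N and 0 < ε < ε₀. Then lim_{ε→0⁺} [ ∫_N ( −(1/2) ε^{−2} b(x,ε)^{−2} − (1/8) Q(x) · log b(x,ε) ) dν(x) + (1/2) ε^{−2} ∫_N e^{2Υ(x)} dν(x) ] = (1/8) ∫_N ( Q(x) Υ(x) − 2 A(x) ) dν(x). -/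
/-!
Writing `Ω = -log b`, the hypothesis says `Ω = Υ + (1/4) e^{-2Υ} A ε² + O(ε³)` uniformly on `N`.
Then `b⁻² = e^{2Ω} = e^{2Υ} + (1/2) A ε² + O(ε³)`, so the `ε⁻²` divergences cancel and the
integrand converges uniformly, at rate `O(ε)`, to `(1/8)(QΥ - 2A)`: the `ε⁻² b⁻²` term contributes
`-(1/4) A` and the logarithmic term `(1/8) Q Υ`. Uniformity is expressed by working along the filter
`𝓝[>] 0 ×ˢ ⊤` on `ℝ × N`, and on a finite measure uniform convergence passes to the integrals.
-/

open MeasureTheory Filter Set Asymptotics Topology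

section UniformLimit

variable {ι α E : Type*} [NormedAddCommGroup E] {l : Filter ι} {F : ι → α → E} {f : α → E}

theorem tendstoUniformly_of_isBigO {r : ι → ℝ} (hr : Tendsto r l (𝓝 0))
    (h : (fun p : ι × α => F p.1 p.2 - f p.2) =O[l ×ˢ ⊤] fun p => r p.1) :
    TendstoUniformly F f l := by
  have hlim := h.trans_tendsto (hr.comp tendsto_fst)
  refine Metric.tendstoUniformly_iff.mpr fun δ hδ => ?_
  have hclose := hlim.eventually (Metric.ball_mem_nhds 0 hδ)
  rw [← principal_univ, eventually_prod_principal_iff] at hclose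
  filter_upwards [hclose] with i hi x
  rw [dist_comm, dist_eq_norm_sub]
  simpa using hi x (mem_univ x)

theorem TendstoUniformly.eventually_norm_le_norm_add_one (h : TendstoUniformly F f l) :
    ∀ᶠ i in l, ∀ x, ‖F i x‖ ≤ ‖f x‖ + 1 := by
  filter_upwards [Metric.tendstoUniformly_iff.mp h 1 one_pos] with i hi x
  exact norm_le_norm_add_const_of_dist_le (dist_comm (f x) _ ▸ (hi x).le)

variable [MeasurableSpace α] {μ : Measure α} [IsFiniteMeasure μ]

theorem TendstoUniformly.eventually_integrable (h : TendstoUniformly F f l) (hf : Integrable f μ)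
    (hF : ∀ᶠ i in l, AEStronglyMeasurable (F i) μ) : ∀ᶠ i in l, Integrable (F i) μ := by
  filter_upwards [hF, h.eventually_norm_le_norm_add_one] with i hFi hi
  exact (hf.norm.add (integrable_const 1)).mono' hFi (ae_of_all _ hi)

theorem TendstoUniformly.tendsto_integral [NormedSpace ℝ E] [l.IsCountablyGenerated]
    (h : TendstoUniformly F f l) (hf : Integrable f μ)
    (hF : ∀ᶠ i in l, AEStronglyMeasurable (F i) μ) :
    Tendsto (fun i => ∫ x, F i x ∂μ) l (𝓝 (∫ x, f x ∂μ)) :=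
  tendsto_integral_filter_of_dominated_convergence _ hF
    (h.eventually_norm_le_norm_add_one.mono fun _ hi => ae_of_all _ hi)
    (hf.norm.add (integrable_const 1)) (ae_of_all _ h.tendsto_at)

end UniformLimit

theorem Real.zpow_eq_exp_mul_log {β : ℝ} (hβ : 0 < β) (n : ℤ) :
    β ^ n = Real.exp (n * Real.log β) := by
  rw [← Real.rpow_intCast, Real.rpow_def_of_pos hβ, mul_comm]

section Asymptotics

variable {α : Type*} {l : Filter α}

theorem isBigO_exp_comp_one_of_isBigO_one {f : α → ℝ} (hf : f =O[l] fun _ => (1 : ℝ)) :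
    (fun x => Real.exp (f x)) =O[l] fun _ => (1 : ℝ) :=
  Real.isBigO_exp_comp_one.mpr <|
    (isBigO_one_iff ℝ).mp hf |>.mono_le (Eventually.of_forall fun x => le_abs_self (f x))

theorem isBigO_exp_sub_one_sub {δ : α → ℝ} (hδ : Tendsto δ l (𝓝 0)) :
    (fun x => Real.exp (δ x) - 1 - δ x) =O[l] fun x => δ x ^ 2 := by
  refine IsBigO.of_bound 1 ?_
  filter_upwards [hδ (Metric.closedBall_mem_nhds 0 one_pos)] with x hx
  rw [one_mul, Real.norm_eq_abs, Real.norm_eq_abs, abs_of_nonneg (sq_nonneg (δ x))]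
  exact Real.abs_exp_sub_one_sub_id_le (by simpa using hx)

theorem isBigO_log_add_of_isBigO_sub_exp_neg {β u g : α → ℝ} (hβ : ∀ᶠ x in l, 0 < β x)
    (hu : (fun x => Real.exp (u x)) =O[l] fun _ => (1 : ℝ)) (hg : Tendsto g l (𝓝 0))
    (h : (fun x => β x - Real.exp (-u x)) =O[l] g) :
    (fun x => Real.log (β x) + u x) =O[l] g := by
  have hratio : (fun x => β x * Real.exp (u x) - 1) =O[l] g := by
    refine (h.mul hu).congr (fun x => ?_) (fun x => mul_one _)
    rw [sub_mul, ← Real.exp_add, neg_add_cancel, Real.exp_zero]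
  have hlim : Tendsto (fun x => β x * Real.exp (u x)) l (𝓝 1) := by
    simpa using (hratio.trans_tendsto hg).add_const 1
  refine (((Real.hasDerivAt_log one_ne_zero).isBigO_sub.comp_tendsto hlim).trans hratio).congr'
    ?_ EventuallyEq.rfl
  filter_upwards [hβ] with x hx
  simp [Real.log_mul hx.ne' (Real.exp_pos _).ne']

variable {ε υ a : α → ℝ}

theorem isBigO_pow_of_tendsto_zero (hε : Tendsto ε l (𝓝 0)) {m n : ℕ} (h : m < n) :
    (fun x => ε x ^ n) =O[l] fun x => ε x ^ m :=
  (isLittleO_pow_pow h).isBigO.comp_tendsto hε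

theorem isBigO_expansion_coeff (hυ : υ =O[l] fun _ => (1 : ℝ)) (ha : a =O[l] fun _ => (1 : ℝ)) :
    (fun x => (1 / 4) * Real.exp (-2 * υ x) * a x * ε x ^ 2) =O[l] fun x => ε x ^ 2 :=
  ((((isBigO_exp_comp_one_of_isBigO_one (hυ.const_mul_left (-2))).const_mul_left (1 / 4)).mul
    ha).mul (isBigO_refl _ l)).congr_right fun x => by ring

theorem isBigO_neg_log_sub_expansion (hε : Tendsto ε l (𝓝 0)) (hυ : υ =O[l] fun _ => (1 : ℝ))
    (ha : a =O[l] fun _ => (1 : ℝ)) {β : α → ℝ} (hβ : ∀ᶠ x in l, 0 < β x)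
    (hβε : (fun x => β x - Real.exp (-υ x - (1 / 4) * Real.exp (-2 * υ x) * a x * ε x ^ 2))
      =O[l] fun x => ε x ^ 3) :
    (fun x => -Real.log (β x) - (υ x + (1 / 4) * Real.exp (-2 * υ x) * a x * ε x ^ 2))
      =O[l] fun x => ε x ^ 3 := by
  have hu := hυ.add ((isBigO_expansion_coeff hυ ha).trans ((hε.pow 2).isBigO_one ℝ))
  refine (isBigO_log_add_of_isBigO_sub_exp_neg hβ (isBigO_exp_comp_one_of_isBigO_one hu)
    (by simpa using hε.pow 3) (hβε.congr_left fun x => by rw [neg_add'])).neg_left.congr_left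
    fun x => by ring

theorem isBigO_sub_of_expansion (hε : Tendsto ε l (𝓝 0)) (hυ : υ =O[l] fun _ => (1 : ℝ))
    (ha : a =O[l] fun _ => (1 : ℝ)) {Ω : α → ℝ}
    (hΩ : (fun x => Ω x - (υ x + (1 / 4) * Real.exp (-2 * υ x) * a x * ε x ^ 2))
      =O[l] fun x => ε x ^ 3) :
    (fun x => Ω x - υ x) =O[l] fun x => ε x ^ 2 :=
  ((isBigO_expansion_coeff hυ ha).add
    (hΩ.trans (isBigO_pow_of_tendsto_zero hε (by norm_num)))).congr_left fun x => by ring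

theorem isBigO_exp_two_mul_sub_expansion (hε : Tendsto ε l (𝓝 0))
    (hυ : υ =O[l] fun _ => (1 : ℝ)) (ha : a =O[l] fun _ => (1 : ℝ)) {Ω : α → ℝ}
    (hΩ : (fun x => Ω x - (υ x + (1 / 4) * Real.exp (-2 * υ x) * a x * ε x ^ 2))
      =O[l] fun x => ε x ^ 3) :
    (fun x => Real.exp (2 * Ω x) - Real.exp (2 * υ x) - (1 / 2) * a x * ε x ^ 2)
      =O[l] fun x => ε x ^ 3 := by
  have hδ := isBigO_sub_of_expansion hε hυ ha hΩ
  have hexp : (fun x => Real.exp (2 * (Ω x - υ x)) - 1 - 2 * (Ω x - υ x))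
      =O[l] fun x => ε x ^ 3 := by
    have hδ0 : Tendsto (fun x => 2 * (Ω x - υ x)) l (𝓝 0) := by
      simpa using (hδ.trans_tendsto (by simpa using hε.pow 2)).const_mul 2
    refine (isBigO_exp_sub_one_sub hδ0).trans ?_
    exact (((hδ.mul hδ).const_mul_left 4).trans ((isBigO_pow_of_tendsto_zero hε
      (by norm_num : 3 < 4)).congr_left fun x => by ring)).congr_left fun x => by ring
  have hE := isBigO_exp_comp_one_of_isBigO_one (hυ.const_mul_left 2)
  refine ((hE.mul hexp).add ((hE.mul hΩ).const_mul_left 2)).congr (fun x => ?_) fun x => one_mul _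
  have hΩexp : Real.exp (2 * υ x) * Real.exp (2 * (Ω x - υ x)) = Real.exp (2 * Ω x) := by
    rw [← Real.exp_add]; ring_nf
  have hEinv : Real.exp (2 * υ x) * Real.exp (-2 * υ x) = 1 := by
    rw [← Real.exp_add]; ring_nf; exact Real.exp_zero
  linear_combination hΩexp - (1 / 2) * a x * ε x ^ 2 * hEinv

theorem isBigO_anomaly_integrand_sub {q β : α → ℝ} (hε : Tendsto ε l (𝓝[≠] 0))
    (hυ : υ =O[l] fun _ => (1 : ℝ)) (ha : a =O[l] fun _ => (1 : ℝ))
    (hq : q =O[l] fun _ => (1 : ℝ)) (hβ : ∀ᶠ x in l, 0 < β x)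
    (hβε : (fun x => β x - Real.exp (-υ x - (1 / 4) * Real.exp (-2 * υ x) * a x * ε x ^ 2))
      =O[l] fun x => ε x ^ 3) :
    (fun x => (-(1 / 2) * ε x ^ (-2 : ℤ) * β x ^ (-2 : ℤ) - (1 / 8) * q x * Real.log (β x)
        + (1 / 2) * ε x ^ (-2 : ℤ) * Real.exp (2 * υ x)) - (1 / 8) * (q x * υ x - 2 * a x))
      =O[l] ε := by
  have hε0 : Tendsto ε l (𝓝 0) := hε.mono_right nhdsWithin_le_nhds
  have hΩ := isBigO_neg_log_sub_expansion hε0 hυ ha hβ hβε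
  have hsingular : (fun x => ε x ^ (-2 : ℤ) * (Real.exp (2 * -Real.log (β x))
      - Real.exp (2 * υ x) - (1 / 2) * a x * ε x ^ 2)) =O[l] ε :=
    ((isBigO_refl _ l).mul (isBigO_exp_two_mul_sub_expansion hε0 hυ ha hΩ)).congr_right fun x => by
      rcases eq_or_ne (ε x) 0 with h | h
      · simp [h]
      · rw [zpow_neg, zpow_ofNat]
        field_simp
  have hlog : (fun x => q x * (-Real.log (β x) - υ x)) =O[l] ε :=
    ((hq.mul (isBigO_sub_of_expansion hε0 hυ ha hΩ)).congr_right (fun x => one_mul _)).trans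
      ((isBigO_pow_of_tendsto_zero hε0 one_lt_two).congr_right fun x => pow_one _)
  refine ((hsingular.const_mul_left (-(1 / 2))).add (hlog.const_mul_left (1 / 8))).congr' ?_
    EventuallyEq.rfl
  filter_upwards [hβ, hε.eventually self_mem_nhdsWithin] with x hβx hεx
  have hβexp : β x ^ (-2 : ℤ) = Real.exp (2 * -Real.log (β x)) := by
    rw [Real.zpow_eq_exp_mul_log hβx]
    push_cast
    ring_nf
  have hεinv : ε x ^ (-2 : ℤ) * ε x ^ 2 = 1 := by
    rw [zpow_neg, zpow_ofNat, inv_mul_cancel₀ (pow_ne_zero 2 hεx)]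
  linear_combination (1 / 2) * ε x ^ (-2 : ℤ) * hβexp + (1 / 4) * a x * hεinv

end Asymptotics

theorem tendstoUniformly_anomaly_integrand {N : Type*} {Υ A Q : N → ℝ}
    (hΥ : ∃ M : ℝ, ∀ x, |Υ x| ≤ M) (hA : ∃ M : ℝ, ∀ x, |A x| ≤ M) (hQ : ∃ M : ℝ, ∀ x, |Q x| ≤ M)
    {ε₀ C : ℝ} (hε₀ : 0 < ε₀) {b : N → ℝ → ℝ} (hb_pos : ∀ x, ∀ ε ∈ Ioo (0 : ℝ) ε₀, 0 < b x ε)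
    (hb_approx : ∀ x, ∀ ε ∈ Ioo (0 : ℝ) ε₀,
      |b x ε - Real.exp (-Υ x - (1 / 4) * Real.exp (-2 * Υ x) * A x * ε ^ 2)| ≤ C * ε ^ 3) :
    TendstoUniformly (fun ε x => -(1 / 2) * ε ^ (-2 : ℤ) * (b x ε) ^ (-2 : ℤ)
        - (1 / 8) * Q x * Real.log (b x ε) + (1 / 2) * ε ^ (-2 : ℤ) * Real.exp (2 * Υ x))
      (fun x => (1 / 8) * (Q x * Υ x - 2 * A x)) (𝓝[>] 0) := by
  have hbdd : ∀ f : N → ℝ, (∃ M : ℝ, ∀ x, |f x| ≤ M) →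
      (fun p : ℝ × N => f p.2) =O[𝓝[>] 0 ×ˢ ⊤] fun _ => (1 : ℝ) := fun f ⟨M, hM⟩ =>
    IsBigO.of_bound M (.of_forall fun p => by simpa using hM p.2)
  have hsmall : ∀ᶠ p : ℝ × N in 𝓝[>] 0 ×ˢ ⊤, p.1 ∈ Ioo 0 ε₀ :=
    Eventually.prod_inl (Ioo_mem_nhdsGT hε₀) _
  refine tendstoUniformly_of_isBigO nhdsWithin_le_nhds
    (isBigO_anomaly_integrand_sub ?_ (hbdd Υ hΥ) (hbdd A hA) (hbdd Q hQ) ?_ ?_)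
  · exact tendsto_fst.mono_right (nhdsWithin_mono 0 fun _ h => ne_of_gt h)
  · filter_upwards [hsmall] with p hp using hb_pos p.2 p.1 hp
  · refine IsBigO.of_bound C ?_
    filter_upwards [hsmall] with p hp
    simpa [abs_of_pos hp.1] using hb_approx p.2 p.1 hp

theorem stmt_2_general
    {N : Type*} [MeasurableSpace N] (ν : Measure N) [IsFiniteMeasure ν]
    (Υ A Q : N → ℝ)
    (hΥ_meas : Measurable Υ) (hA_meas : Measurable A) (hQ_meas : Measurable Q)
    (hΥ_bdd : ∃ M : ℝ, ∀ x, |Υ x| ≤ M)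
    (hA_bdd : ∃ M : ℝ, ∀ x, |A x| ≤ M)
    (hQ_bdd : ∃ M : ℝ, ∀ x, |Q x| ≤ M)
    (ε₀ C : ℝ) (hε₀ : 0 < ε₀)
    (b : N → ℝ → ℝ)
    (hb_meas : Measurable (Function.uncurry b))
    (hb_pos : ∀ x, ∀ ε ∈ Ioo (0 : ℝ) ε₀, 0 < b x ε)
    (hb_approx : ∀ x, ∀ ε ∈ Ioo (0 : ℝ) ε₀,
      |b x ε - Real.exp (-Υ x - (1 / 4) * Real.exp (-2 * Υ x) * A x * ε ^ 2)|
        ≤ C * ε ^ 3) :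
    Tendsto (fun ε : ℝ =>
        (∫ x, (-(1 / 2) * ε ^ (-2 : ℤ) * (b x ε) ^ (-2 : ℤ)
            - (1 / 8) * Q x * Real.log (b x ε)) ∂ν)
        + (1 / 2) * ε ^ (-2 : ℤ) * ∫ x, Real.exp (2 * Υ x) ∂ν)
      (nhdsWithin 0 (Ioi 0))
      (nhds ((1 / 8) * ∫ x, (Q x * Υ x - 2 * A x) ∂ν)) := by
  have hunif := tendstoUniformly_anomaly_integrand hΥ_bdd hA_bdd hQ_bdd hε₀ hb_pos hb_approx
  have hF_meas : ∀ ε : ℝ, AEStronglyMeasurable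
      (fun x => -(1 / 2) * ε ^ (-2 : ℤ) * (b x ε) ^ (-2 : ℤ) - (1 / 8) * Q x * Real.log (b x ε)
        + (1 / 2) * ε ^ (-2 : ℤ) * Real.exp (2 * Υ x)) ν := fun ε => by
    have hbε := hb_meas.of_uncurry_right (y := ε)
    fun_prop
  obtain ⟨MΥ, hMΥ⟩ := hΥ_bdd
  obtain ⟨MA, hMA⟩ := hA_bdd
  obtain ⟨MQ, hMQ⟩ := hQ_bdd
  have hΥ_int : Integrable Υ ν := .of_bound hΥ_meas.aestronglyMeasurable MΥ (ae_of_all _ hMΥ)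
  have hA_int : Integrable A ν := .of_bound hA_meas.aestronglyMeasurable MA (ae_of_all _ hMA)
  have hlim_int : Integrable (fun x => (1 / 8) * (Q x * Υ x - 2 * A x)) ν :=
    ((hΥ_int.bdd_mul hQ_meas.aestronglyMeasurable (ae_of_all _ hMQ)).sub
      (hA_int.const_mul 2)).const_mul _
  have hexp_int : Integrable (fun x => Real.exp (2 * Υ x)) ν :=
    .of_bound (by fun_prop) (Real.exp (2 * MΥ)) (ae_of_all _ fun x => by
      simpa using mul_le_mul_of_nonneg_left (abs_le.mp (hMΥ x)).2 zero_le_two)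
  rw [← integral_const_mul (1 / 8 : ℝ)]
  refine (hunif.tendsto_integral hlim_int (.of_forall hF_meas)).congr' ?_
  filter_upwards [hunif.eventually_integrable hlim_int (.of_forall hF_meas)] with ε hε
  have hfirst := (hε.sub (hexp_int.const_mul ((1 / 2) * ε ^ (-2 : ℤ)))).congr
    (ae_of_all _ fun x => add_sub_cancel_right _ _)
  rw [← integral_const_mul, ← integral_add hfirst (hexp_int.const_mul _)]

/-- Graham–Witten, Proposition 3 (analytic core): the conformal anomaly of the renormalized
area of a two-dimensional minimal submanifold.  Here `b = e^{-Ω}` with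
`Ω = Υ + (1/4)e^{-2Υ} A ε² + O(ε³)` and `Q = |H|² + 4 g^{αβ}P_{αβ}`. -/
theorem stmt_2
    {N : Type*} [MeasurableSpace N] (ν : Measure N) [IsFiniteMeasure ν]
    (Υ A Q : N → ℝ)
    (hΥ_meas : Measurable Υ) (hA_meas : Measurable A) (hQ_meas : Measurable Q)
    (hΥ_bdd : ∃ M : ℝ, ∀ x, |Υ x| ≤ M)
    (hA_bdd : ∃ M : ℝ, ∀ x, |A x| ≤ M)
    (hQ_bdd : ∃ M : ℝ, ∀ x, |Q x| ≤ M)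
    (ε₀ C : ℝ) (hε₀ : 0 < ε₀) (hC : 0 < C)
    (b : N → ℝ → ℝ)
    (hb_meas : Measurable (Function.uncurry b))
    (hb_pos : ∀ x, ∀ ε ∈ Ioo (0 : ℝ) ε₀, 0 < b x ε)
    (hb_approx : ∀ x, ∀ ε ∈ Ioo (0 : ℝ) ε₀,
      |b x ε - Real.exp (-Υ x - (1 / 4) * Real.exp (-2 * Υ x) * A x * ε ^ 2)|
        ≤ C * ε ^ 3) :
    Tendsto (fun ε : ℝ =>
        (∫ x, (-(1 / 2) * ε ^ (-2 : ℤ) * (b x ε) ^ (-2 : ℤ)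
            - (1 / 8) * Q x * Real.log (b x ε)) ∂ν)
        + (1 / 2) * ε ^ (-2 : ℤ) * ∫ x, Real.exp (2 * Υ x) ∂ν)
      (nhdsWithin 0 (Ioi 0))
      (nhds ((1 / 8) * ∫ x, (Q x * Υ x - 2 * A x) ∂ν)) :=
  stmt_2_general ν Υ A Q hΥ_meas hA_meas hQ_meas hΥ_bdd hA_bdd hQ_bdd ε₀ C hε₀ b hb_meas hb_pos
    hb_approx
end

section
/- Let k be an even nonnegative integer, (N, ν) a measure space with ν a finite measure, r₀ > 0, δ ∈ (0, 1], and C > 0. For each even j with 0 ≤ j ≤ k let v_j : N → ℝ be a bounded measurable function, and let f : N × (0, r₀] → ℝ be measurable with |f(x,r) − Σ_{j even, 0 ≤ j ≤ k} v_j(x) r^{j−k−1}| ≤ C r^{δ−1} for all (x,r). Then there exists c ∈ ℝ such that ∫_N ( ∫_ε^{r₀} f(x,r) dr ) dν(x) − Σ_{j even, 0 ≤ j ≤ k−2} ( (∫_N v_j dν) / (k−j) ) ε^{j−k} − ( ∫_N v_k dν ) · log(1/ε) → c as ε → 0⁺. In particular the coefficient of log(1/ε) in the expansion is d = ∫_N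 v_k dν. -/
open MeasureTheory Filter Set Topology
open scoped Interval

/-!
Subtracting the polar part `r^{-k-1} (v₀ + v₂ r² + ⋯ + v_k r^k)` from `f` leaves a remainder `g`
with `|g| ≤ C r^{δ-1}`, which is integrable up to `r = 0`. The polar part integrates in closed
form: `r^{j-k-1}` gives `ε^{j-k} / (k-j)` for `j < k`, and the exponent `-1`, reached only at
`j = k` because `k` is even, gives `log (1/ε)`. What is left, `∫_N ∫_ε^{r₀} g`, converges as
`ε → 0⁺` by dominated convergence with the uniform bound `C r₀^δ / δ`.
-/

section PolarPart

variable (k : ℕ) (a : ℕ → ℝ)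

noncomputable def polarPart (r : ℝ) : ℝ :=
  ∑ j ∈ Finset.range (k + 1), if Even j then a j * r ^ ((j : ℤ) - (k : ℤ) - 1) else 0

noncomputable def divergentPart (ε : ℝ) : ℝ :=
  ∑ j ∈ Finset.range (k - 1),
      (if Even j then (a j / ((k : ℝ) - (j : ℝ))) * ε ^ ((j : ℤ) - (k : ℤ)) else 0)
    + a k * Real.log (1 / ε)

variable {k}

lemma filter_even_range_succ_of_even (hk : Even k) :
    {j ∈ Finset.range (k + 1) | Even j} = insert k {j ∈ Finset.range (k - 1) | Even j} := by
  ext j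
  simp only [Finset.mem_filter, Finset.mem_insert, Finset.mem_range]
  obtain ⟨m, rfl⟩ := hk
  constructor
  · rintro ⟨hj, l, rfl⟩
    rcases eq_or_ne l m with rfl | hlm
    · exact .inl rfl
    · exact .inr ⟨by omega, l, rfl⟩
  · rintro (rfl | ⟨hj, hje⟩)
    · exact ⟨by omega, m, rfl⟩
    · exact ⟨by omega, hje⟩

lemma polarPart_eq_of_even (hk : Even k) (r : ℝ) :
    polarPart k a r =
      ∑ j ∈ insert k {j ∈ Finset.range (k - 1) | Even j}, a j * r ^ ((j : ℤ) - (k : ℤ) - 1) := by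
  rw [polarPart, ← Finset.sum_filter, filter_even_range_succ_of_even hk]

lemma divergentPart_eq (ε : ℝ) :
    divergentPart k a ε =
      ∑ j ∈ Finset.range (k - 1) with Even j,
        a j / ((k : ℝ) - (j : ℝ)) * ε ^ ((j : ℤ) - (k : ℤ)) + a k * Real.log (1 / ε) := by
  rw [divergentPart, Finset.sum_filter]

variable {ε b : ℝ}

lemma intervalIntegrable_polarPart (h0 : (0 : ℝ) ∉ [[ε, b]]) :
    IntervalIntegrable (polarPart k a) volume ε b := by
  have h := IntervalIntegrable.sum (μ := volume) (a := ε) (b := b) (Finset.range (k + 1))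
    (f := fun j r => if Even j then a j * r ^ ((j : ℤ) - (k : ℤ) - 1) else 0) fun j _ => by
      split_ifs
      · exact (intervalIntegral.intervalIntegrable_zpow (Or.inr h0)).const_mul _
      · exact intervalIntegrable_const
  rw [Finset.sum_fn] at h
  exact h

theorem integral_polarPart (hk : Even k) (hε : 0 < ε) (hb : 0 < b) :
    ∫ r in ε..b, polarPart k a r = divergentPart k a ε - divergentPart k a b := by
  have h0 : (0 : ℝ) ∉ [[ε, b]] := notMem_uIcc_of_lt hε hb
  have hterm : ∀ j ∈ {j ∈ Finset.range (k - 1) | Even j},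
      a j * ∫ r in ε..b, r ^ ((j : ℤ) - (k : ℤ) - 1) =
        a j / ((k : ℝ) - (j : ℝ)) * ε ^ ((j : ℤ) - (k : ℤ))
          - a j / ((k : ℝ) - (j : ℝ)) * b ^ ((j : ℤ) - (k : ℤ)) := by
    intro j hj
    have hjk : j + 1 < k := by
      simp only [Finset.mem_filter, Finset.mem_range] at hj
      omega
    have hkj_sub : (k : ℝ) - (j : ℝ) ≠ 0 := sub_ne_zero.mpr (by exact_mod_cast (by omega : k ≠ j))
    have hjk_sub : (j : ℝ) - (k : ℝ) ≠ 0 := sub_ne_zero.mpr (by exact_mod_cast (by omega : j ≠ k))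
    rw [integral_zpow (Or.inr ⟨by omega, h0⟩), sub_add_cancel]
    push_cast
    rw [sub_add_cancel]
    field_simp
    ring
  simp_rw [polarPart_eq_of_even a hk]
  rw [intervalIntegral.integral_finsetSum fun j _ =>
      (intervalIntegral.intervalIntegrable_zpow (Or.inr h0)).const_mul _,
    Finset.sum_insert (by simp), divergentPart_eq, divergentPart_eq]
  simp only [intervalIntegral.integral_const_mul]
  rw [Finset.sum_congr rfl hterm, Finset.sum_sub_distrib, sub_self, zero_sub]
  simp_rw [zpow_neg_one]
  rw [integral_inv h0, Real.log_div hb.ne' hε.ne', one_div, one_div, Real.log_inv, Real.log_inv]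
  ring

end PolarPart

section Remainder

variable {φ : ℝ → ℝ} {a b C δ : ℝ}

lemma intervalIntegrable_of_abs_le_rpow (hφ : Measurable φ) (hδ : 0 < δ)
    (hab : a ≤ b) (hφC : ∀ r ∈ Ioc a b, |φ r| ≤ C * r ^ (δ - 1)) :
    IntervalIntegrable φ volume a b := by
  refine ((intervalIntegral.intervalIntegrable_rpow' (r := δ - 1) (by linarith)).const_mul C
    ).mono_fun' hφ.aestronglyMeasurable ?_
  rw [uIoc_of_le hab]
  filter_upwards [ae_restrict_mem measurableSet_Ioc] with r hr
  exact hφC r hr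

lemma norm_intervalIntegral_le_of_abs_le_rpow (hC : 0 ≤ C) (hδ : 0 < δ) (ha : 0 ≤ a)
    (hab : a ≤ b) (hφC : ∀ r ∈ Ioc a b, |φ r| ≤ C * r ^ (δ - 1)) :
    ‖∫ r in a..b, φ r‖ ≤ C * b ^ δ / δ :=
  calc ‖∫ r in a..b, φ r‖ ≤ ∫ r in a..b, C * r ^ (δ - 1) :=
        intervalIntegral.norm_integral_le_of_norm_le hab (ae_of_all _ hφC)
          ((intervalIntegral.intervalIntegrable_rpow' (r := δ - 1) (by linarith)).const_mul C)
    _ = C * (b ^ δ - a ^ δ) / δ := by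
        rw [intervalIntegral.integral_const_mul, integral_rpow (Or.inl (by linarith)),
          sub_add_cancel, mul_div_assoc]
    _ ≤ C * b ^ δ / δ := by
        gcongr
        exact sub_le_self _ (Real.rpow_nonneg ha δ)

variable {N : Type*} [MeasurableSpace N] {ν : Measure N} {g : N → ℝ → ℝ}

lemma stronglyMeasurable_intervalIntegral_of_uncurry (hg : Measurable (Function.uncurry g))
    (hab : a ≤ b) : StronglyMeasurable fun x => ∫ r in a..b, g x r := by
  simp_rw [intervalIntegral.integral_of_le hab]
  exact hg.stronglyMeasurable.integral_prod_right'

variable [IsFiniteMeasure ν]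

lemma integrable_intervalIntegral_of_abs_le_rpow (hg : Measurable (Function.uncurry g))
    (hC : 0 ≤ C) (hδ : 0 < δ) (ha : 0 ≤ a) (hab : a ≤ b)
    (hgC : ∀ x, ∀ r ∈ Ioc a b, |g x r| ≤ C * r ^ (δ - 1)) :
    Integrable (fun x => ∫ r in a..b, g x r) ν :=
  .of_bound (stronglyMeasurable_intervalIntegral_of_uncurry hg hab).aestronglyMeasurable _
    (ae_of_all _ fun x => norm_intervalIntegral_le_of_abs_le_rpow hC hδ ha hab (hgC x))

lemma tendsto_integral_intervalIntegral_of_abs_le_rpow (hg : Measurable (Function.uncurry g))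
    (hC : 0 ≤ C) (hδ : 0 < δ) (hb : 0 < b)
    (hgC : ∀ x, ∀ r ∈ Ioc 0 b, |g x r| ≤ C * r ^ (δ - 1)) :
    Tendsto (fun ε => ∫ x, (∫ r in ε..b, g x r) ∂ν) (𝓝[>] 0)
      (𝓝 (∫ x, (∫ r in (0 : ℝ)..b, g x r) ∂ν)) := by
  have hsmall : ∀ᶠ ε in 𝓝[>] (0 : ℝ), ε ∈ Ioc 0 b := Ioc_mem_nhdsGT hb
  refine tendsto_integral_filter_of_dominated_convergence (fun _ => C * b ^ δ / δ) ?_ ?_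
    (integrable_const _) (ae_of_all _ fun x => ?_)
  · filter_upwards [hsmall] with ε hε
    exact (stronglyMeasurable_intervalIntegral_of_uncurry hg hε.2).aestronglyMeasurable
  · filter_upwards [hsmall] with ε hε
    exact ae_of_all _ fun x => norm_intervalIntegral_le_of_abs_le_rpow hC hδ hε.1.le hε.2
      fun r hr => hgC x r ⟨hε.1.trans hr.1, hr.2⟩
  · have hint : IntegrableOn (g x) (uIcc 0 b) := by
      rw [uIcc_of_le hb.le, integrableOn_Icc_iff_integrableOn_Ioc,
        ← intervalIntegrable_iff_integrableOn_Ioc_of_le hb.le]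
      exact intervalIntegrable_of_abs_le_rpow hg.of_uncurry_left hδ hb.le (hgC x)
    have hcont := intervalIntegral.continuousOn_primitive_interval_left hint
    rw [uIcc_of_le hb.le] at hcont
    exact ((hcont 0 ⟨le_rfl, hb.le⟩).mono Ioc_subset_Icc_self).tendsto.mono_left
      (nhdsWithin_Ioc_eq_nhdsGT hb).ge

end Remainder
section Integration

variable {N : Type*} [MeasurableSpace N] {ν : Measure N} {k : ℕ} {v : ℕ → N → ℝ}

lemma measurable_polarPart (hv : ∀ j, Even j → j ≤ k → Measurable (v j)) :
    Measurable fun p : N × ℝ => polarPart k (fun j => v j p.1) p.2 := by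
  unfold polarPart
  refine Finset.measurable_sum _ fun j hj => ?_
  split_ifs with hj_even
  · have := hv j hj_even (Nat.lt_succ_iff.mp (Finset.mem_range.mp hj))
    fun_prop
  · exact measurable_const

lemma integrable_divergentPart_term (hv : ∀ j, Even j → j ≤ k → Integrable (v j) ν) (ε : ℝ)
    {j : ℕ} (hj : j ∈ {j ∈ Finset.range (k - 1) | Even j}) :
    Integrable (fun x => v j x / ((k : ℝ) - (j : ℝ)) * ε ^ ((j : ℤ) - (k : ℤ))) ν := by
  obtain ⟨hj, hj_even⟩ := Finset.mem_filter.mp hj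
  exact ((hv j hj_even (by grind)).div_const _).mul_const _

lemma integrable_divergentPart (hk : Even k) (hv : ∀ j, Even j → j ≤ k → Integrable (v j) ν)
    (ε : ℝ) : Integrable (fun x => divergentPart k (fun j => v j x) ε) ν := by
  simp_rw [divergentPart_eq]
  exact .add (integrable_finsetSum _ fun j => integrable_divergentPart_term hv ε)
    ((hv k hk le_rfl).mul_const _)

lemma integral_divergentPart (hk : Even k) (hv : ∀ j, Even j → j ≤ k → Integrable (v j) ν)
    (ε : ℝ) :
    ∫ x, divergentPart k (fun j => v j x) ε ∂ν = divergentPart k (fun j => ∫ x, v j x ∂ν) ε := by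
  have hterm := fun j => integrable_divergentPart_term (ν := ν) hv ε (j := j)
  simp_rw [divergentPart_eq]
  rw [integral_add (integrable_finsetSum _ hterm) ((hv k hk le_rfl).mul_const _),
    integral_finsetSum _ hterm]
  simp only [integral_mul_const, integral_div]

theorem integral_intervalIntegral_eq_divergentPart_add (hk : Even k)
    (hv : ∀ j, Even j → j ≤ k → Integrable (v j) ν) {f : N → ℝ → ℝ} {ε b : ℝ}
    (hε : 0 < ε) (hb : 0 < b)
    (hg : ∀ x, IntervalIntegrable (fun r => f x r - polarPart k (fun j => v j x) r) volume ε b)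
    (hG : Integrable (fun x => ∫ r in ε..b, f x r - polarPart k (fun j => v j x) r) ν) :
    ∫ x, (∫ r in ε..b, f x r) ∂ν =
      divergentPart k (fun j => ∫ x, v j x ∂ν) ε - divergentPart k (fun j => ∫ x, v j x ∂ν) b
        + ∫ x, (∫ r in ε..b, f x r - polarPart k (fun j => v j x) r) ∂ν := by
  have h0 : (0 : ℝ) ∉ [[ε, b]] := notMem_uIcc_of_lt hε hb
  have hsplit : ∀ x, ∫ r in ε..b, f x r =
      divergentPart k (fun j => v j x) ε - divergentPart k (fun j => v j x) b
        + ∫ r in ε..b, f x r - polarPart k (fun j => v j x) r := by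
    intro x
    rw [← integral_polarPart _ hk hε hb, ← intervalIntegral.integral_add
      (intervalIntegrable_polarPart _ h0) (hg x)]
    simp only [add_sub_cancel]
  simp_rw [hsplit]
  have hε_int := integrable_divergentPart hk hv ε
  have hb_int := integrable_divergentPart hk hv b
  rw [integral_add (by exact hε_int.sub hb_int) hG, integral_sub hε_int hb_int,
    integral_divergentPart hk hv, integral_divergentPart hk hv]

end Integration

/-- Graham–Witten, equations (2.23)–(2.24) (case `k` even): the regularized area
`∫_N ∫_ε^{r₀} f dr dν` has an expansion
`c₀ε^{-k} + c₂ε^{-k+2} + ⋯ + c_{k-2}ε^{-2} + d·log(1/ε) + c_k + o(1)`,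
with log coefficient `d = ∫_N v_k dν`. -/
theorem stmt_4
    {N : Type*} [MeasurableSpace N] (ν : Measure N) [IsFiniteMeasure ν]
    (k : ℕ) (hk_even : Even k)
    (r₀ δ C : ℝ) (hr₀ : 0 < r₀) (hδ : δ ∈ Ioc (0 : ℝ) 1) (hC : 0 < C)
    (v : ℕ → N → ℝ)
    (hv_meas : ∀ j, Even j → j ≤ k → Measurable (v j))
    (hv_bdd : ∀ j, Even j → j ≤ k → ∃ M : ℝ, ∀ x, |v j x| ≤ M)
    (f : N → ℝ → ℝ)
    (hf_meas : Measurable (Function.uncurry f))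
    (hf : ∀ x, ∀ r ∈ Ioc (0 : ℝ) r₀,
      |f x r - ∑ j ∈ Finset.range (k + 1),
          (if Even j then v j x * r ^ ((j : ℤ) - (k : ℤ) - 1) else 0)|
        ≤ C * r ^ (δ - 1)) :
    ∃ c : ℝ,
      Tendsto (fun ε : ℝ =>
          (∫ x, (∫ r in ε..r₀, f x r) ∂ν)
          - ∑ j ∈ Finset.range (k - 1),
              (if Even j then ((∫ x, v j x ∂ν) / ((k : ℝ) - (j : ℝ))) * ε ^ ((j : ℤ) - (k : ℤ))
               else 0)
          - (∫ x, v k x ∂ν) * Real.log (1 / ε))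
        (nhdsWithin 0 (Ioi 0)) (nhds c) := by
  obtain ⟨hδ, -⟩ := hδ
  set g : N → ℝ → ℝ := fun x r => f x r - polarPart k (fun j => v j x) r
  have hg_meas : Measurable (Function.uncurry g) := hf_meas.sub (measurable_polarPart hv_meas)
  have hv_int : ∀ j, Even j → j ≤ k → Integrable (v j) ν := fun j hj hjk =>
    let ⟨M, hM⟩ := hv_bdd j hj hjk
    .of_bound (hv_meas j hj hjk).aestronglyMeasurable M (ae_of_all _ hM)
  refine ⟨-divergentPart k (fun j => ∫ x, v j x ∂ν) r₀ + ∫ x, (∫ r in (0 : ℝ)..r₀, g x r) ∂ν,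
    ((tendsto_integral_intervalIntegral_of_abs_le_rpow hg_meas hC.le hδ hr₀ hf).const_add _
      ).congr' ?_⟩
  filter_upwards [Ioc_mem_nhdsGT hr₀] with ε ⟨hε, hεr₀⟩
  have hgC : ∀ x, ∀ r ∈ Ioc ε r₀, |g x r| ≤ C * r ^ (δ - 1) :=
    fun x r hr => hf x r ⟨hε.trans hr.1, hr.2⟩
  rw [integral_intervalIntegral_eq_divergentPart_add hk_even hv_int hε hr₀
    (fun x => intervalIntegrable_of_abs_le_rpow hg_meas.of_uncurry_left hδ hεr₀ (hgC x))
    (integrable_intervalIntegral_of_abs_le_rpow hg_meas hC.le hδ hε.le hεr₀ hgC)]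
  simp only [divergentPart]
  ring
end

section
/- Let m ≥ 1, N ≥ 1, and δ > 0. Let G : ℝᵐ × (−δ, δ) → ℝ^{m×m} be a smooth map with G(x,r) symmetric for all (x,r), and suppose that ∂_r^q G(x,0) = 0 (the zero matrix) for every x ∈ ℝᵐ and every odd q with q ≤ N−1. Let ω : ℝᵐ × (−δ, δ) → ℝ be smooth and satisfy, for all x ∈ ℝᵐ and all r with 0 ≤ r < δ, the equation 2 ∂_r ω(x,r) + r · ( (∂_r ω(x,r))² + (∇_x ω(x,r))ᵀ G(x,r) ∇_x ω(x,r) ) = 0, where ∇_x ω is the gradient in the x-variables. Then ∂_r^q ω(x,0) = 0 for every x ∈ ℝᵐ and every odd q with q ≤ N+1. -/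
open Filter Set Matrix

open Topology

namespace GW6

/-! ### One-variable helpers -/

def Iop (δ : ℝ) : Set ℝ := {r : ℝ | |r| < δ}
lemma isOpen_Iop {δ : ℝ} : IsOpen (Iop δ) := isOpen_Iio.preimage continuous_abs
lemma zero_mem_Iop {δ : ℝ} (hδ : 0 < δ) : (0:ℝ) ∈ Iop δ := by simp [Iop, hδ]
lemma contDiffOn_deriv {f : ℝ → ℝ} {s : Set ℝ} (hs : IsOpen s) (hf : ContDiffOn ℝ (⊤ : ℕ∞) f s) :
    ContDiffOn ℝ (⊤ : ℕ∞) (deriv f) s := hf.deriv_of_isOpen hs (by simp)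
lemma contDiffOn_iteratedDeriv {f : ℝ → ℝ} {s : Set ℝ} (hs : IsOpen s)
    (hf : ContDiffOn ℝ (⊤ : ℕ∞) f s) (k : ℕ) : ContDiffOn ℝ (⊤ : ℕ∞) (iteratedDeriv k f) s := by
  induction k with
  | zero => simpa [iteratedDeriv_zero] using hf
  | succ k IH => rw [iteratedDeriv_succ]; exact contDiffOn_deriv hs IH
lemma differentiableAt_of_contDiffOn {f : ℝ → ℝ} {s : Set ℝ} (hs : IsOpen s)
    (hf : ContDiffOn ℝ (⊤ : ℕ∞) f s) {x : ℝ} (hx : x ∈ s) : DifferentiableAt ℝ f x :=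
  ((hf.contDiffAt (hs.mem_nhds hx)).differentiableAt (by simp : ((⊤ : ℕ∞) : WithTop ℕ∞) ≠ 0))
lemma iteratedDeriv_zero_fun (k : ℕ) (x : ℝ) : iteratedDeriv k (fun _ : ℝ => (0:ℝ)) x = 0 := by
  induction k generalizing x with
  | zero => simp
  | succ k IH => rw [iteratedDeriv_succ']; simpa [deriv_const'] using IH x
lemma iteratedDeriv_add_of_contDiffOn {f g : ℝ → ℝ} {s : Set ℝ} (hs : IsOpen s)
    (hf : ContDiffOn ℝ (⊤ : ℕ∞) f s) (hg : ContDiffOn ℝ (⊤ : ℕ∞) g s) {x : ℝ} (hx : x ∈ s) (k : ℕ) :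
    iteratedDeriv k (fun t => f t + g t) x = iteratedDeriv k f x + iteratedDeriv k g x := by
  have hu : UniqueDiffOn ℝ s := hs.uniqueDiffOn
  have h1 : ∀ h : ℝ → ℝ, iteratedDeriv k h x = iteratedDerivWithin k h s x := by
    intro h
    simp [iteratedDeriv, iteratedDerivWithin, iteratedFDerivWithin_of_isOpen k hs hx]
  rw [show (fun t => f t + g t) = f + g from rfl, h1, h1, h1,
    iteratedDerivWithin_add hx hu ((hf.of_le (by exact_mod_cast le_top)) x hx) ((hg.of_le (by exact_mod_cast le_top)) x hx)]
lemma iteratedDeriv_const_mul_of_contDiffOn (c : ℝ) {f : ℝ → ℝ} {s : Set ℝ} (hs : IsOpen s)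
    (hf : ContDiffOn ℝ (⊤ : ℕ∞) f s) {x : ℝ} (hx : x ∈ s) (k : ℕ) :
    iteratedDeriv k (fun t => c * f t) x = c * iteratedDeriv k f x := by
  have hu : UniqueDiffOn ℝ s := hs.uniqueDiffOn
  have h1 : ∀ h : ℝ → ℝ, iteratedDeriv k h x = iteratedDerivWithin k h s x := by
    intro h
    simp [iteratedDeriv, iteratedDerivWithin, iteratedFDerivWithin_of_isOpen k hs hx]
  rw [h1, h1, iteratedDerivWithin_const_mul hx hu c ((hf.of_le (by exact_mod_cast le_top)) x hx)]

/-- If `f` is smooth on `{|r| < δ}` and vanishes on `[0, δ)`, all its iterated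
derivatives vanish on `[0, δ)`. -/
lemma vanish_right {δ : ℝ} (hδ : 0 < δ) {f : ℝ → ℝ}
    (hf : ContDiffOn ℝ (⊤ : ℕ∞) f (Iop δ))
    (h0 : ∀ r, 0 ≤ r → r < δ → f r = 0) :
    ∀ k r, 0 ≤ r → r < δ → iteratedDeriv k f r = 0 := by
  intro k
  induction k with
  | zero => intro r h1 h2; simpa using h0 r h1 h2
  | succ k IH =>
    intro r h1 h2
    set g := iteratedDeriv k f with hg_def
    have hg : ContDiffOn ℝ (⊤ : ℕ∞) g (Iop δ) := contDiffOn_iteratedDeriv isOpen_Iop hf k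
    rw [iteratedDeriv_succ]
    rcases lt_or_eq_of_le h1 with hpos | hzero
    · -- interior point: g vanishes on a neighborhood
      have hev : g =ᶠ[𝓝 r] (fun _ => (0:ℝ)) := by
        filter_upwards [Ioo_mem_nhds hpos h2] with t ht
        exact IH t ht.1.le ht.2
      rw [hev.deriv_eq, deriv_const]
    · -- boundary point r = 0
      subst hzero
      have hd : DifferentiableAt ℝ g 0 :=
        differentiableAt_of_contDiffOn isOpen_Iop hg (zero_mem_Iop hδ)
      have h1' : HasDerivWithinAt g (deriv g 0) (Ici (0:ℝ)) 0 :=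
        hd.hasDerivAt.hasDerivWithinAt
      have hev : g =ᶠ[𝓝[Ici 0] 0] (fun _ => (0:ℝ)) := by
        filter_upwards [inter_mem (nhdsWithin_le_nhds (Iio_mem_nhds hδ))
          self_mem_nhdsWithin] with t ht
        exact IH t ht.2 ht.1
      have h2' : HasDerivWithinAt (fun _ => (0:ℝ)) (deriv g 0) (Ici (0:ℝ)) 0 :=
        h1'.congr_of_eventuallyEq hev.symm (IH 0 le_rfl hδ).symm
      have h3' : HasDerivWithinAt g 0 (Ici (0:ℝ)) 0 :=
        (hasDerivWithinAt_const (0:ℝ) _ (0:ℝ)).congr_of_eventuallyEq hev (IH 0 le_rfl hδ)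
      exact (uniqueDiffOn_Ici (0:ℝ) 0 Set.self_mem_Ici).eq_deriv _ h1' h3'

/-- `(r·P)⁽ᵇ⁺¹⁾(0) = (b+1)·P⁽ᵇ⁾(0)`. -/
lemma iteratedDeriv_id_mul {δ : ℝ} (hδ : 0 < δ) :
    ∀ (b : ℕ) (P : ℝ → ℝ), ContDiffOn ℝ (⊤ : ℕ∞) P (Iop δ) →
      iteratedDeriv (b+1) (fun r => r * P r) 0 = (b+1 : ℝ) * iteratedDeriv b P 0 := by
  intro b
  induction b with
  | zero =>
    intro P hP
    have hd : DifferentiableAt ℝ P 0 :=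
      differentiableAt_of_contDiffOn isOpen_Iop hP (zero_mem_Iop hδ)
    rw [show (0:ℕ)+1 = 1 from rfl, iteratedDeriv_one]
    rw [deriv_fun_mul (c := fun x : ℝ => x) differentiableAt_id hd]
    simp
  | succ b IH =>
    intro P hP
    have hP' : ContDiffOn ℝ (⊤ : ℕ∞) (deriv P) (Iop δ) := contDiffOn_deriv isOpen_Iop hP
    have hev : deriv (fun r => r * P r) =ᶠ[𝓝 0]
        (fun r => P r + r * deriv P r) := by
      filter_upwards [isOpen_Iop.mem_nhds (zero_mem_Iop hδ)] with t ht
      rw [deriv_fun_mul (c := fun x : ℝ => x) differentiableAt_id (differentiableAt_of_contDiffOn isOpen_Iop hP ht)]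
      simp [mul_comm]
    have hmul : ContDiffOn ℝ (⊤ : ℕ∞) (fun r : ℝ => r * deriv P r) (Iop δ) :=
      contDiffOn_id.mul hP'
    rw [iteratedDeriv_succ', hev.iteratedDeriv_eq,
      iteratedDeriv_add_of_contDiffOn isOpen_Iop hP hmul (zero_mem_Iop hδ),
      IH (deriv P) hP', ← iteratedDeriv_succ']
    push_cast
    ring

variable {δ : ℝ}

/-- smooth on `Iop δ` and all odd derivatives at `0` up to order `M` vanish. -/
def EVp (δ : ℝ) (M : ℕ) (f : ℝ → ℝ) : Prop :=
  ContDiffOn ℝ (⊤ : ℕ∞) f (Iop δ) ∧ ∀ a, a ≤ M → Odd a → iteratedDeriv a f 0 = 0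

/-- smooth on `Iop δ` and all even derivatives at `0` up to order `M` vanish. -/
def ODp (δ : ℝ) (M : ℕ) (f : ℝ → ℝ) : Prop :=
  ContDiffOn ℝ (⊤ : ℕ∞) f (Iop δ) ∧ ∀ a, a ≤ M → Even a → iteratedDeriv a f 0 = 0

lemma EVp.mono {M M' : ℕ} {f : ℝ → ℝ} (h : EVp δ M f) (hle : M' ≤ M) : EVp δ M' f :=
  ⟨h.1, fun a ha => h.2 a (ha.trans hle)⟩
lemma ODp.mono {M M' : ℕ} {f : ℝ → ℝ} (h : ODp δ M f) (hle : M' ≤ M) : ODp δ M' f :=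
  ⟨h.1, fun a ha => h.2 a (ha.trans hle)⟩

lemma EVp.deriv {M : ℕ} {f : ℝ → ℝ} (h : EVp δ (M+1) f) : ODp δ M (deriv f) :=
  ⟨contDiffOn_deriv isOpen_Iop h.1, fun a ha hae => by
    rw [← iteratedDeriv_succ']
    exact h.2 (a+1) (by omega) (hae.add_one)⟩

lemma ODp.deriv {M : ℕ} {f : ℝ → ℝ} (h : ODp δ (M+1) f) : EVp δ M (deriv f) :=
  ⟨contDiffOn_deriv isOpen_Iop h.1, fun a ha hao => by
    rw [← iteratedDeriv_succ']
    exact h.2 (a+1) (by omega) (by simpa using hao.add_one)⟩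

lemma EVp.add (hδ : 0 < δ) {M : ℕ} {f g : ℝ → ℝ} (hf : EVp δ M f) (hg : EVp δ M g) :
    EVp δ M (fun t => f t + g t) :=
  ⟨hf.1.add hg.1, fun a ha hp => by
    rw [iteratedDeriv_add_of_contDiffOn isOpen_Iop hf.1 hg.1 (zero_mem_Iop hδ),
      hf.2 a ha hp, hg.2 a ha hp, add_zero]⟩

lemma ODp.add (hδ : 0 < δ) {M : ℕ} {f g : ℝ → ℝ} (hf : ODp δ M f) (hg : ODp δ M g) :
    ODp δ M (fun t => f t + g t) :=
  ⟨hf.1.add hg.1, fun a ha hp => by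
    rw [iteratedDeriv_add_of_contDiffOn isOpen_Iop hf.1 hg.1 (zero_mem_Iop hδ),
      hf.2 a ha hp, hg.2 a ha hp, add_zero]⟩

/-- the derivative of a product agrees with `f'g + fg'` near `0`. -/
lemma deriv_mul_eventually (hδ : 0 < δ) {f g : ℝ → ℝ}
    (hf : ContDiffOn ℝ (⊤ : ℕ∞) f (Iop δ)) (hg : ContDiffOn ℝ (⊤ : ℕ∞) g (Iop δ)) :
    deriv (fun t => f t * g t) =ᶠ[𝓝 (0:ℝ)]
      (fun t => deriv f t * g t + f t * deriv g t) := by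
  filter_upwards [isOpen_Iop.mem_nhds (zero_mem_Iop hδ)] with t ht
  rw [deriv_fun_mul (differentiableAt_of_contDiffOn isOpen_Iop hf ht)
    (differentiableAt_of_contDiffOn isOpen_Iop hg ht)]

lemma mul_parity (hδ : 0 < δ) :
    ∀ M : ℕ,
      (∀ f g : ℝ → ℝ, EVp δ M f → EVp δ M g → EVp δ M (fun t => f t * g t)) ∧
      (∀ f g : ℝ → ℝ, EVp δ M f → ODp δ M g → ODp δ M (fun t => f t * g t)) ∧
      (∀ f g : ℝ → ℝ, ODp δ M f → ODp δ M g → EVp δ M (fun t => f t * g t)) := by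
  intro M
  induction M with
  | zero =>
    refine ⟨fun f g hf hg => ⟨hf.1.mul hg.1, ?_⟩,
      fun f g hf hg => ⟨hf.1.mul hg.1, ?_⟩,
      fun f g hf hg => ⟨hf.1.mul hg.1, ?_⟩⟩
    · intro a ha hp
      interval_cases a
      · exact absurd hp (by simp)
    · intro a ha hp
      interval_cases a
      · simpa using Or.inr (hg.2 0 le_rfl (by simp))
    · intro a ha hp
      interval_cases a
      · exact absurd hp (by simp)
  | succ M IH =>
    obtain ⟨IHee, IHeo, IHoo⟩ := IH
    have key : ∀ f g : ℝ → ℝ, ContDiffOn ℝ (⊤ : ℕ∞) f (Iop δ) → ContDiffOn ℝ (⊤ : ℕ∞) g (Iop δ) →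
        ∀ b : ℕ, iteratedDeriv (b+1) (fun t => f t * g t) 0 =
          iteratedDeriv b (fun t => deriv f t * g t + f t * deriv g t) 0 := by
      intro f g hf hg b
      rw [iteratedDeriv_succ', (deriv_mul_eventually hδ hf hg).iteratedDeriv_eq]
    refine ⟨fun f g hf hg => ⟨hf.1.mul hg.1, ?_⟩,
      fun f g hf hg => ⟨hf.1.mul hg.1, ?_⟩,
      fun f g hf hg => ⟨hf.1.mul hg.1, ?_⟩⟩
    · -- EV * EV ⊆ EV
      intro a ha hp
      obtain ⟨b, rfl⟩ : ∃ b, a = b + 1 := ⟨a - 1, by rcases hp with ⟨c, hc⟩; omega⟩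
      have hb : Even b := by
        rcases Nat.even_or_odd b with h | h
        · exact h
        · exfalso; rcases h with ⟨c, hc⟩; rcases hp with ⟨d, hd⟩; omega
      rw [key f g hf.1 hg.1 b]
      have h1 : ODp δ M (fun t => deriv f t * g t) := by
        rw [show (fun t => deriv f t * g t) = fun t => g t * deriv f t from
          funext fun t => mul_comm _ _]
        exact IHeo g (deriv f) (hg.mono (Nat.le_succ M)) hf.deriv
      have h2 : ODp δ M (fun t => f t * deriv g t) :=
        IHeo f (deriv g) (hf.mono (Nat.le_succ M)) hg.deriv
      exact (h1.add hδ h2).2 b (by omega) hb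
    · -- EV * OD ⊆ OD
      intro a ha hp
      rcases Nat.eq_zero_or_eq_succ_pred a with h0 | hsucc
      · subst h0
        simpa using Or.inr (hg.2 0 (by omega) (by simp))
      · obtain ⟨b, rfl⟩ : ∃ b, a = b + 1 := ⟨a - 1, hsucc⟩
        have hb : Odd b := by
          rcases Nat.even_or_odd b with h | h
          · exfalso; rcases h with ⟨c, hc⟩; rcases hp with ⟨d, hd⟩; omega
          · exact h
        rw [key f g hf.1 hg.1 b]
        have h1 : EVp δ M (fun t => deriv f t * g t) :=
          IHoo (deriv f) g hf.deriv (hg.mono (Nat.le_succ M))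
        have h2 : EVp δ M (fun t => f t * deriv g t) := by
          rw [show (fun t => f t * deriv g t) = fun t => deriv g t * f t from
            funext fun t => mul_comm _ _]
          exact IHee (deriv g) f hg.deriv (hf.mono (Nat.le_succ M))
        exact (h1.add hδ h2).2 b (by rcases hp with ⟨d, hd⟩; omega) hb
    · -- OD * OD ⊆ EV
      intro a ha hp
      obtain ⟨b, rfl⟩ : ∃ b, a = b + 1 := ⟨a - 1, by rcases hp with ⟨c, hc⟩; omega⟩
      have hb : Even b := by
        rcases Nat.even_or_odd b with h | h
        · exact h
        · exfalso; rcases h with ⟨c, hc⟩; rcases hp with ⟨d, hd⟩; omega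
      rw [key f g hf.1 hg.1 b]
      have h1 : ODp δ M (fun t => deriv f t * g t) :=
        IHeo (deriv f) g hf.deriv (hg.mono (Nat.le_succ M))
      have h2 : ODp δ M (fun t => f t * deriv g t) := by
        rw [show (fun t => f t * deriv g t) = fun t => deriv g t * f t from
          funext fun t => mul_comm _ _]
        exact IHeo (deriv g) f hg.deriv (hf.mono (Nat.le_succ M))
      exact (h1.add hδ h2).2 b (by omega) hb


lemma EVp.sum {δ : ℝ} (hδ : 0 < δ) {M : ℕ} {ι : Type*} (s : Finset ι) (f : ι → ℝ → ℝ)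
    (h : ∀ i ∈ s, EVp δ M (f i)) : EVp δ M (fun t => ∑ i ∈ s, f i t) := by
  classical
  induction s using Finset.induction_on with
  | empty =>
    refine ⟨by simpa using contDiffOn_const, ?_⟩
    intro a ha hp
    simpa using iteratedDeriv_zero_fun a 0
  | insert i s' hnot IH =>
    have h1 : EVp δ M (f i) := h i (Finset.mem_insert_self i s')
    have h2 : EVp δ M (fun t => ∑ j ∈ s', f j t) :=
      IH (fun j hj => h j (Finset.mem_insert_of_mem hj))
    have := h1.add hδ h2
    refine ⟨?_, ?_⟩
    · exact this.1.congr (fun t _ => by rw [Finset.sum_insert hnot])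
    · intro a ha hp
      rw [show (fun t => ∑ j ∈ insert i s', f j t)
          = fun t => f i t + ∑ j ∈ s', f j t from
        funext fun t => Finset.sum_insert hnot]
      exact this.2 a ha hp

/-! ### Product-space helpers -/

section prodspace
set_option linter.unusedSectionVars false

variable {E : Type*} [NormedAddCommGroup E] [NormedSpace ℝ E]

noncomputable def DR (F : E × ℝ → ℝ) (p : E × ℝ) : ℝ := fderiv ℝ F p (0, 1)
noncomputable def DX (v : E) (F : E × ℝ → ℝ) (p : E × ℝ) : ℝ := fderiv ℝ F p (v, 0)

def Uop (E : Type*) [NormedAddCommGroup E] (δ : ℝ) : Set (E × ℝ) := {p | |p.2| < δ}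

lemma isOpen_Uop {δ : ℝ} : IsOpen (Uop E δ) :=
  isOpen_Iio.preimage (continuous_abs.comp continuous_snd)

lemma mem_Uop {δ : ℝ} {x : E} {r : ℝ} (h : |r| < δ) : (x, r) ∈ Uop E δ := h

variable {δ : ℝ} {F G : E × ℝ → ℝ}

lemma DR_smooth (hF : ContDiffOn ℝ (⊤ : ℕ∞) F (Uop E δ)) : ContDiffOn ℝ (⊤ : ℕ∞) (DR F) (Uop E δ) :=
  (hF.fderiv_of_isOpen isOpen_Uop (by simp)).clm_apply contDiffOn_const

lemma DR_iter_smooth (hF : ContDiffOn ℝ (⊤ : ℕ∞) F (Uop E δ)) (a : ℕ) :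
    ContDiffOn ℝ (⊤ : ℕ∞) ((DR)^[a] F) (Uop E δ) := by
  induction a generalizing F with
  | zero => simpa using hF
  | succ a IH => rw [Function.iterate_succ_apply]; exact IH (DR_smooth hF)

lemma DX_smooth (v : E) (hF : ContDiffOn ℝ (⊤ : ℕ∞) F (Uop E δ)) :
    ContDiffOn ℝ (⊤ : ℕ∞) (DX v F) (Uop E δ) :=
  (hF.fderiv_of_isOpen isOpen_Uop (by simp)).clm_apply contDiffOn_const

lemma fderiv_slice {p : E × ℝ} (hF : DifferentiableAt ℝ F p) (v : E) :
    fderiv ℝ (fun y => F (y, p.2)) p.1 v = fderiv ℝ F p (v, 0) := by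
  have h1 : HasFDerivAt (fun y : E => (y, p.2))
      ((ContinuousLinearMap.id ℝ E).prod (0 : E →L[ℝ] ℝ)) p.1 :=
    (hasFDerivAt_id p.1).prodMk (hasFDerivAt_const p.2 p.1)
  have h2 : HasFDerivAt (fun y => F (y, p.2))
      ((fderiv ℝ F p).comp ((ContinuousLinearMap.id ℝ E).prod (0 : E →L[ℝ] ℝ))) p.1 :=
    (hF.hasFDerivAt).comp p.1 h1
  rw [h2.fderiv]
  simp

lemma sec_smooth (hF : ContDiffOn ℝ (⊤ : ℕ∞) F (Uop E δ)) (x : E) :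
    ContDiffOn ℝ (⊤ : ℕ∞) (fun r => F (x, r)) (Iop δ) := by
  refine hF.comp ((contDiff_const.prodMk contDiff_id).contDiffOn) ?_
  intro r hr
  exact hr

lemma deriv_sec (hF : ContDiffOn ℝ (⊤ : ℕ∞) F (Uop E δ)) {x : E} {r : ℝ} (hr : |r| < δ) :
    deriv (fun s => F (x, s)) r = DR F (x, r) := by
  have hd : DifferentiableAt ℝ F (x, r) :=
    (hF.contDiffAt (isOpen_Uop.mem_nhds (mem_Uop hr))).differentiableAt (by simp : ((⊤ : ℕ∞) : WithTop ℕ∞) ≠ 0)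
  have h2 : HasDerivAt (fun s : ℝ => (x, s)) ((0 : E), (1 : ℝ)) r :=
    (hasDerivAt_const r x).prodMk (hasDerivAt_id r)
  exact (hd.hasFDerivAt.comp_hasDerivAt r h2).deriv

lemma iter_sec (x : E) :
    ∀ (a : ℕ) (F : E × ℝ → ℝ), ContDiffOn ℝ (⊤ : ℕ∞) F (Uop E δ) →
      ∀ r : ℝ, |r| < δ → iteratedDeriv a (fun s => F (x, s)) r = (DR)^[a] F (x, r) := by
  intro a
  induction a with
  | zero => intro F hF r hr; simp
  | succ a IH =>
    intro F hF r hr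
    have hev : deriv (fun s => F (x, s)) =ᶠ[𝓝 r] (fun s => DR F (x, s)) := by
      filter_upwards [(isOpen_Iio.preimage continuous_abs).mem_nhds
        (show |r| < δ from hr)] with t ht
      exact deriv_sec hF ht
    rw [iteratedDeriv_succ', hev.iteratedDeriv_eq, IH (DR F) (DR_smooth hF) r hr,
      ← Function.iterate_succ_apply]

lemma DR_congr : ∀ (a : ℕ) (F G : E × ℝ → ℝ), EqOn F G (Uop E δ) →
    ∀ p ∈ Uop E δ, (DR)^[a] F p = (DR)^[a] G p := by
  intro a
  induction a with
  | zero => intro F G h p hp; exact h hp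
  | succ a IH =>
    intro F G h p hp
    rw [Function.iterate_succ_apply, Function.iterate_succ_apply]
    refine IH (DR F) (DR G) ?_ p hp
    intro q hq
    have hev : F =ᶠ[𝓝 q] G := by
      filter_upwards [isOpen_Uop.mem_nhds hq] with t ht
      exact h ht
    simp only [DR, hev.fderiv_eq]

lemma swap (hF : ContDiffOn ℝ (⊤ : ℕ∞) F (Uop E δ)) (v : E) {p : E × ℝ} (hp : p ∈ Uop E δ) :
    DR (DX v F) p = DX v (DR F) p := by
  have hd : DifferentiableAt ℝ (fderiv ℝ F) p :=
    ((hF.fderiv_of_isOpen isOpen_Uop (by exact_mod_cast le_top)).contDiffAt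
      (isOpen_Uop.mem_nhds hp)).differentiableAt (by simp : ((⊤ : ℕ∞) : WithTop ℕ∞) ≠ 0)
  have hsymm := (hF.contDiffAt (isOpen_Uop.mem_nhds hp)).isSymmSndFDerivAt (by simp [minSmoothness_of_isRCLikeNormedField]; exact WithTop.coe_le_coe.2 le_top)
  have h1 : DR (DX v F) p = fderiv ℝ (fderiv ℝ F) p (0, 1) (v, 0) := by
    show fderiv ℝ (fun q => fderiv ℝ F q (v, 0)) p (0, 1) = _
    rw [fderiv_clm_apply hd (differentiableAt_const _)]
    simp
  have h2 : DX v (DR F) p = fderiv ℝ (fderiv ℝ F) p (v, 0) (0, 1) := by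
    show fderiv ℝ (fun q => fderiv ℝ F q (0, 1)) p (v, 0) = _
    rw [fderiv_clm_apply hd (differentiableAt_const _)]
    simp
  rw [h1, h2, hsymm.eq]

lemma comm_iter (v : E) : ∀ (a : ℕ) (F : E × ℝ → ℝ), ContDiffOn ℝ (⊤ : ℕ∞) F (Uop E δ) →
    ∀ p ∈ Uop E δ, (DR)^[a] (DX v F) p = DX v ((DR)^[a] F) p := by
  intro a
  induction a with
  | zero => intro F hF p hp; simp
  | succ a IH =>
    intro F hF p hp
    rw [Function.iterate_succ_apply]
    have e1 : (DR)^[a] (DR (DX v F)) p = (DR)^[a] (DX v (DR F)) p :=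
      DR_congr a _ _ (fun q hq => swap hF v hq) p hp
    rw [e1, IH (DR F) (DR_smooth hF) p hp, ← Function.iterate_succ_apply]

end prodspace

end GW6

/-- The gradient in the `x`-variables of a function on `ℝᵐ × ℝ`. -/
noncomputable def gradx {m : ℕ} (f : (Fin m → ℝ) × ℝ → ℝ) (p : (Fin m → ℝ) × ℝ) :
    Fin m → ℝ :=
  fun i => fderiv ℝ (fun y => f (y, p.2)) p.1 (Pi.single i 1)

open GW6

/-- Graham–Witten, Lemma 2: if `ω` satisfies `2ω_r + r(ω_r² + |d_xω|²_G) = 0` for `0 ≤ r < δ`,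
where the matrix family `G` is even in `r` to order `N - 1`, then the Taylor expansion of `ω`
at `r = 0` has only even powers of `r` through the `r^{N+1}` term. -/
theorem stmt_6
    (m N : ℕ) (hm : 1 ≤ m) (hN : 1 ≤ N) (δ : ℝ) (hδ : 0 < δ)
    (G : (Fin m → ℝ) × ℝ → Matrix (Fin m) (Fin m) ℝ)
    (hG_smooth : ∀ i j : Fin m, ContDiffOn ℝ (⊤ : ℕ∞) (fun p => G p i j) {p : (Fin m → ℝ) × ℝ | |p.2| < δ})
    (hG_symm : ∀ p : (Fin m → ℝ) × ℝ, |p.2| < δ → (G p).IsSymm)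
    (hG_even : ∀ (x : Fin m → ℝ) (q : ℕ), Odd q → q ≤ N - 1 → ∀ i j : Fin m,
      iteratedDeriv q (fun r => G (x, r) i j) 0 = 0)
    (ω : (Fin m → ℝ) × ℝ → ℝ)
    (hω_smooth : ContDiffOn ℝ (⊤ : ℕ∞) ω {p : (Fin m → ℝ) × ℝ | |p.2| < δ})
    (hPDE : ∀ (x : Fin m → ℝ) (r : ℝ), 0 ≤ r → r < δ →
      2 * deriv (fun s => ω (x, s)) r
        + r * ((deriv (fun s => ω (x, s)) r) ^ 2
            + dotProduct (gradx ω (x, r)) (G (x, r) *ᵥ gradx ω (x, r))) = 0) :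
    ∀ (x : Fin m → ℝ) (q : ℕ), Odd q → q ≤ N + 1 →
      iteratedDeriv q (fun r => ω (x, r)) 0 = 0 := by
  have hωU : ContDiffOn ℝ (⊤ : ℕ∞) ω (Uop (Fin m → ℝ) δ) := hω_smooth
  have hGU : ∀ i j, ContDiffOn ℝ (⊤ : ℕ∞) (fun p => G p i j) (Uop (Fin m → ℝ) δ) := hG_smooth
  have h0δ : |(0:ℝ)| < δ := by simpa using hδ
  have key : ∀ q : ℕ, Odd q → q ≤ N + 1 →
      ∀ x : Fin m → ℝ, iteratedDeriv q (fun r : ℝ => ω (x, r)) 0 = 0 := by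
    intro q
    induction q using Nat.strong_induction_on with
    | _ q IH =>
      intro hq hqN x
      obtain ⟨k, rfl⟩ : ∃ k, q = k + 1 := ⟨q - 1, by rcases hq with ⟨c, hc⟩; omega⟩
      -- smoothness of all the building blocks on the interval
      have hfI : ContDiffOn ℝ (⊤ : ℕ∞) (fun r : ℝ => ω (x, r)) (Iop δ) := sec_smooth hωU x
      have hfr : ContDiffOn ℝ (⊤ : ℕ∞) (deriv (fun r : ℝ => ω (x, r))) (Iop δ) := contDiffOn_deriv isOpen_Iop hfI
      have hgI : ∀ i : Fin m, ContDiffOn ℝ (⊤ : ℕ∞) (fun r : ℝ => GW6.DX (Pi.single i (1:ℝ)) ω (x, r)) (Iop δ) :=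
        fun i => sec_smooth (DX_smooth _ hωU) x
      have hcI : ∀ i j : Fin m, ContDiffOn ℝ (⊤ : ℕ∞) (fun r : ℝ => G (x, r) i j) (Iop δ) :=
        fun i j => sec_smooth (hGU i j) x
      have hPI : ContDiffOn ℝ (⊤ : ℕ∞) (fun r : ℝ => (deriv (fun r : ℝ => ω (x, r)) r)^2 + ∑ i, ∑ j, GW6.DX (Pi.single i (1:ℝ)) ω (x, r) * (G (x, r) i j * GW6.DX (Pi.single j (1:ℝ)) ω (x, r))) (Iop δ) := by
        refine ContDiffOn.add (hfr.pow 2) ?_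
        refine ContDiffOn.sum (fun i _ => ?_)
        refine ContDiffOn.sum (fun j _ => ?_)
        exact (hgI i).mul ((hcI i j).mul (hgI j))
      have hΦI : ContDiffOn ℝ (⊤ : ℕ∞) (fun r : ℝ => 2 * deriv (fun r : ℝ => ω (x, r)) r + r * (fun r : ℝ => (deriv (fun r : ℝ => ω (x, r)) r)^2 + ∑ i, ∑ j, GW6.DX (Pi.single i (1:ℝ)) ω (x, r) * (G (x, r) i j * GW6.DX (Pi.single j (1:ℝ)) ω (x, r))) r) (Iop δ) := by
        refine ContDiffOn.add (contDiffOn_const.mul hfr) ?_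
        exact ContDiffOn.mul contDiffOn_id hPI
      -- the PDE in the new notation
      have hgrad : ∀ (r : ℝ), |r| < δ → ∀ i : Fin m,
          gradx ω (x, r) i = GW6.DX (Pi.single i (1:ℝ)) ω (x, r) := by
        intro r hr i
        exact fderiv_slice
          ((hωU.contDiffAt (isOpen_Uop.mem_nhds (mem_Uop hr))).differentiableAt (by simp : ((⊤ : ℕ∞) : WithTop ℕ∞) ≠ 0)) _
      have hΦ0 : ∀ r, 0 ≤ r → r < δ → (fun r : ℝ => 2 * deriv (fun r : ℝ => ω (x, r)) r + r * (fun r : ℝ => (deriv (fun r : ℝ => ω (x, r)) r)^2 + ∑ i, ∑ j, GW6.DX (Pi.single i (1:ℝ)) ω (x, r) * (G (x, r) i j * GW6.DX (Pi.single j (1:ℝ)) ω (x, r))) r) r = 0 := by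
        intro r h1 h2
        have hr : |r| < δ := abs_lt.mpr ⟨by linarith, h2⟩
        have hpde := hPDE x r h1 h2
        have hdot : dotProduct (gradx ω (x, r)) (G (x, r) *ᵥ gradx ω (x, r))
            = ∑ i, ∑ j, GW6.DX (Pi.single i (1:ℝ)) ω (x, r) * (G (x, r) i j * GW6.DX (Pi.single j (1:ℝ)) ω (x, r)) := by
          rw [show gradx ω (x, r) = fun i => GW6.DX (Pi.single i (1:ℝ)) ω (x, r) from funext (hgrad r hr)]
          simp [dotProduct, Matrix.mulVec, Finset.mul_sum]
        rw [hdot] at hpde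
        exact hpde
      -- all derivatives of Φ vanish at 0
      have hvan : ∀ k' : ℕ, iteratedDeriv k' (fun r : ℝ => 2 * deriv (fun r : ℝ => ω (x, r)) r + r * (fun r : ℝ => (deriv (fun r : ℝ => ω (x, r)) r)^2 + ∑ i, ∑ j, GW6.DX (Pi.single i (1:ℝ)) ω (x, r) * (G (x, r) i j * GW6.DX (Pi.single j (1:ℝ)) ω (x, r))) r) 0 = 0 :=
        fun k' => vanish_right hδ hΦI hΦ0 k' 0 le_rfl hδ
      -- decomposition of the k-th derivative of Φ at 0
      have hdec : iteratedDeriv k (fun r : ℝ => 2 * deriv (fun r : ℝ => ω (x, r)) r + r * (fun r : ℝ => (deriv (fun r : ℝ => ω (x, r)) r)^2 + ∑ i, ∑ j, GW6.DX (Pi.single i (1:ℝ)) ω (x, r) * (G (x, r) i j * GW6.DX (Pi.single j (1:ℝ)) ω (x, r))) r) 0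
          = 2 * iteratedDeriv (k+1) (fun r : ℝ => ω (x, r)) 0 + iteratedDeriv k (fun r : ℝ => r * (fun r : ℝ => (deriv (fun r : ℝ => ω (x, r)) r)^2 + ∑ i, ∑ j, GW6.DX (Pi.single i (1:ℝ)) ω (x, r) * (G (x, r) i j * GW6.DX (Pi.single j (1:ℝ)) ω (x, r))) r) 0 := by
        have hA : ContDiffOn ℝ (⊤ : ℕ∞) (fun r : ℝ => 2 * deriv (fun r : ℝ => ω (x, r)) r) (Iop δ) :=
          contDiffOn_const.mul hfr
        have hB : ContDiffOn ℝ (⊤ : ℕ∞) (fun r : ℝ => r * (fun r : ℝ => (deriv (fun r : ℝ => ω (x, r)) r)^2 + ∑ i, ∑ j, GW6.DX (Pi.single i (1:ℝ)) ω (x, r) * (G (x, r) i j * GW6.DX (Pi.single j (1:ℝ)) ω (x, r))) r) (Iop δ) :=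
          ContDiffOn.mul contDiffOn_id hPI
        have h1 := iteratedDeriv_add_of_contDiffOn isOpen_Iop hA hB (zero_mem_Iop hδ) k
        have h2 := iteratedDeriv_const_mul_of_contDiffOn 2 isOpen_Iop hfr (zero_mem_Iop hδ) k
        rw [h1, h2, ← iteratedDeriv_succ']
      rcases Nat.eq_zero_or_pos k with hk0 | hkpos
      · -- base case q = 1
        subst hk0
        have h0 := hvan 0
        rw [hdec] at h0
        simp only [iteratedDeriv_zero] at h0
        rw [show (0:ℕ) + 1 = 1 from rfl] at h0 ⊢
        simp only [zero_mul, add_zero] at h0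
        linarith
      · -- inductive case q = b + 2
        obtain ⟨b, rfl⟩ : ∃ b, k = b + 1 := ⟨k - 1, by omega⟩
        have hb_odd : Odd b := by rcases hq with ⟨c, hc⟩; exact ⟨c - 1, by omega⟩
        have hbN : b + 2 ≤ N + 1 := hqN
        -- f is even to order b+1
        have hEVf : EVp δ (b+1) (fun r : ℝ => ω (x, r)) :=
          ⟨hfI, fun a ha hao => IH a (by omega) hao (by omega) x⟩
        have hODfr : ODp δ b (deriv (fun r : ℝ => ω (x, r))) := hEVf.deriv
        have hsq : EVp δ b (fun r : ℝ => deriv (fun r : ℝ => ω (x, r)) r * deriv (fun r : ℝ => ω (x, r)) r) :=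
          (mul_parity hδ b).2.2 _ _ hODfr hODfr
        -- the gradient components are even to order b
        have hgEV : ∀ i : Fin m, EVp δ b (fun r : ℝ => GW6.DX (Pi.single i (1:ℝ)) ω (x, r)) := by
          intro i
          refine ⟨hgI i, ?_⟩
          intro a ha hao
          have h1 : iteratedDeriv a (fun r : ℝ => GW6.DX (Pi.single i (1:ℝ)) ω ((x, r))) 0
              = (DR)^[a] (GW6.DX (Pi.single i (1:ℝ)) ω) (x, 0) :=
            iter_sec x a _ (DX_smooth _ hωU) 0 h0δ
          have h2 : (DR)^[a] (GW6.DX (Pi.single i (1:ℝ)) ω) (x, 0)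
              = DX (Pi.single i (1:ℝ)) ((DR)^[a] ω) (x, 0) :=
            comm_iter _ a ω hωU (x, 0) (mem_Uop h0δ)
          have hdiff : DifferentiableAt ℝ ((DR)^[a] ω) ((x : Fin m → ℝ), (0:ℝ)) :=
            ((DR_iter_smooth hωU a).contDiffAt
              (isOpen_Uop.mem_nhds (mem_Uop h0δ))).differentiableAt (by simp : ((⊤ : ℕ∞) : WithTop ℕ∞) ≠ 0)
          have h3 : DX (Pi.single i (1:ℝ)) ((DR)^[a] ω) (x, 0)
              = fderiv ℝ (fun y : Fin m → ℝ => (DR)^[a] ω (y, 0)) x (Pi.single i (1:ℝ)) :=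
            (fderiv_slice hdiff _).symm
          have hzero : (fun y : Fin m → ℝ => (DR)^[a] ω (y, 0)) = fun _ => (0:ℝ) := by
            funext y
            rw [← iter_sec y a ω hωU 0 h0δ]
            exact IH a (by omega) hao (by omega) y
          rw [h1, h2, h3, hzero]
          simp
        -- the metric components are even to order b
        have hcEV : ∀ i j : Fin m, EVp δ b (fun r : ℝ => G (x, r) i j) :=
          fun i j => ⟨hcI i j, fun a ha hao => hG_even x a hao (by omega) i j⟩
        -- hence P is even to order b
        have hsum : EVp δ b (fun r : ℝ => ∑ i, ∑ j, GW6.DX (Pi.single i (1:ℝ)) ω (x, r) * (G (x, r) i j * GW6.DX (Pi.single j (1:ℝ)) ω (x, r))) := by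
          refine EVp.sum hδ _ _ (fun i _ => ?_)
          refine EVp.sum hδ _ _ (fun j _ => ?_)
          exact (mul_parity hδ b).1 _ _ (hgEV i)
            ((mul_parity hδ b).1 _ _ (hcEV i j) (hgEV j))
        have hPEV : EVp δ b (fun r : ℝ => (deriv (fun r : ℝ => ω (x, r)) r)^2 + ∑ i, ∑ j, GW6.DX (Pi.single i (1:ℝ)) ω (x, r) * (G (x, r) i j * GW6.DX (Pi.single j (1:ℝ)) ω (x, r))) := by
          have heq : (fun r : ℝ => (deriv (fun r : ℝ => ω (x, r)) r)^2 + ∑ i, ∑ j, GW6.DX (Pi.single i (1:ℝ)) ω (x, r) * (G (x, r) i j * GW6.DX (Pi.single j (1:ℝ)) ω (x, r))) = fun r : ℝ => (deriv (fun r : ℝ => ω (x, r)) r * deriv (fun r : ℝ => ω (x, r)) r) + ∑ i, ∑ j, GW6.DX (Pi.single i (1:ℝ)) ω (x, r) * (G (x, r) i j * GW6.DX (Pi.single j (1:ℝ)) ω (x, r)) := by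
            funext r
            rw [pow_two]
          rw [heq]
          exact hsq.add hδ hsum
        -- conclude
        have h1 := hvan (b+1)
        rw [hdec, iteratedDeriv_id_mul hδ b _ hPI, hPEV.2 b le_rfl hb_odd] at h1
        have : (2:ℝ) * iteratedDeriv (b + 1 + 1) (fun r : ℝ => ω (x, r)) 0 = 0 := by
          rw [mul_zero, add_zero] at h1
          linarith [h1]
        linarith [this]
  intro x q hq hqN
  exact key q hq hqN x
end

section
/- Let m ≥ 1 and δ > 0. Let G : ℝᵐ × (−δ, δ) → ℝ^{m×m} be a smooth map with G(x,r) symmetric for all (x,r). Suppose ω and ω̃ are two smooth functions ℝᵐ × (−δ, δ) → ℝ, each satisfying, for all x ∈ ℝᵐ and all r with 0 ≤ r < δ, the equation 2 ∂_r ω + r · ( (∂_r ω)² + (∇_x ω)ᵀ G ∇_x ω ) = 0, and suppose ω(x,0) = ω̃(x,0) for all x ∈ ℝᵐ. Then ∂_r^q ω(x,0) = ∂_r^q ω̃(x,0) for every q ∈ ℕ and every x ∈ ℝᵐ. -/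
open Filter Set Matrix

namespace GW8

open ContDiff

variable {m : ℕ} {δ : ℝ}

/-- Directional derivative of a real function on `ℝᵐ × ℝ`. -/
noncomputable def Dv (v : (Fin m → ℝ) × ℝ) (f : (Fin m → ℝ) × ℝ → ℝ)
    (p : (Fin m → ℝ) × ℝ) : ℝ :=
  fderiv ℝ f p v

/-- The strip `|r| < δ`. -/
def U (m : ℕ) (δ : ℝ) : Set ((Fin m → ℝ) × ℝ) := {p | |p.2| < δ}

lemma isOpen_U : IsOpen (U m δ) :=
  isOpen_lt (continuous_snd.abs) continuous_const

lemma mem_U_iff {p : (Fin m → ℝ) × ℝ} : p ∈ U m δ ↔ |p.2| < δ := Iff.rfl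

lemma zero_mem_U (hδ : 0 < δ) (x : Fin m → ℝ) : ((x, (0:ℝ))) ∈ U m δ := by
  simp [U, abs_of_nonneg, hδ]

lemma contDiffAt_of_U {f : (Fin m → ℝ) × ℝ → ℝ} (hf : ContDiffOn ℝ ∞ f (U m δ))
    {p : (Fin m → ℝ) × ℝ} (hp : p ∈ U m δ) : ContDiffAt ℝ ∞ f p :=
  hf.contDiffAt (isOpen_U.mem_nhds hp)

lemma diffAt_of_U {f : (Fin m → ℝ) × ℝ → ℝ} (hf : ContDiffOn ℝ ∞ f (U m δ))
    {p : (Fin m → ℝ) × ℝ} (hp : p ∈ U m δ) : DifferentiableAt ℝ f p :=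
  (contDiffAt_of_U hf hp).differentiableAt (by decide)

lemma contDiffOn_Dv (v : (Fin m → ℝ) × ℝ) {f : (Fin m → ℝ) × ℝ → ℝ}
    (hf : ContDiffOn ℝ ∞ f (U m δ)) : ContDiffOn ℝ ∞ (Dv v f) (U m δ) := by
  have h1 : ContDiffOn ℝ ∞ (fderiv ℝ f) (U m δ) :=
    hf.fderiv_of_isOpen isOpen_U (by simp)
  exact h1.clm_apply contDiffOn_const

lemma contDiffOn_iter_Dv (v : (Fin m → ℝ) × ℝ) {f : (Fin m → ℝ) × ℝ → ℝ}
    (hf : ContDiffOn ℝ ∞ f (U m δ)) (q : ℕ) :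
    ContDiffOn ℝ ∞ ((Dv v)^[q] f) (U m δ) := by
  induction q generalizing f with
  | zero => exact hf
  | succ q ih => rw [Function.iterate_succ_apply]; exact ih (contDiffOn_Dv v hf)

/-- slice derivative in the `r` direction. -/
lemma hasDerivAt_slice {f : (Fin m → ℝ) × ℝ → ℝ} {x : Fin m → ℝ} {r : ℝ}
    (hf : DifferentiableAt ℝ f (x, r)) :
    HasDerivAt (fun s => f (x, s)) (Dv (0, 1) f (x, r)) r := by
  have h1 : HasDerivAt (fun s : ℝ => ((x, s) : (Fin m → ℝ) × ℝ)) ((0 : Fin m → ℝ), (1:ℝ)) r :=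
    (hasDerivAt_const r x).prodMk (hasDerivAt_id r)
  exact hf.hasFDerivAt.comp_hasDerivAt r h1

lemma deriv_slice {f : (Fin m → ℝ) × ℝ → ℝ} {x : Fin m → ℝ} {r : ℝ}
    (hf : DifferentiableAt ℝ f (x, r)) :
    deriv (fun s => f (x, s)) r = Dv (0, 1) f (x, r) :=
  (hasDerivAt_slice hf).deriv

/-- slice derivative in an `x` direction. -/
lemma hasFDerivAt_slicex {f : (Fin m → ℝ) × ℝ → ℝ} {x : Fin m → ℝ} {r : ℝ}
    (hf : DifferentiableAt ℝ f (x, r)) :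
    HasFDerivAt (fun y => f (y, r))
      ((fderiv ℝ f (x, r)).comp ((ContinuousLinearMap.id ℝ (Fin m → ℝ)).prod 0)) x := by
  have h1 : HasFDerivAt (fun y : Fin m → ℝ => ((y, r) : (Fin m → ℝ) × ℝ))
      ((ContinuousLinearMap.id ℝ (Fin m → ℝ)).prod 0) x :=
    (hasFDerivAt_id x).prodMk (hasFDerivAt_const r x)
  exact hf.hasFDerivAt.comp x h1

lemma fderiv_slicex {f : (Fin m → ℝ) × ℝ → ℝ} {x : Fin m → ℝ} {r : ℝ}
    (hf : DifferentiableAt ℝ f (x, r)) (i : Fin m) :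
    fderiv ℝ (fun y => f (y, r)) x (Pi.single i 1) = Dv (Pi.single i 1, 0) f (x, r) := by
  rw [(hasFDerivAt_slicex hf).fderiv]
  rfl

lemma gradx_eq {f : (Fin m → ℝ) × ℝ → ℝ} {x : Fin m → ℝ} {r : ℝ}
    (hf : DifferentiableAt ℝ f (x, r)) :
    gradx f (x, r) = fun i => Dv (Pi.single i 1, 0) f (x, r) := by
  funext i
  exact fderiv_slicex hf i

/-- Congruence: iterated directional derivatives only depend on values on the open set. -/
lemma iter_Dv_congr {f g : (Fin m → ℝ) × ℝ → ℝ} (v : (Fin m → ℝ) × ℝ)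
    (h : ∀ p ∈ U m δ, f p = g p) (q : ℕ) :
    ∀ p ∈ U m δ, (Dv v)^[q] f p = (Dv v)^[q] g p := by
  induction q with
  | zero => exact h
  | succ q ih =>
    intro p hp
    rw [Function.iterate_succ_apply', Function.iterate_succ_apply']
    have : (Dv v)^[q] f =ᶠ[nhds p] (Dv v)^[q] g :=
      Filter.eventuallyEq_of_mem (isOpen_U.mem_nhds hp) (fun y hy => ih y hy)
    show fderiv ℝ _ p v = fderiv ℝ _ p v
    rw [this.fderiv_eq]

lemma Dv_add {f g : (Fin m → ℝ) × ℝ → ℝ} (v : (Fin m → ℝ) × ℝ)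
    (hf : ContDiffOn ℝ ∞ f (U m δ)) (hg : ContDiffOn ℝ ∞ g (U m δ)) :
    ∀ p ∈ U m δ, Dv v (fun z => f z + g z) p = Dv v f p + Dv v g p := by
  intro p hp
  unfold Dv
  rw [fderiv_fun_add (diffAt_of_U hf hp) (diffAt_of_U hg hp)]
  rfl

lemma iter_Dv_add {f g : (Fin m → ℝ) × ℝ → ℝ} (v : (Fin m → ℝ) × ℝ)
    (hf : ContDiffOn ℝ ∞ f (U m δ)) (hg : ContDiffOn ℝ ∞ g (U m δ)) (q : ℕ) :
    ∀ p ∈ U m δ, (Dv v)^[q] (fun z => f z + g z) p = (Dv v)^[q] f p + (Dv v)^[q] g p := by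
  induction q generalizing f g with
  | zero => intro p hp; rfl
  | succ q ih =>
    intro p hp
    rw [Function.iterate_succ_apply, Function.iterate_succ_apply, Function.iterate_succ_apply]
    rw [iter_Dv_congr v (Dv_add v hf hg) q p hp]
    exact ih (contDiffOn_Dv v hf) (contDiffOn_Dv v hg) p hp

lemma Dv_const_mul {f : (Fin m → ℝ) × ℝ → ℝ} (v : (Fin m → ℝ) × ℝ) (c : ℝ)
    (hf : ContDiffOn ℝ ∞ f (U m δ)) :
    ∀ p ∈ U m δ, Dv v (fun z => c * f z) p = c * Dv v f p := by
  intro p hp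
  unfold Dv
  rw [fderiv_const_mul (diffAt_of_U hf hp) c]
  rfl

lemma iter_Dv_const_mul {f : (Fin m → ℝ) × ℝ → ℝ} (v : (Fin m → ℝ) × ℝ) (c : ℝ)
    (hf : ContDiffOn ℝ ∞ f (U m δ)) (q : ℕ) :
    ∀ p ∈ U m δ, (Dv v)^[q] (fun z => c * f z) p = c * (Dv v)^[q] f p := by
  induction q generalizing f with
  | zero => intro p hp; rfl
  | succ q ih =>
    intro p hp
    rw [Function.iterate_succ_apply, Function.iterate_succ_apply]
    rw [iter_Dv_congr v (Dv_const_mul v c hf) q p hp]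
    exact ih (contDiffOn_Dv v hf) p hp

lemma Dv_mul {f g : (Fin m → ℝ) × ℝ → ℝ} (v : (Fin m → ℝ) × ℝ)
    (hf : ContDiffOn ℝ ∞ f (U m δ)) (hg : ContDiffOn ℝ ∞ g (U m δ)) :
    ∀ p ∈ U m δ, Dv v (fun z => f z * g z) p = Dv v f p * g p + f p * Dv v g p := by
  intro p hp
  unfold Dv
  rw [fderiv_fun_mul (diffAt_of_U hf hp) (diffAt_of_U hg hp)]
  simp [mul_comm]
  ring

/-- Second-derivative symmetry: two directional derivatives commute on `U`. -/
lemma Dv_comm {f : (Fin m → ℝ) × ℝ → ℝ} (v w : (Fin m → ℝ) × ℝ)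
    (hf : ContDiffOn ℝ ∞ f (U m δ)) :
    ∀ p ∈ U m δ, Dv v (Dv w f) p = Dv w (Dv v f) p := by
  intro p hp
  have hsymm : IsSymmSndFDerivAt ℝ f p :=
    (contDiffAt_of_U hf hp).isSymmSndFDerivAt (by rw [minSmoothness_of_isRCLikeNormedField]; decide)
  have hfd : ContDiffOn ℝ ∞ (fderiv ℝ f) (U m δ) :=
    hf.fderiv_of_isOpen isOpen_U (by simp)
  have hdd : DifferentiableAt ℝ (fderiv ℝ f) p :=
    ((hfd.contDiffAt (isOpen_U.mem_nhds hp)).differentiableAt (by decide))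
  have key : ∀ u v' : (Fin m → ℝ) × ℝ,
      fderiv ℝ (fun z => fderiv ℝ f z u) p v' = fderiv ℝ (fderiv ℝ f) p v' u := by
    intro u v'
    have := ((ContinuousLinearMap.apply ℝ ℝ u).hasFDerivAt.comp p hdd.hasFDerivAt).fderiv
    rw [show (fun z => fderiv ℝ f z u) = (ContinuousLinearMap.apply ℝ ℝ u) ∘ (fderiv ℝ f) from rfl,
      this]
    rfl
  show fderiv ℝ (fun z => fderiv ℝ f z w) p v = fderiv ℝ (fun z => fderiv ℝ f z v) p w
  rw [key w v, key v w]
  exact hsymm v w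

/-- Iterated `v`-derivatives commute with a single `w`-derivative on `U`. -/
lemma iter_Dv_comm {f : (Fin m → ℝ) × ℝ → ℝ} (v w : (Fin m → ℝ) × ℝ)
    (hf : ContDiffOn ℝ ∞ f (U m δ)) (q : ℕ) :
    ∀ p ∈ U m δ, (Dv v)^[q] (Dv w f) p = Dv w ((Dv v)^[q] f) p := by
  induction q generalizing f with
  | zero => intro p hp; rfl
  | succ q ih =>
    intro p hp
    rw [Function.iterate_succ_apply]
    rw [iter_Dv_congr v (Dv_comm v w hf) q p hp]
    rw [ih (contDiffOn_Dv v hf) p hp]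
    rw [← Function.iterate_succ_apply]

/-- the `r`-direction. -/
noncomputable def er (m : ℕ) : (Fin m → ℝ) × ℝ := ((0 : Fin m → ℝ), (1 : ℝ))

/-- Agreement of all `r`-derivatives up to order `n` at `r = 0`, together with smoothness. -/
def Agr (m : ℕ) (δ : ℝ) (n : ℕ) (f g : (Fin m → ℝ) × ℝ → ℝ) : Prop :=
  ContDiffOn ℝ ∞ f (U m δ) ∧ ContDiffOn ℝ ∞ g (U m δ) ∧
    ∀ k ≤ n, ∀ x : Fin m → ℝ, (Dv (er m))^[k] f (x, 0) = (Dv (er m))^[k] g (x, 0)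

lemma Agr.refl {n : ℕ} {f : (Fin m → ℝ) × ℝ → ℝ} (hf : ContDiffOn ℝ ∞ f (U m δ)) :
    Agr m δ n f f :=
  ⟨hf, hf, fun _ _ _ => rfl⟩

lemma Agr.mono {n n' : ℕ} {f g : (Fin m → ℝ) × ℝ → ℝ} (h : Agr m δ n f g) (hn : n' ≤ n) :
    Agr m δ n' f g :=
  ⟨h.1, h.2.1, fun k hk x => h.2.2 k (hk.trans hn) x⟩

lemma Agr.add (hδ : 0 < δ) {n : ℕ} {f₁ f₂ g₁ g₂ : (Fin m → ℝ) × ℝ → ℝ}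
    (h₁ : Agr m δ n f₁ g₁) (h₂ : Agr m δ n f₂ g₂) :
    Agr m δ n (fun z => f₁ z + f₂ z) (fun z => g₁ z + g₂ z) := by
  refine ⟨h₁.1.add h₂.1, h₁.2.1.add h₂.2.1, fun k hk x => ?_⟩
  rw [iter_Dv_add _ h₁.1 h₂.1 k _ (zero_mem_U hδ x),
    iter_Dv_add _ h₁.2.1 h₂.2.1 k _ (zero_mem_U hδ x),
    h₁.2.2 k hk x, h₂.2.2 k hk x]

lemma Agr.shift (hδ : 0 < δ) {n : ℕ} {f g : (Fin m → ℝ) × ℝ → ℝ}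
    (h : Agr m δ (n + 1) f g) : Agr m δ n (Dv (er m) f) (Dv (er m) g) := by
  refine ⟨contDiffOn_Dv _ h.1, contDiffOn_Dv _ h.2.1, fun k hk x => ?_⟩
  rw [← Function.iterate_succ_apply, ← Function.iterate_succ_apply]
  exact h.2.2 (k + 1) (Nat.succ_le_succ hk) x

lemma Agr.mul (hδ : 0 < δ) {n : ℕ} {f₁ f₂ g₁ g₂ : (Fin m → ℝ) × ℝ → ℝ}
    (h₁ : Agr m δ n f₁ g₁) (h₂ : Agr m δ n f₂ g₂) :
    Agr m δ n (fun z => f₁ z * f₂ z) (fun z => g₁ z * g₂ z) := by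
  induction n generalizing f₁ f₂ g₁ g₂ with
  | zero =>
    refine ⟨h₁.1.mul h₂.1, h₁.2.1.mul h₂.2.1, fun k hk x => ?_⟩
    interval_cases k
    show f₁ (x, 0) * f₂ (x, 0) = g₁ (x, 0) * g₂ (x, 0)
    rw [show f₁ (x,0) = g₁ (x,0) from h₁.2.2 0 le_rfl x,
      show f₂ (x,0) = g₂ (x,0) from h₂.2.2 0 le_rfl x]
  | succ n ih =>
    refine ⟨h₁.1.mul h₂.1, h₁.2.1.mul h₂.2.1, fun k hk x => ?_⟩
    match k with
    | 0 =>
      show f₁ (x, 0) * f₂ (x, 0) = g₁ (x, 0) * g₂ (x, 0)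
      rw [show f₁ (x,0) = g₁ (x,0) from h₁.2.2 0 (Nat.zero_le _) x,
        show f₂ (x,0) = g₂ (x,0) from h₂.2.2 0 (Nat.zero_le _) x]
    | (j + 1) =>
      have hj : j ≤ n := Nat.succ_le_succ_iff.1 hk
      rw [Function.iterate_succ_apply, Function.iterate_succ_apply]
      rw [iter_Dv_congr _ (Dv_mul _ h₁.1 h₂.1) j _ (zero_mem_U hδ x)]
      rw [iter_Dv_congr _ (Dv_mul _ h₁.2.1 h₂.2.1) j _ (zero_mem_U hδ x)]
      have hA : Agr m δ n (fun z => Dv (er m) f₁ z * f₂ z) (fun z => Dv (er m) g₁ z * g₂ z) :=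
        ih (h₁.shift hδ) (h₂.mono (Nat.le_succ n))
      have hB : Agr m δ n (fun z => f₁ z * Dv (er m) f₂ z) (fun z => g₁ z * Dv (er m) g₂ z) :=
        ih (h₁.mono (Nat.le_succ n)) (h₂.shift hδ)
      rw [iter_Dv_add _ (hA.1) (hB.1) j _ (zero_mem_U hδ x),
        iter_Dv_add _ (hA.2.1) (hB.2.1) j _ (zero_mem_U hδ x),
        hA.2.2 j hj x, hB.2.2 j hj x]

lemma Agr.sum (hδ : 0 < δ) {n : ℕ} {ι : Type*} (s : Finset ι)
    {f g : ι → (Fin m → ℝ) × ℝ → ℝ} (h : ∀ i ∈ s, Agr m δ n (f i) (g i)) :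
    Agr m δ n (fun z => ∑ i ∈ s, f i z) (fun z => ∑ i ∈ s, g i z) := by
  classical
  induction s using Finset.cons_induction with
  | empty => simpa using Agr.refl contDiffOn_const
  | cons a s ha ih =>
    simp only [Finset.sum_cons]
    exact (h a (Finset.mem_cons_self a s)).add hδ
      (ih (fun i hi => h i (Finset.mem_cons_of_mem hi)))

/-- Agreement passes to `x`-derivatives (mixed-partials swap + equality of boundary slices). -/
lemma Agr.Dx (hδ : 0 < δ) {n : ℕ} {f g : (Fin m → ℝ) × ℝ → ℝ} (h : Agr m δ n f g) (i : Fin m) :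
    Agr m δ n (Dv (Pi.single i 1, 0) f) (Dv (Pi.single i 1, 0) g) := by
  refine ⟨contDiffOn_Dv _ h.1, contDiffOn_Dv _ h.2.1, fun k hk x => ?_⟩
  rw [iter_Dv_comm _ _ h.1 k _ (zero_mem_U hδ x),
    iter_Dv_comm _ _ h.2.1 k _ (zero_mem_U hδ x)]
  have hfk := contDiffOn_iter_Dv (er m) h.1 k
  have hgk := contDiffOn_iter_Dv (er m) h.2.1 k
  rw [← fderiv_slicex (diffAt_of_U hfk (zero_mem_U hδ x)) i,
    ← fderiv_slicex (diffAt_of_U hgk (zero_mem_U hδ x)) i]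
  have : (fun y => (Dv (er m))^[k] f (y, 0)) = (fun y => (Dv (er m))^[k] g (y, 0)) :=
    funext fun y => h.2.2 k hk y
  rw [this]

/-- Derivative of `p.2 * A p` on `U`. -/
lemma Dv_r_mul {A : (Fin m → ℝ) × ℝ → ℝ} (hA : ContDiffOn ℝ ∞ A (U m δ)) :
    ∀ p ∈ U m δ, Dv (er m) (fun z => z.2 * A z) p = A p + p.2 * Dv (er m) A p := by
  have hR : ContDiffOn ℝ ∞ (fun z : (Fin m → ℝ) × ℝ => z.2) (U m δ) :=
    contDiff_snd.contDiffOn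
  intro p hp
  rw [Dv_mul _ hR hA p hp]
  have hDR : Dv (er m) (fun z : (Fin m → ℝ) × ℝ => z.2) p = 1 := by
    show fderiv ℝ (fun z : (Fin m → ℝ) × ℝ => z.2) p (er m) = 1
    rw [fderiv_snd]
    rfl
  rw [hDR, one_mul]

lemma contDiffOn_r_mul {A : (Fin m → ℝ) × ℝ → ℝ} (hA : ContDiffOn ℝ ∞ A (U m δ)) :
    ContDiffOn ℝ ∞ (fun z : (Fin m → ℝ) × ℝ => z.2 * A z) (U m δ) :=
  (contDiff_snd.contDiffOn).mul hA

/-- Iterated derivative of `p.2 * A p` at `r = 0`. -/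
lemma iter_Dv_r_mul (hδ : 0 < δ) :
    ∀ q : ℕ, ∀ A : (Fin m → ℝ) × ℝ → ℝ, ContDiffOn ℝ ∞ A (U m δ) → ∀ x : Fin m → ℝ,
      (Dv (er m))^[q + 1] (fun z => z.2 * A z) (x, 0)
        = (q + 1 : ℝ) * (Dv (er m))^[q] A (x, 0) := by
  intro q
  induction q with
  | zero =>
    intro A hA x
    rw [Function.iterate_one]
    rw [Dv_r_mul hA _ (zero_mem_U hδ x)]
    norm_num
  | succ q ih =>
    intro A hA x
    rw [Function.iterate_succ_apply]
    rw [iter_Dv_congr _ (Dv_r_mul hA) (q + 1) _ (zero_mem_U hδ x)]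
    rw [iter_Dv_add _ hA (contDiffOn_r_mul (contDiffOn_Dv _ hA)) (q + 1) _ (zero_mem_U hδ x)]
    rw [ih (Dv (er m) A) (contDiffOn_Dv _ hA) x]
    rw [← Function.iterate_succ_apply]
    push_cast
    ring

/-- A smooth function vanishing on the half-strip `0 ≤ r < δ` has all its
iterated `r`-derivatives vanishing there as well. -/
lemma iter_Dv_vanish {F : (Fin m → ℝ) × ℝ → ℝ} (hF : ContDiffOn ℝ ∞ F (U m δ))
    (h0 : ∀ x : Fin m → ℝ, ∀ r : ℝ, 0 ≤ r → r < δ → F (x, r) = 0) :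
    ∀ q : ℕ, ∀ x : Fin m → ℝ, ∀ r : ℝ, 0 ≤ r → r < δ →
      (Dv (er m))^[q] F (x, r) = 0 := by
  intro q
  induction q with
  | zero => exact h0
  | succ q ih =>
    intro x r hr0 hrδ
    have hrU : ((x, r) : (Fin m → ℝ) × ℝ) ∈ U m δ := by
      simp only [mem_U_iff, abs_of_nonneg hr0]; exact hrδ
    have hG : ContDiffOn ℝ ∞ ((Dv (er m))^[q] F) (U m δ) := contDiffOn_iter_Dv _ hF q
    rw [Function.iterate_succ_apply']
    have hd : HasDerivAt (fun s => (Dv (er m))^[q] F (x, s))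
        (Dv (er m) ((Dv (er m))^[q] F) (x, r)) r := hasDerivAt_slice (diffAt_of_U hG hrU)
    have hd' : HasDerivWithinAt (fun s => (Dv (er m))^[q] F (x, s))
        (Dv (er m) ((Dv (er m))^[q] F) (x, r)) (Set.Ico r δ) r := hd.hasDerivWithinAt
    have hz : HasDerivWithinAt (fun _ : ℝ => (0 : ℝ))
        (Dv (er m) ((Dv (er m))^[q] F) (x, r)) (Set.Ico r δ) r := by
      apply hd'.congr
      · intro s hs
        exact (ih x s (hr0.trans hs.1) hs.2).symm
      · exact (ih x r hr0 hrδ).symm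
    have hu : UniqueDiffWithinAt ℝ (Set.Ico r δ) r :=
      uniqueDiffOn_Ico r δ r ⟨le_rfl, hrδ⟩
    have := hz.derivWithin hu
    rw [derivWithin_fun_const] at this
    exact this.symm

/-- Conversion: iterated one-dimensional derivative of a slice equals the iterated
directional derivative. -/
lemma iteratedDeriv_congr_nhds {f g : ℝ → ℝ} {r : ℝ} (h : f =ᶠ[nhds r] g) (q : ℕ) :
    iteratedDeriv q f r = iteratedDeriv q g r := by
  induction q generalizing f g with
  | zero => exact h.eq_of_nhds
  | succ q ih =>
    rw [iteratedDeriv_succ', iteratedDeriv_succ']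
    exact ih h.deriv

lemma iteratedDeriv_slice {f : (Fin m → ℝ) × ℝ → ℝ} (hf : ContDiffOn ℝ ∞ f (U m δ))
    (x : Fin m → ℝ) :
    ∀ q : ℕ, ∀ r : ℝ, |r| < δ →
      iteratedDeriv q (fun s => f (x, s)) r = (Dv (er m))^[q] f (x, r) := by
  intro q
  induction q generalizing f with
  | zero => intro r _; rfl
  | succ q ih =>
    intro r hr
    rw [iteratedDeriv_succ']
    have hopen : IsOpen {s : ℝ | |s| < δ} := isOpen_lt (continuous_abs) continuous_const
    have hev : deriv (fun s => f (x, s)) =ᶠ[nhds r] (fun s => Dv (er m) f (x, s)) := by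
      filter_upwards [hopen.mem_nhds hr] with s hs
      exact deriv_slice (diffAt_of_U hf hs)
    rw [iteratedDeriv_congr_nhds hev q]
    rw [ih (contDiffOn_Dv _ hf) r hr]
    rw [← Function.iterate_succ_apply]

/-- The nonlinearity `ω_r² + |d_xω|²_G`, written via directional derivatives. -/
noncomputable def Hfun (G : (Fin m → ℝ) × ℝ → Matrix (Fin m) (Fin m) ℝ)
    (f : (Fin m → ℝ) × ℝ → ℝ) (p : (Fin m → ℝ) × ℝ) : ℝ :=
  Dv (er m) f p * Dv (er m) f p
    + ∑ i, Dv (Pi.single i 1, 0) f p * (∑ j, G p i j * Dv (Pi.single j 1, 0) f p)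

lemma contDiffOn_Hfun {G : (Fin m → ℝ) × ℝ → Matrix (Fin m) (Fin m) ℝ}
    (hG : ∀ i j : Fin m, ContDiffOn ℝ ∞ (fun p => G p i j) (U m δ))
    {f : (Fin m → ℝ) × ℝ → ℝ} (hf : ContDiffOn ℝ ∞ f (U m δ)) :
    ContDiffOn ℝ ∞ (Hfun G f) (U m δ) :=
  ((contDiffOn_Dv _ hf).mul (contDiffOn_Dv _ hf)).add
    (ContDiffOn.sum fun i _ => (contDiffOn_Dv _ hf).mul
      (ContDiffOn.sum fun j _ => (hG i j).mul (contDiffOn_Dv _ hf)))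

lemma agr_Hfun (hδ : 0 < δ) {G : (Fin m → ℝ) × ℝ → Matrix (Fin m) (Fin m) ℝ}
    (hG : ∀ i j : Fin m, ContDiffOn ℝ ∞ (fun p => G p i j) (U m δ))
    {n : ℕ} {f g : (Fin m → ℝ) × ℝ → ℝ} (h : Agr m δ (n + 1) f g) :
    Agr m δ n (Hfun G f) (Hfun G g) := by
  have hn : n ≤ n + 1 := Nat.le_succ n
  exact ((h.shift hδ).mul hδ (h.shift hδ)).add hδ
    (Agr.sum hδ Finset.univ fun i _ =>
      (((h.mono hn).Dx hδ i).mul hδ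
        (Agr.sum hδ Finset.univ fun j _ =>
          (Agr.refl (hG i j)).mul hδ ((h.mono hn).Dx hδ j))))

/-- Master identity: differentiating the PDE `q` times at `r = 0`. -/
lemma master (hδ : 0 < δ) {G : (Fin m → ℝ) × ℝ → Matrix (Fin m) (Fin m) ℝ}
    (hG : ∀ i j : Fin m, ContDiffOn ℝ ∞ (fun p => G p i j) (U m δ))
    {f : (Fin m → ℝ) × ℝ → ℝ} (hf : ContDiffOn ℝ ∞ f (U m δ))
    (hpde : ∀ (x : Fin m → ℝ) (r : ℝ), 0 ≤ r → r < δ →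
      2 * deriv (fun s => f (x, s)) r
        + r * ((deriv (fun s => f (x, s)) r) ^ 2
            + dotProduct (gradx f (x, r)) (G (x, r) *ᵥ gradx f (x, r))) = 0)
    (q : ℕ) (x : Fin m → ℝ) :
    2 * (Dv (er m))^[q + 1] f (x, 0)
      + (Dv (er m))^[q] (fun z => z.2 * Hfun G f z) (x, 0) = 0 := by
  have hHsm : ContDiffOn ℝ ∞ (Hfun G f) (U m δ) := contDiffOn_Hfun hG hf
  have hsm1 : ContDiffOn ℝ ∞ (fun z => 2 * Dv (er m) f z) (U m δ) :=
    contDiffOn_const.mul (contDiffOn_Dv _ hf)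
  have hsm2 : ContDiffOn ℝ ∞ (fun z : (Fin m → ℝ) × ℝ => z.2 * Hfun G f z) (U m δ) :=
    contDiffOn_r_mul hHsm
  have hF0 : ∀ (x : Fin m → ℝ) (r : ℝ), 0 ≤ r → r < δ →
      (fun p : (Fin m → ℝ) × ℝ => 2 * Dv (er m) f p + p.2 * Hfun G f p) (x, r) = 0 := by
    intro x r hr0 hrδ
    have hrU : ((x, r) : (Fin m → ℝ) × ℝ) ∈ U m δ := by
      simp only [mem_U_iff, abs_of_nonneg hr0]; exact hrδ
    have hd := diffAt_of_U hf hrU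
    have := hpde x r hr0 hrδ
    rw [deriv_slice hd, gradx_eq hd] at this
    simp only [dotProduct, Matrix.mulVec] at this
    show 2 * Dv (er m) f (x, r) + r * Hfun G f (x, r) = 0
    simp only [Hfun, er]
    linear_combination this
  have hvan := iter_Dv_vanish (hsm1.add hsm2) hF0 q x 0 le_rfl hδ
  have e1 : (Dv (er m))^[q]
        (fun p : (Fin m → ℝ) × ℝ => 2 * Dv (er m) f p + p.2 * Hfun G f p) (x, 0)
      = (Dv (er m))^[q] (fun z => 2 * Dv (er m) f z) (x, 0)
        + (Dv (er m))^[q] (fun z : (Fin m → ℝ) × ℝ => z.2 * Hfun G f z) (x, 0) :=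
    iter_Dv_add (er m) hsm1 hsm2 q _ (zero_mem_U hδ x)
  have e2 : (Dv (er m))^[q] (fun z => 2 * Dv (er m) f z) (x, 0)
      = 2 * (Dv (er m))^[q] (Dv (er m) f) (x, 0) :=
    iter_Dv_const_mul (er m) 2 (contDiffOn_Dv _ hf) q _ (zero_mem_U hδ x)
  rw [e1, e2, ← Function.iterate_succ_apply] at hvan
  exact hvan

end GW8
/-- Graham–Witten, proof of Lemma 2: the PDE `2ω_r + r(ω_r² + |d_xω|²_G) = 0` determines
all `r`-derivatives of `ω` at `r = 0` from the boundary value `ω|_{r=0}`. -/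
theorem stmt_8
    (m : ℕ) (hm : 1 ≤ m) (δ : ℝ) (hδ : 0 < δ)
    (G : (Fin m → ℝ) × ℝ → Matrix (Fin m) (Fin m) ℝ)
    (hG_smooth : ∀ i j : Fin m, ContDiffOn ℝ (⊤ : ℕ∞) (fun p => G p i j)
      {p : (Fin m → ℝ) × ℝ | |p.2| < δ})
    (hG_symm : ∀ p : (Fin m → ℝ) × ℝ, |p.2| < δ → (G p).IsSymm)
    (ω ω' : (Fin m → ℝ) × ℝ → ℝ)
    (hω_smooth : ContDiffOn ℝ (⊤ : ℕ∞) ω {p : (Fin m → ℝ) × ℝ | |p.2| < δ})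
    (hω'_smooth : ContDiffOn ℝ (⊤ : ℕ∞) ω' {p : (Fin m → ℝ) × ℝ | |p.2| < δ})
    (hPDE : ∀ (x : Fin m → ℝ) (r : ℝ), 0 ≤ r → r < δ →
      2 * deriv (fun s => ω (x, s)) r
        + r * ((deriv (fun s => ω (x, s)) r) ^ 2
            + dotProduct (gradx ω (x, r)) (G (x, r) *ᵥ gradx ω (x, r))) = 0)
    (hPDE' : ∀ (x : Fin m → ℝ) (r : ℝ), 0 ≤ r → r < δ →
      2 * deriv (fun s => ω' (x, s)) r
        + r * ((deriv (fun s => ω' (x, s)) r) ^ 2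
            + dotProduct (gradx ω' (x, r)) (G (x, r) *ᵥ gradx ω' (x, r))) = 0)
    (hbdry : ∀ x : Fin m → ℝ, ω (x, 0) = ω' (x, 0)) :
    ∀ (q : ℕ) (x : Fin m → ℝ),
      iteratedDeriv q (fun r => ω (x, r)) 0 = iteratedDeriv q (fun r => ω' (x, r)) 0 := by
  have hω : ContDiffOn ℝ ((⊤:ℕ∞) : WithTop ℕ∞) ω (GW8.U m δ) := hω_smooth.of_le (by simp)
  have hω' : ContDiffOn ℝ ((⊤:ℕ∞) : WithTop ℕ∞) ω' (GW8.U m δ) := hω'_smooth.of_le (by simp)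
  have hG : ∀ i j : Fin m, ContDiffOn ℝ ((⊤:ℕ∞) : WithTop ℕ∞) (fun p => G p i j) (GW8.U m δ) :=
    fun i j => (hG_smooth i j).of_le (by simp)
  have key : ∀ q k : ℕ, k ≤ q → ∀ x : Fin m → ℝ,
      (GW8.Dv (GW8.er m))^[k] ω (x, 0) = (GW8.Dv (GW8.er m))^[k] ω' (x, 0) := by
    intro q
    induction q with
    | zero =>
      intro k hk x
      obtain rfl := Nat.le_zero.mp hk
      exact hbdry x
    | succ q ih =>
      intro k hk x
      by_cases hk' : k ≤ q
      · exact ih k hk' x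
      · have hkq : k = q + 1 := by omega
        subst hkq
        rcases q with _ | n
        · have hmω := GW8.master hδ hG hω hPDE 0 x
          have hmω' := GW8.master hδ hG hω' hPDE' 0 x
          simp only [Function.iterate_zero_apply] at hmω hmω'
          norm_num at hmω hmω'
          show GW8.Dv (GW8.er m) ω (x, 0) = GW8.Dv (GW8.er m) ω' (x, 0)
          rw [hmω, hmω']
        · have hmω := GW8.master hδ hG hω hPDE (n + 1) x
          have hmω' := GW8.master hδ hG hω' hPDE' (n + 1) x
          rw [GW8.iter_Dv_r_mul hδ n (GW8.Hfun G ω) (GW8.contDiffOn_Hfun hG hω) x] at hmω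
          rw [GW8.iter_Dv_r_mul hδ n (GW8.Hfun G ω') (GW8.contDiffOn_Hfun hG hω') x] at hmω'
          have hAgr : GW8.Agr m δ (n + 1) ω ω' := ⟨hω, hω', fun k hk x => ih k hk x⟩
          have hH := GW8.agr_Hfun hδ hG hAgr
          rw [hH.2.2 n le_rfl x] at hmω
          linarith
  intro q x
  have h0 : |(0 : ℝ)| < δ := by simpa using hδ
  rw [GW8.iteratedDeriv_slice hω x q 0 h0, GW8.iteratedDeriv_slice hω' x q 0 h0]
  exact key q q le_rfl x
end

section
/- Let k ∈ ℕ, m ≥ 1, and δ > 0. Let ω : ℝᵐ × (−δ, δ) → ℝ be smooth with ∂_r^q ω(x,0) = 0 for every x ∈ ℝᵐ and every odd q with q ≤ k+1. Then for every x₀ ∈ ℝᵐ there exist an open neighborhood V of x₀ in ℝᵐ, δ' > 0, and a smooth function b : V × (−δ', δ') → (0, ∞) such that for all x ∈ V and 0 ≤ s < δ', the number r := s·b(x,s) satisfies r·e^{ω(x,r)} = s, and such that ∂_s^q b(x,0) = 0 for every x ∈ V and every odd q with q ≤ k+1. -/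
open Filter Set Asymptotics Topology

set_option linter.unusedSectionVars false
set_option linter.unreachableTactic false
set_option linter.unusedTactic false
set_option linter.deprecated false
set_option maxHeartbeats 1000000

noncomputable section AuxGW9

namespace AuxGW9

variable {P : Type*} [NormedAddCommGroup P] [NormedSpace ℝ P] [CompleteSpace P]

lemma apply_decomp (L : P × ℝ →L[ℝ] ℝ) (u : P) (v : ℝ) :
    L (u, v) = L (u, 0) + v * L (0, 1) := by
  have h : (u, v) = (u, (0:ℝ)) + v • ((0:P), (1:ℝ)) := by
    simp [Prod.ext_iff]
  rw [h, map_add, map_smul, smul_eq_mul]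

/-- Lower-triangular continuous linear equiv `(u,v) ↦ (u, L (u,v))`. -/
def triang (L : P × ℝ →L[ℝ] ℝ) (hd : L (0, 1) ≠ 0) : (P × ℝ) ≃L[ℝ] (P × ℝ) :=
  ContinuousLinearEquiv.equivOfInverse
    ((ContinuousLinearMap.fst ℝ P ℝ).prod L)
    ((ContinuousLinearMap.fst ℝ P ℝ).prod ((L (0, 1))⁻¹ •
      (ContinuousLinearMap.snd ℝ P ℝ - L.comp ((ContinuousLinearMap.inl ℝ P ℝ).comp (ContinuousLinearMap.fst ℝ P ℝ)))))
    (fun q => by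
      ext
      · rfl
      · simp only [ContinuousLinearMap.prod_apply, ContinuousLinearMap.coe_fst',
          ContinuousLinearMap.smul_apply, ContinuousLinearMap.sub_apply,
          ContinuousLinearMap.coe_snd', ContinuousLinearMap.coe_comp',
          Function.comp_apply, ContinuousLinearMap.inl_apply, smul_eq_mul]
        rw [apply_decomp L q.1 q.2]
        ring_nf
        field_simp)
    (fun q => by
      ext
      · rfl
      · simp only [ContinuousLinearMap.prod_apply, ContinuousLinearMap.coe_fst',
          ContinuousLinearMap.smul_apply, ContinuousLinearMap.sub_apply,
          ContinuousLinearMap.coe_snd', ContinuousLinearMap.coe_comp',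
          Function.comp_apply, ContinuousLinearMap.inl_apply, smul_eq_mul]
        rw [apply_decomp L q.1 ((L (0,1))⁻¹ * (q.2 - L (q.1, 0)))]
        field_simp
        ring)

@[simp] lemma triang_coe (L : P × ℝ →L[ℝ] ℝ) (hd : L (0, 1) ≠ 0) :
    (triang L hd : (P × ℝ) →L[ℝ] (P × ℝ)) = (ContinuousLinearMap.fst ℝ P ℝ).prod L := rfl

theorem implicit
    (F : P × ℝ → ℝ) (U : Set (P × ℝ)) (hU : IsOpen U)
    (hF : ContDiffOn ℝ (⊤ : ℕ∞) F U)
    (D : P × ℝ → ℝ) (hD : ContinuousOn D U)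
    (hder : ∀ q ∈ U, HasDerivAt (fun c => F (q.1, c)) (D q) q.2)
    (p₀ : P) (c₀ : ℝ) (h₀ : (p₀, c₀) ∈ U) (hF₀ : F (p₀, c₀) = 0) (hD₀ : D (p₀, c₀) ≠ 0)
    (ε₀ : ℝ) (hε₀ : 0 < ε₀) :
    ∃ (Ω : Set P) (ε : ℝ) (φ : P → ℝ), IsOpen Ω ∧ p₀ ∈ Ω ∧ 0 < ε ∧ ε ≤ ε₀ ∧
      (∀ p ∈ Ω, ContDiffAt ℝ (⊤ : ℕ∞) φ p) ∧
      (∀ p ∈ Ω, (p, φ p) ∈ U) ∧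
      (∀ p ∈ Ω, F (p, φ p) = 0) ∧
      (∀ p ∈ Ω, |φ p - c₀| < ε) ∧
      (∀ p ∈ Ω, ∀ c, |c - c₀| < ε → F (p, c) = 0 → c = φ p) := by
  classical
  -- the set where the partial derivative does not vanish
  set U' : Set (P × ℝ) := U ∩ D ⁻¹' ({0}ᶜ) with hU'def
  have hU' : IsOpen U' := hD.isOpen_inter_preimage hU isOpen_compl_singleton
  have h₀' : (p₀, c₀) ∈ U' := ⟨h₀, by simpa using hD₀⟩
  -- smoothness facts
  have hFat : ∀ q ∈ U, ContDiffAt ℝ (⊤ : ℕ∞) F q := fun q hq => hF.contDiffAt (hU.mem_nhds hq)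
  have hFdiff : ∀ q ∈ U, DifferentiableAt ℝ F q := fun q hq =>
    (hFat q hq).differentiableAt (by simp)
  -- the partial derivative in the last variable coincides with `D`
  have keyval : ∀ q ∈ U, fderiv ℝ F q (0, 1) = D q := by
    intro q hq
    have hline : HasDerivAt (fun c : ℝ => ((q.1 : P), c)) ((0 : P), (1 : ℝ)) q.2 :=
      (hasDerivAt_const _ _).prodMk (hasDerivAt_id _)
    have h1 : HasDerivAt (fun c : ℝ => F (q.1, c)) (fderiv ℝ F q (0, 1)) q.2 := by
      have := ((hFdiff q hq).hasFDerivAt).comp_hasDerivAt q.2 hline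
      exact this
    exact h1.unique (hder q hq)
  -- the auxiliary map G
  set G : P × ℝ → P × ℝ := fun q => (q.1, F q) with hGdef
  have hGat : ∀ q ∈ U, ContDiffAt ℝ (⊤ : ℕ∞) G q := fun q hq =>
    (contDiffAt_fst).prodMk (hFat q hq)
  have hdval : ∀ q ∈ U', fderiv ℝ F q (0, 1) ≠ 0 := by
    intro q hq
    rw [keyval q hq.1]
    simpa using hq.2
  have hGder : ∀ (q : P × ℝ) (hq : q ∈ U'), HasFDerivAt G
      ((triang (fderiv ℝ F q) (hdval q hq) : (P × ℝ) ≃L[ℝ] (P × ℝ)) : (P × ℝ) →L[ℝ] (P × ℝ)) q := by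
    intro q hq
    rw [triang_coe]
    exact (hasFDerivAt_fst).prodMk ((hFdiff q hq.1).hasFDerivAt)
  -- the local homeomorphism given by the inverse function theorem at the base point
  have hstrict : HasStrictFDerivAt G
      ((triang (fderiv ℝ F (p₀, c₀)) (hdval _ h₀') : (P × ℝ) ≃L[ℝ] (P × ℝ)) :
        (P × ℝ) →L[ℝ] (P × ℝ)) (p₀, c₀) :=
    (hGat _ h₀).hasStrictFDerivAt' (hGder _ h₀') (by simp)
  set Ψ : OpenPartialHomeomorph (P × ℝ) (P × ℝ) := hstrict.toOpenPartialHomeomorph G with hΨdef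
  have hΨcoe : ∀ q, Ψ q = G q := fun q => rfl
  have hq₀s : (p₀, c₀) ∈ Ψ.source := hstrict.mem_toOpenPartialHomeomorph_source
  have hGq₀ : G (p₀, c₀) = (p₀, 0) := by simp [hGdef, hF₀]
  have htarget : (p₀, (0 : ℝ)) ∈ Ψ.target := by
    have := hstrict.image_mem_toOpenPartialHomeomorph_target
    rwa [show G (p₀, c₀) = (p₀, 0) from hGq₀] at this
  have hsymm₀ : Ψ.symm (p₀, 0) = (p₀, c₀) := by
    have := Ψ.left_inv hq₀s
    rwa [show Ψ (p₀, c₀) = (p₀, 0) from hGq₀] at this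
  -- good region in the target
  set W : Set (P × ℝ) := Ψ.target ∩ Ψ.symm ⁻¹' (U' ∩ Ψ.source) with hWdef
  have hWopen : IsOpen W :=
    Ψ.continuousOn_symm.isOpen_inter_preimage Ψ.open_target (hU'.inter Ψ.open_source)
  have hW₀ : (p₀, (0 : ℝ)) ∈ W := by
    refine ⟨htarget, ?_⟩
    rw [mem_preimage, hsymm₀]
    exact ⟨h₀', hq₀s⟩
  -- the implicit function
  set φ : P → ℝ := fun p => (Ψ.symm (p, 0)).2 with hφdef
  -- basic facts about points of W
  have hWfact : ∀ p : P, (p, (0:ℝ)) ∈ W →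
      (p, φ p) = Ψ.symm (p, 0) ∧ (p, φ p) ∈ U' ∧ (p, φ p) ∈ Ψ.source ∧ F (p, φ p) = 0 := by
    intro p hp
    have hst : Ψ.symm (p, 0) ∈ U' ∩ Ψ.source := hp.2
    have hret : G (Ψ.symm (p, 0)) = (p, 0) := by
      have := Ψ.right_inv hp.1
      rwa [hΨcoe] at this
    have hfst : (Ψ.symm (p, 0)).1 = p := congrArg Prod.fst hret
    have heq : (p, φ p) = Ψ.symm (p, 0) := by
      rw [hφdef]
      exact Prod.ext hfst.symm rfl
    have hFval : F (p, φ p) = 0 := by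
      rw [heq]
      have := congrArg Prod.snd hret
      simpa [hGdef] using this
    exact ⟨heq, heq ▸ hst.1, heq ▸ hst.2, hFval⟩
  -- Ω₂ : points p with (p,0) ∈ W
  set ι : P → P × ℝ := fun p => (p, (0:ℝ)) with hιdef
  have hιcont : Continuous ι := continuous_id.prodMk continuous_const
  set Ω₂ : Set P := ι ⁻¹' W with hΩ₂def
  have hΩ₂open : IsOpen Ω₂ := hWopen.preimage hιcont
  have hp₀Ω₂ : p₀ ∈ Ω₂ := hW₀
  have hφcont : ContinuousOn φ Ω₂ := by
    apply continuous_snd.comp_continuousOn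
    apply Ψ.continuousOn_symm.comp hιcont.continuousOn
    intro p hp
    exact hp.1
  -- product neighborhood inside the source
  obtain ⟨Ω₁, v, hΩ₁open, hvopen, hp₀Ω₁, hc₀v, hprod⟩ :=
    isOpen_prod_iff.1 Ψ.open_source p₀ c₀ hq₀s
  obtain ⟨ε₁, hε₁, hball⟩ := Metric.isOpen_iff.1 hvopen c₀ hc₀v
  set ε : ℝ := min (min ε₁ ε₀) (ε₀ / 2) with hεdef
  have hεpos : 0 < ε := by positivity
  have hεle₀ : ε ≤ ε₀ := le_trans (min_le_left _ _) (min_le_right _ _)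
  have hεle₁ : ε ≤ ε₁ := le_trans (min_le_left _ _) (min_le_left _ _)
  -- final open set
  set A : Set P := Ω₂ ∩ φ ⁻¹' (Metric.ball c₀ ε) with hAdef
  have hAopen : IsOpen A := hφcont.isOpen_inter_preimage hΩ₂open Metric.isOpen_ball
  set Ω : Set P := Ω₁ ∩ A with hΩdef
  have hΩopen : IsOpen Ω := hΩ₁open.inter hAopen
  have hφp₀ : φ p₀ = c₀ := by show (Ψ.symm (p₀, 0)).2 = c₀; rw [hsymm₀]
  have hp₀Ω : p₀ ∈ Ω := by
    refine ⟨hp₀Ω₁, hp₀Ω₂, ?_⟩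
    simp [hφp₀, hεpos]
  have hmemW : ∀ p ∈ Ω, (p, (0:ℝ)) ∈ W := fun p hp => hp.2.1
  refine ⟨Ω, ε, φ, hΩopen, hp₀Ω, hεpos, hεle₀, ?_, ?_, ?_, ?_, ?_⟩
  · -- smoothness
    intro p hp
    obtain ⟨heq, hqU', hqsrc, -⟩ := hWfact p (hmemW p hp)
    have hsymm_smooth : ContDiffAt ℝ (⊤ : ℕ∞) Ψ.symm (p, 0) := by
      apply Ψ.contDiffAt_symm (hmemW p hp).1 (f₀' := triang (fderiv ℝ F (Ψ.symm (p, 0)))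
        (hdval _ (heq ▸ hqU')))
      · exact hGder _ (heq ▸ hqU')
      · exact hGat _ (heq ▸ hqU').1
    have hι_smooth : ContDiffAt ℝ (⊤ : ℕ∞) ι p := contDiffAt_id.prodMk contDiffAt_const
    exact contDiffAt_snd.comp p (hsymm_smooth.comp p hι_smooth)
  · -- membership in U
    intro p hp
    exact (hWfact p (hmemW p hp)).2.1.1
  · -- equation
    intro p hp
    exact (hWfact p (hmemW p hp)).2.2.2
  · -- nearness
    intro p hp
    have : φ p ∈ Metric.ball c₀ ε := hp.2.2
    simpa [Real.dist_eq] using this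
  · -- uniqueness
    intro p hp c hc hFc
    have hcsrc : (p, c) ∈ Ψ.source := by
      apply hprod
      refine ⟨hp.1, hball ?_⟩
      simp only [Metric.mem_ball, Real.dist_eq]
      exact lt_of_lt_of_le hc hεle₁
    obtain ⟨heq, hqU', hqsrc, hF0⟩ := hWfact p (hmemW p hp)
    have hGeq : G (p, c) = G (p, φ p) := by
      simp [hGdef, hFc, hF0]
    have := Ψ.injOn hcsrc hqsrc (by rw [hΨcoe, hΨcoe]; exact hGeq)
    exact congrArg Prod.snd this




lemma iteratedDerivWithin_eq_iteratedDeriv_of_isOpen {f : ℝ → ℝ} {s : Set ℝ} (hs : IsOpen s)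
    {x : ℝ} (hx : x ∈ s) (n : ℕ) :
    iteratedDerivWithin n f s x = iteratedDeriv n f x := by
  simp only [iteratedDerivWithin, iteratedDeriv, iteratedFDerivWithin_of_isOpen n hs hx]

lemma iteratedDeriv_sub_local {f g : ℝ → ℝ} {ε : ℝ} (hε : 0 < ε)
    (hf : ContDiffOn ℝ (⊤ : ℕ∞) f (Ioo (-ε) ε)) (hg : ContDiffOn ℝ (⊤ : ℕ∞) g (Ioo (-ε) ε)) (n : ℕ) :
    iteratedDeriv n (fun t => f t - g t) 0 = iteratedDeriv n f 0 - iteratedDeriv n g 0 := by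
  have hx : (0:ℝ) ∈ Ioo (-ε) ε := by constructor <;> simp [hε] <;> linarith
  have hu : UniqueDiffOn ℝ (Ioo (-ε) ε) := isOpen_Ioo.uniqueDiffOn
  have h1 := iteratedDerivWithin_sub hx hu ((hf.of_le (by exact_mod_cast le_top) : ContDiffOn ℝ n f _) 0 hx)
    ((hg.of_le (by exact_mod_cast le_top) : ContDiffOn ℝ n g _) 0 hx)
  rw [iteratedDerivWithin_eq_iteratedDeriv_of_isOpen isOpen_Ioo hx,
    iteratedDerivWithin_eq_iteratedDeriv_of_isOpen isOpen_Ioo hx,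
    iteratedDerivWithin_eq_iteratedDeriv_of_isOpen isOpen_Ioo hx] at h1
  · rw [← h1]
    congr 1

lemma iteratedDeriv_const_mul_local {f : ℝ → ℝ} {ε : ℝ} (hε : 0 < ε)
    (hf : ContDiffOn ℝ (⊤ : ℕ∞) f (Ioo (-ε) ε)) (c : ℝ) (n : ℕ) :
    iteratedDeriv n (fun t => c * f t) 0 = c * iteratedDeriv n f 0 := by
  have hx : (0:ℝ) ∈ Ioo (-ε) ε := by constructor <;> simp [hε]
  have hu : UniqueDiffOn ℝ (Ioo (-ε) ε) := isOpen_Ioo.uniqueDiffOn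
  have h1 := iteratedDerivWithin_const_mul hx hu c ((hf.of_le (by exact_mod_cast le_top) : ContDiffOn ℝ n f _) 0 hx)
  rwa [iteratedDerivWithin_eq_iteratedDeriv_of_isOpen isOpen_Ioo hx,
    iteratedDerivWithin_eq_iteratedDeriv_of_isOpen isOpen_Ioo hx] at h1

lemma iteratedDeriv_monomial (q : ℕ) : ∀ (p : ℕ) (t : ℝ),
    iteratedDeriv q (fun t : ℝ => t ^ p) t = (p.descFactorial q : ℝ) * t ^ (p - q) := by
  induction q with
  | zero => intro p t; simp
  | succ q ih =>
    intro p t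
    rw [iteratedDeriv_succ']
    have hderiv : deriv (fun t : ℝ => t ^ p) = fun t : ℝ => (p : ℝ) * t ^ (p - 1) := by
      funext u
      exact deriv_pow_field p
    rw [hderiv]
    have hcd : ContDiffOn ℝ q (fun t : ℝ => t ^ (p - 1)) univ :=
      (contDiff_id.pow _).contDiffOn
    have hcm : iteratedDeriv q (fun t : ℝ => (p : ℝ) * t ^ (p - 1)) t
        = (p : ℝ) * iteratedDeriv q (fun t : ℝ => t ^ (p - 1)) t := by
      rw [← iteratedDerivWithin_univ, ← iteratedDerivWithin_univ]
      exact iteratedDerivWithin_const_mul (mem_univ t) uniqueDiffOn_univ (p : ℝ) (hcd t (mem_univ t))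
    rw [hcm, ih (p - 1) t]
    rcases Nat.eq_zero_or_pos p with hp | hp
    · subst hp; simp
    · obtain ⟨p', rfl⟩ := Nat.exists_eq_succ_of_ne_zero hp.ne'
      rw [Nat.succ_descFactorial_succ]
      push_cast
      ring

lemma peano_forward {ε : ℝ} (hε : 0 < ε) :
    ∀ (n : ℕ) (f : ℝ → ℝ), ContDiffOn ℝ (⊤ : ℕ∞) f (Ioo (-ε) ε) →
      (∀ q ≤ n, iteratedDeriv q f 0 = 0) → f =o[𝓝 (0:ℝ)] fun t => t ^ n := by
  intro n
  have h0 : (0:ℝ) ∈ Ioo (-ε) ε := ⟨by linarith, hε⟩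
  induction n with
  | zero =>
    intro f hf hd
    have hc : ContinuousAt f 0 := (hf.contDiffAt (isOpen_Ioo.mem_nhds h0)).continuousAt
    have hf0 : f 0 = 0 := by simpa using hd 0 le_rfl
    have ht : Tendsto f (𝓝 0) (𝓝 0) := by have := hc.tendsto; rwa [hf0] at this
    have := (Asymptotics.isLittleO_one_iff ℝ).2 ht
    simpa [pow_zero] using this
  | succ n IH =>
    intro f hf hd
    have hf0 : f 0 = 0 := by simpa using hd 0 (by omega)
    have hderiv_smooth : ContDiffOn ℝ (⊤ : ℕ∞) (deriv f) (Ioo (-ε) ε) :=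
      hf.deriv_of_isOpen isOpen_Ioo (by simp)
    have hd' : ∀ q ≤ n, iteratedDeriv q (deriv f) 0 = 0 := by
      intro q hq
      rw [← iteratedDeriv_succ']
      exact hd (q + 1) (by omega)
    have hIH := IH (deriv f) hderiv_smooth hd'
    rw [isLittleO_iff] at hIH ⊢
    intro c hc
    have h1 := (hIH hc).and (isOpen_Ioo.eventually_mem h0)
    rw [Metric.eventually_nhds_iff] at h1
    obtain ⟨η, hη, hball⟩ := h1
    have hev : ∀ᶠ t in 𝓝 (0:ℝ), |t| < η := by
      have := Metric.ball_mem_nhds (0:ℝ) hη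
      filter_upwards [this] with t ht
      simpa [Real.dist_eq] using ht
    filter_upwards [hev] with t ht
    -- mean value inequality on the closed ball of radius |t|
    have hsub : Metric.closedBall (0:ℝ) |t| ⊆ Metric.ball (0:ℝ) η := by
      intro u hu
      simp only [Metric.mem_closedBall, Metric.mem_ball, Real.dist_eq, sub_zero] at hu ⊢
      linarith
    have hmem : ∀ u ∈ Metric.closedBall (0:ℝ) |t|, u ∈ Ioo (-ε) ε ∧ ‖deriv f u‖ ≤ c * ‖u ^ n‖ := by
      intro u hu
      have := hball (show dist u 0 < η by
        simpa [Real.dist_eq] using hsub hu)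
      exact ⟨this.2, this.1⟩
    have hder : ∀ u ∈ Metric.closedBall (0:ℝ) |t|,
        HasDerivWithinAt f (deriv f u) (Metric.closedBall (0:ℝ) |t|) u := by
      intro u hu
      have hd : DifferentiableAt ℝ f u :=
        (hf.contDiffAt (isOpen_Ioo.mem_nhds (hmem u hu).1)).differentiableAt (by simp)
      exact hd.hasDerivAt.hasDerivWithinAt
    have hbound : ∀ u ∈ Metric.closedBall (0:ℝ) |t|, ‖deriv f u‖ ≤ c * |t| ^ n := by
      intro u hu
      refine le_trans (hmem u hu).2 ?_
      have hu' : |u| ≤ |t| := by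
        simpa [Real.dist_eq] using hu
      have : ‖u ^ n‖ ≤ |t| ^ n := by
        rw [Real.norm_eq_abs, abs_pow]
        exact pow_le_pow_left₀ (abs_nonneg u) hu' n
      nlinarith [this, le_of_lt hc]
    have hmvt := Convex.norm_image_sub_le_of_norm_hasDerivWithin_le hder hbound
      (convex_closedBall _ _) (Metric.mem_closedBall_self (abs_nonneg t))
      (show t ∈ Metric.closedBall (0:ℝ) |t| by simp [Metric.mem_closedBall, Real.dist_eq])
    rw [hf0, sub_zero, sub_zero] at hmvt
    calc ‖f t‖ ≤ c * |t| ^ n * ‖t‖ := hmvt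
    _ = c * ‖t ^ (n+1)‖ := by
        rw [Real.norm_eq_abs, Real.norm_eq_abs, abs_pow, pow_succ]
        ring

lemma peano_reverse {ε : ℝ} (hε : 0 < ε) :
    ∀ (n : ℕ) (f : ℝ → ℝ), ContDiffOn ℝ (⊤ : ℕ∞) f (Ioo (-ε) ε) →
      (f =o[𝓝 (0:ℝ)] fun t => t ^ n) → ∀ q ≤ n, iteratedDeriv q f 0 = 0 := by
  intro n
  have h0 : (0:ℝ) ∈ Ioo (-ε) ε := ⟨by linarith, hε⟩
  induction n with
  | zero =>
    intro f hf ho q hq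
    interval_cases q
    have ht : Tendsto f (𝓝 0) (𝓝 0) := by
      apply (Asymptotics.isLittleO_one_iff ℝ).1
      simpa [pow_zero] using ho
    have hc : ContinuousAt f 0 := (hf.contDiffAt (isOpen_Ioo.mem_nhds h0)).continuousAt
    have := tendsto_nhds_unique hc.tendsto ht
    simpa using this
  | succ n IH =>
    intro f hf ho q hq
    have hpow : (fun t : ℝ => t ^ (n+1)) =O[𝓝 (0:ℝ)] fun t => t ^ n := by
      rw [isBigO_iff]
      refine ⟨1, ?_⟩
      have : ∀ᶠ t in 𝓝 (0:ℝ), |t| ≤ 1 := by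
        filter_upwards [Metric.ball_mem_nhds (0:ℝ) one_pos] with t ht
        have ht' : |t| < 1 := by simpa [Real.dist_eq] using ht
        exact le_of_lt ht'
      filter_upwards [this] with t ht
      rw [Real.norm_eq_abs, Real.norm_eq_abs, abs_pow, abs_pow, one_mul, pow_succ]
      nlinarith [abs_nonneg t, pow_nonneg (abs_nonneg t) n]
    have hon : f =o[𝓝 (0:ℝ)] fun t => t ^ n := ho.trans_isBigO hpow
    rcases Nat.lt_or_ge q (n+1) with hql | hqe
    · exact IH f hf hon q (by omega)
    · have hq1 : q = n + 1 := by omega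
      subst hq1
      set C : ℝ := iteratedDeriv (n+1) f 0 / (Nat.factorial (n+1) : ℝ) with hCdef
      have hpow_smooth : ContDiffOn ℝ (⊤ : ℕ∞) (fun t : ℝ => t ^ (n+1)) (Ioo (-ε) ε) :=
        (contDiff_id.pow _).contDiffOn
      have hCpow_smooth : ContDiffOn ℝ (⊤ : ℕ∞) (fun t : ℝ => C * t ^ (n+1)) (Ioo (-ε) ε) :=
        ((contDiff_const.mul (contDiff_id.pow _)).contDiffOn)
      set g : ℝ → ℝ := fun t => f t - C * t ^ (n+1) with hgdef
      have hg_smooth : ContDiffOn ℝ (⊤ : ℕ∞) g (Ioo (-ε) ε) := hf.sub hCpow_smooth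
      have hmono_val : ∀ j : ℕ, iteratedDeriv j (fun t : ℝ => C * t ^ (n+1)) 0
          = C * ((n+1).descFactorial j) * (0:ℝ) ^ (n + 1 - j) := by
        intro j
        rw [iteratedDeriv_const_mul_local hε hpow_smooth C j, iteratedDeriv_monomial j (n+1) 0]
        ring
      have hgd : ∀ j ≤ n + 1, iteratedDeriv j g 0 = 0 := by
        intro j hj
        rw [hgdef]
        rw [iteratedDeriv_sub_local hε hf hCpow_smooth j, hmono_val j]
        rcases Nat.lt_or_ge j (n+1) with hjl | hje
        · rw [IH f hf hon j (by omega)]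
          rw [zero_pow (by omega : n + 1 - j ≠ 0)]
          ring
        · have : j = n + 1 := by omega
          subst this
          rw [Nat.sub_self, pow_zero, Nat.descFactorial_self]
          rw [hCdef]
          field_simp
          ring
      have hgo : g =o[𝓝 (0:ℝ)] fun t => t ^ (n+1) := peano_forward hε (n+1) g hg_smooth hgd
      have hmono : (fun t : ℝ => C * t ^ (n+1)) =o[𝓝 (0:ℝ)] fun t => t ^ (n+1) := by
        have := ho.sub hgo
        apply this.congr_left
        intro t
        simp [hgdef]
      have hC0 : C = 0 := by
        by_contra hC
        have h2 := hmono.const_mul_left C⁻¹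
        have h3 : (fun t : ℝ => t ^ (n+1)) =o[𝓝 (0:ℝ)] fun t => t ^ (n+1) := by
          apply h2.congr_left
          intro t
          field_simp
        have hfreq : ∃ᶠ t in 𝓝 (0:ℝ), t ^ (n+1) ≠ 0 := by
          have hev : ∀ᶠ t in 𝓝[≠] (0:ℝ), t ^ (n+1) ≠ 0 :=
            eventually_mem_nhdsWithin.mono fun t ht => pow_ne_zero _ ht
          exact hev.frequently.filter_mono nhdsWithin_le_nhds
        exact Asymptotics.isLittleO_irrefl hfreq h3
      have : iteratedDeriv (n+1) f 0 = C * (Nat.factorial (n+1) : ℝ) := by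
        rw [hCdef]
        field_simp
      rw [this, hC0, zero_mul]




variable {P : Type*} [NormedAddCommGroup P] [NormedSpace ℝ P] [CompleteSpace P]

/-- Inversion of `r·e^{ω(x,r)} = s` in the form `c·e^{ω(x, s·c)} = 1`. -/
theorem invert {X : Type*} [NormedAddCommGroup X] [NormedSpace ℝ X] [CompleteSpace X]
    (δ : ℝ) (hδ : 0 < δ) (ω : X × ℝ → ℝ)
    (hω : ContDiffOn ℝ (⊤ : ℕ∞) ω {p : X × ℝ | |p.2| < δ}) (x₀ : X) :
    ∃ (Ω : Set (X × ℝ)) (ε : ℝ) (φ : X × ℝ → ℝ),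
      IsOpen Ω ∧ (x₀, (0:ℝ)) ∈ Ω ∧ 0 < ε ∧ ε ≤ Real.exp (-ω (x₀, 0)) ∧
      (∀ p ∈ Ω, ContDiffAt ℝ (⊤ : ℕ∞) φ p) ∧
      (∀ p ∈ Ω, |p.2 * φ p| < δ) ∧
      (∀ p ∈ Ω, φ p * Real.exp (ω (p.1, p.2 * φ p)) = 1) ∧
      (∀ p ∈ Ω, |φ p - Real.exp (-ω (x₀, 0))| < ε) ∧
      (∀ p ∈ Ω, ∀ c, |c - Real.exp (-ω (x₀, 0))| < ε →
        c * Real.exp (ω (p.1, p.2 * c)) = 1 → c = φ p) := by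
  have hUω : IsOpen {p : X × ℝ | |p.2| < δ} := by
    have : {p : X × ℝ | |p.2| < δ} = (fun p : X × ℝ => p.2) ⁻¹' (Metric.ball 0 δ) := by
      ext p; simp [Real.dist_eq]
    rw [this]
    exact Metric.isOpen_ball.preimage continuous_snd
  set g : (X × ℝ) × ℝ → X × ℝ := fun q => (q.1.1, q.1.2 * q.2) with hgdef
  have hg : ContDiff ℝ (⊤ : ℕ∞) g :=
    (contDiff_fst.comp contDiff_fst).prodMk ((contDiff_snd.comp contDiff_fst).mul contDiff_snd)
  set U : Set ((X × ℝ) × ℝ) := {q | |q.1.2 * q.2| < δ} with hUdef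
  have hUopen : IsOpen U := by
    have : U = g ⁻¹' {p : X × ℝ | |p.2| < δ} := by ext q; simp [hUdef, hgdef]
    rw [this]
    exact hUω.preimage hg.continuous
  have hmaps : MapsTo g U {p : X × ℝ | |p.2| < δ} := fun q hq => hq
  set F : (X × ℝ) × ℝ → ℝ := fun q => q.2 * Real.exp (ω (g q)) - 1 with hFdef
  have hF : ContDiffOn ℝ (⊤ : ℕ∞) F U :=
    ((contDiff_snd.contDiffOn).mul ((hω.comp hg.contDiffOn hmaps).exp)).sub contDiffOn_const
  set W : X × ℝ → ℝ := fun v => fderiv ℝ ω v ((0 : X), (1 : ℝ)) with hWdef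
  have hWc : ContinuousOn W {p : X × ℝ | |p.2| < δ} :=
    (hω.continuousOn_fderiv_of_isOpen hUω (by simp)).clm_apply continuousOn_const
  set D : (X × ℝ) × ℝ → ℝ := fun q => Real.exp (ω (g q)) * (1 + q.2 * q.1.2 * W (g q)) with hDdef
  have hD : ContinuousOn D U := by
    apply ContinuousOn.mul
    · exact ((hω.continuousOn).comp hg.continuous.continuousOn hmaps).rexp
    · apply ContinuousOn.add continuousOn_const
      exact (continuous_snd.continuousOn.mul
        ((continuous_fst.snd).continuousOn)).mul (hWc.comp hg.continuous.continuousOn hmaps)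
  have hωdiff : ∀ v ∈ {p : X × ℝ | |p.2| < δ}, DifferentiableAt ℝ ω v := fun v hv =>
    (hω.contDiffAt (hUω.mem_nhds hv)).differentiableAt (by simp)
  have hder : ∀ q ∈ U, HasDerivAt (fun c => F (q.1, c)) (D q) q.2 := by
    intro q hq
    obtain ⟨⟨x, s⟩, c⟩ := q
    simp only [hUdef, mem_setOf_eq] at hq
    have hv : ((x, s * c) : X × ℝ) ∈ {p : X × ℝ | |p.2| < δ} := hq
    have h1 : HasDerivAt (fun c : ℝ => ((x : X), s * c)) ((0 : X), s) c := by
      refine (hasDerivAt_const _ _).prodMk ?_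
      simpa using (hasDerivAt_id c).const_mul s
    have h2 : HasDerivAt (fun c : ℝ => ω (x, s * c)) (fderiv ℝ ω (x, s * c) ((0:X), s)) c := by
      have := ((hωdiff _ hv).hasFDerivAt).comp_hasDerivAt c h1
      exact this
    have h2' : fderiv ℝ ω (x, s * c) ((0:X), s) = s * W (x, s * c) := by
      have hsm : ((0 : X), s) = s • ((0 : X), (1 : ℝ)) := by simp
      rw [hsm, map_smul, smul_eq_mul, hWdef]
    rw [h2'] at h2
    have h3 := h2.exp
    have h4 := (hasDerivAt_id c).mul h3
    have h5 := h4.sub_const 1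
    have : HasDerivAt (fun c : ℝ => c * Real.exp (ω (x, s * c)) - 1)
        (1 * Real.exp (ω (x, s * c)) + c * (Real.exp (ω (x, s * c)) * (s * W (x, s * c)))) c := by
      simpa using h5
    have hval : D ((x, s), c) =
        1 * Real.exp (ω (x, s * c)) + c * (Real.exp (ω (x, s * c)) * (s * W (x, s * c))) := by
      simp only [hDdef, hgdef]
      ring
    rw [hval]
    exact this
  set a : ℝ := Real.exp (-ω (x₀, 0)) with hadef
  have hapos : 0 < a := Real.exp_pos _
  have h₀ : (((x₀, (0:ℝ)), a) : (X × ℝ) × ℝ) ∈ U := by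
    simp [hUdef, hδ]
  have hF₀ : F ((x₀, 0), a) = 0 := by
    simp only [hFdef, hgdef, hadef, zero_mul]
    rw [← Real.exp_add]
    simp
  have hD₀ : D ((x₀, 0), a) ≠ 0 := by
    simp only [hDdef, hgdef, zero_mul, mul_zero, add_zero, mul_one]
    positivity
  obtain ⟨Ω, ε, φ, hΩopen, hp₀Ω, hεpos, hεle, hφsmooth, hφU, hφeq, hφnear, hφuniq⟩ :=
    implicit F U hUopen hF D hD hder (x₀, 0) a h₀ hF₀ hD₀ a hapos
  refine ⟨Ω, ε, φ, hΩopen, hp₀Ω, hεpos, hεle, hφsmooth, ?_, ?_, hφnear, ?_⟩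
  · intro p hp
    exact hφU p hp
  · intro p hp
    have := hφeq p hp
    simp only [hFdef, hgdef, sub_eq_zero] at this
    exact this
  · intro p hp c hc hceq
    apply hφuniq p hp c hc
    simp only [hFdef, hgdef, sub_eq_zero]
    exact hceq


lemma isOpen_absLt {X : Type*} [TopologicalSpace X] (δ : ℝ) :
    IsOpen {p : X × ℝ | |p.2| < δ} := by
  have : {p : X × ℝ | |p.2| < δ} = (fun p : X × ℝ => p.2) ⁻¹' (Metric.ball 0 δ) := by
    ext p; simp [Real.dist_eq]
  rw [this]
  exact Metric.isOpen_ball.preimage continuous_snd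


end AuxGW9

open AuxGW9


/-- Graham–Witten, proof of Proposition 2: the relation `r·e^{ω(x,r)} = s` can be inverted
as `r = s·b(x,s)` with `b` smooth and positive, and if the expansion of `ω(x,·)` at `0` has
only even powers through order `k+1`, so does that of `b(x,·)`. -/
theorem stmt_9
    (k m : ℕ) (hm : 1 ≤ m) (δ : ℝ) (hδ : 0 < δ)
    (ω : (Fin m → ℝ) × ℝ → ℝ)
    (hω_smooth : ContDiffOn ℝ (⊤ : ℕ∞) ω {p : (Fin m → ℝ) × ℝ | |p.2| < δ})
    (hω_even : ∀ (x : Fin m → ℝ) (q : ℕ), Odd q → q ≤ k + 1 →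
      iteratedDeriv q (fun r => ω (x, r)) 0 = 0) :
    ∀ x₀ : Fin m → ℝ,
      ∃ (V : Set (Fin m → ℝ)) (δ' : ℝ) (b : (Fin m → ℝ) × ℝ → ℝ),
        IsOpen V ∧ x₀ ∈ V ∧ 0 < δ' ∧
        ContDiffOn ℝ (⊤ : ℕ∞) b (V ×ˢ Ioo (-δ') δ') ∧
        (∀ p ∈ V ×ˢ Ioo (-δ') δ', 0 < b p) ∧
        (∀ x ∈ V, ∀ s : ℝ, 0 ≤ s → s < δ' →
          |s * b (x, s)| < δ ∧ (s * b (x, s)) * Real.exp (ω (x, s * b (x, s))) = s) ∧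
        (∀ x ∈ V, ∀ q : ℕ, Odd q → q ≤ k + 1 →
          iteratedDeriv q (fun s => b (x, s)) 0 = 0) := by
  intro x₀
  classical
  have hUopen : IsOpen {p : (Fin m → ℝ) × ℝ | |p.2| < δ} := isOpen_absLt δ
  -- the even part of ω in the second variable
  set ω' : (Fin m → ℝ) × ℝ → ℝ := fun p => (ω p + ω (p.1, -p.2)) / 2 with hω'def
  have hneg : ContDiff ℝ (⊤ : ℕ∞) (fun p : (Fin m → ℝ) × ℝ => (p.1, -p.2)) :=
    contDiff_fst.prodMk contDiff_snd.neg
  have hmapsneg : MapsTo (fun p : (Fin m → ℝ) × ℝ => (p.1, -p.2))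
      {p : (Fin m → ℝ) × ℝ | |p.2| < δ} {p : (Fin m → ℝ) × ℝ | |p.2| < δ} := by
    intro p hp
    simpa using hp
  have hω'_smooth : ContDiffOn ℝ (⊤ : ℕ∞) ω' {p : (Fin m → ℝ) × ℝ | |p.2| < δ} :=
    (hω_smooth.add (hω_smooth.comp hneg.contDiffOn hmapsneg)).div_const 2
  have hω'0 : ω' (x₀, 0) = ω (x₀, 0) := by
    simp only [hω'def, neg_zero]
    ring
  have hω'even : ∀ (y : Fin m → ℝ) (t : ℝ), ω' (y, -t) = ω' (y, t) := by
    intro y t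
    simp only [hω'def, neg_neg]
    ring
  obtain ⟨Ω, ε, φ, hΩopen, hΩ0, hεpos, hεle, hφsmooth, hφδ, hφeq, hφnear, hφuniq⟩ :=
    invert δ hδ ω hω_smooth x₀
  obtain ⟨Ω', ε', φ', hΩ'open, hΩ'0, hε'pos, hε'le, hφ'smooth, hφ'δ, hφ'eq, hφ'near, hφ'uniq⟩ :=
    invert δ hδ ω' hω'_smooth x₀
  rw [hω'0] at hε'le hφ'near hφ'uniq
  set a : ℝ := Real.exp (-ω (x₀, 0)) with hadef
  have hapos : 0 < a := Real.exp_pos _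
  -- choose V and δ'
  have hmem : Ω ∩ Ω' ∈ 𝓝 ((x₀, (0:ℝ))) := (hΩopen.inter hΩ'open).mem_nhds ⟨hΩ0, hΩ'0⟩
  rw [mem_nhds_prod_iff] at hmem
  obtain ⟨u, hu, v, hv, huv⟩ := hmem
  obtain ⟨V, hVsub, hVopen, hx₀V⟩ := mem_nhds_iff.1 hu
  obtain ⟨δ₁, hδ₁pos, hball⟩ := Metric.mem_nhds_iff.1 hv
  set δ' : ℝ := min δ₁ δ with hδ'def
  have hδ'pos : 0 < δ' := lt_min hδ₁pos hδ
  have hδ'leδ : δ' ≤ δ := min_le_right _ _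
  have hIoo : Ioo (-δ') δ' ⊆ v := by
    intro s hs
    apply hball
    simp only [Metric.mem_ball, Real.dist_eq, sub_zero]
    rw [abs_lt]
    obtain ⟨h1, h2⟩ := hs
    constructor
    · calc -δ₁ ≤ -δ' := by simp [hδ'def]
        _ < s := h1
    · exact lt_of_lt_of_le h2 (min_le_left _ _)
  have hsub : V ×ˢ Ioo (-δ') δ' ⊆ Ω ∩ Ω' := by
    intro p hp
    exact huv ⟨hVsub hp.1, hIoo hp.2⟩
  have h0mem : (0:ℝ) ∈ Ioo (-δ') δ' := ⟨by linarith, hδ'pos⟩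
  refine ⟨V, δ', φ, hVopen, hx₀V, hδ'pos, ?_, ?_, ?_, ?_⟩
  · -- smoothness
    intro p hp
    exact (hφsmooth p (hsub hp).1).contDiffWithinAt
  · -- positivity
    intro p hp
    have h1 := hφnear p (hsub hp).1
    rw [abs_lt] at h1
    linarith [h1.1, hεle]
  · -- the defining equation
    intro x hx s hs0 hsδ'
    have hpmem : ((x, s) : (Fin m → ℝ) × ℝ) ∈ V ×ˢ Ioo (-δ') δ' :=
      ⟨hx, by constructor <;> [linarith; exact hsδ']⟩
    have hΩm := (hsub hpmem).1
    refine ⟨hφδ _ hΩm, ?_⟩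
    have heq2 : φ (x, s) * Real.exp (ω (x, s * φ (x, s))) = 1 := hφeq _ hΩm
    calc s * φ (x, s) * Real.exp (ω (x, s * φ (x, s)))
        = s * (φ (x, s) * Real.exp (ω (x, s * φ (x, s)))) := by ring
      _ = s := by rw [heq2]; ring
  · -- vanishing of odd derivatives
    intro x hx q hqodd hqle
    have hmemV : ∀ s ∈ Ioo (-δ') δ', ((x, s) : (Fin m → ℝ) × ℝ) ∈ Ω ∩ Ω' := fun s hs =>
      hsub ⟨hx, hs⟩
    -- φ' is even in s
    have hβ'even : ∀ s ∈ Ioo (-δ') δ', φ' (x, -s) = φ' (x, s) := by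
      intro s hs
      have hs' : -s ∈ Ioo (-δ') δ' := by
        obtain ⟨h1, h2⟩ := hs
        exact ⟨by linarith, by linarith⟩
      have hm := (hmemV s hs).2
      have hm' := (hmemV (-s) hs').2
      apply hφ'uniq (x, s) hm (φ' (x, -s)) (hφ'near _ hm')
      have h1 := hφ'eq _ hm'
      have h2 : ((x, -s) : (Fin m → ℝ) × ℝ).2 * φ' (x, -s) = -(s * φ' (x, -s)) := by ring
      rw [h2] at h1
      rw [hω'even x (s * φ' (x, -s))] at h1
      exact h1
    -- odd iterated derivatives of the slice of φ' vanish
    have hβ'odd : ∀ j : ℕ, Odd j → iteratedDeriv j (fun s => φ' (x, s)) 0 = 0 := by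
      intro j hj
      have hev : (fun s => φ' (x, -s)) =ᶠ[𝓝 (0:ℝ)] (fun s => φ' (x, s)) := by
        filter_upwards [isOpen_Ioo.eventually_mem h0mem] with s hs
        exact hβ'even s hs
      have h1 : iteratedDeriv j (fun s => φ' (x, -s)) 0 = iteratedDeriv j (fun s => φ' (x, s)) 0 :=
        hev.iteratedDeriv_eq j
      have h3 := iteratedDeriv_comp_neg j (fun u => φ' (x, u)) 0
      rw [h3, neg_zero, hj.neg_one_pow] at h1
      have h2 : -(iteratedDeriv j (fun s => φ' (x, s)) 0) = iteratedDeriv j (fun s => φ' (x, s)) 0 := by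
        simpa using h1
      linarith
    -- slice smoothness
    have hβsmoothOn : ContDiffOn ℝ (⊤ : ℕ∞) (fun s => φ (x, s)) (Ioo (-δ') δ') := by
      intro s hs
      exact ((hφsmooth _ (hmemV s hs).1).comp s
        (contDiffAt_const.prodMk contDiffAt_id)).contDiffWithinAt
    have hβ'smoothOn : ContDiffOn ℝ (⊤ : ℕ∞) (fun s => φ' (x, s)) (Ioo (-δ') δ') := by
      intro s hs
      exact ((hφ'smooth _ (hmemV s hs).2).comp s
        (contDiffAt_const.prodMk contDiffAt_id)).contDiffWithinAt
    -- the one-variable functions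
    set w : ℝ → ℝ := fun t => ω (x, t) with hwdef
    set O : ℝ → ℝ := fun t => (w t - w (-t)) / 2 with hOdef
    have hmemδ : ∀ t : ℝ, t ∈ Ioo (-δ) δ → ((x, t) : (Fin m → ℝ) × ℝ) ∈
        {p : (Fin m → ℝ) × ℝ | |p.2| < δ} := by
      intro t ht
      simp only [mem_setOf_eq, abs_lt]
      exact ⟨ht.1, ht.2⟩
    have hwsmooth : ContDiffOn ℝ (⊤ : ℕ∞) w (Ioo (-δ) δ) := by
      intro t ht
      exact ((hω_smooth.contDiffAt (hUopen.mem_nhds (hmemδ t ht))).comp t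
        (contDiffAt_const.prodMk contDiffAt_id)).contDiffWithinAt
    have hwneg : ContDiffOn ℝ (⊤ : ℕ∞) (fun t => w (-t)) (Ioo (-δ) δ) := by
      apply hwsmooth.comp contDiff_neg.contDiffOn
      intro t ht
      simp only [mem_Ioo] at ht ⊢
      constructor <;> linarith [ht.1, ht.2]
    have hOd : ∀ j ≤ k + 1, iteratedDeriv j O 0 = 0 := by
      intro j hj
      have hsubd := iteratedDeriv_sub_local hδ hwsmooth hwneg j
      have hcomp : iteratedDeriv j (fun t => w (-t)) 0 = ((-1:ℝ))^j • iteratedDeriv j w 0 := by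
        have := iteratedDeriv_comp_neg j w 0
        simpa using this
      have hOform : O = fun t => (2:ℝ)⁻¹ * (w t - w (-t)) := by
        funext t
        rw [hOdef]
        ring
      rw [hOform, iteratedDeriv_const_mul_local hδ (hwsmooth.sub hwneg) _ j, hsubd, hcomp]
      rcases Nat.even_or_odd j with hje | hjo
      · rw [hje.neg_one_pow]
        simp
      · rw [hjo.neg_one_pow]
        have hwd : iteratedDeriv j w 0 = 0 := hω_even x j hjo hj
        rw [hwd]
        simp
    have hOsmooth : ContDiffOn ℝ (⊤ : ℕ∞) O (Ioo (-δ) δ) := (hwsmooth.sub hwneg).div_const 2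
    have hO : O =o[𝓝 (0:ℝ)] fun t => t ^ (k+1) := peano_forward hδ (k+1) O hOsmooth hOd
    -- the forward map Φ and its derivative
    set Φ : ℝ → ℝ := fun t => t * Real.exp (w t) with hΦdef
    set DΦ : ℝ → ℝ := fun t => Real.exp (w t) *
      (1 + t * (fderiv ℝ ω (x, t) ((0 : Fin m → ℝ), (1:ℝ)))) with hDΦdef
    have hΦder : ∀ t ∈ Ioo (-δ) δ, HasDerivAt Φ (DΦ t) t := by
      intro t ht
      have hωd : DifferentiableAt ℝ ω (x, t) :=
        (hω_smooth.contDiffAt (hUopen.mem_nhds (hmemδ t ht))).differentiableAt (by simp)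
      have h1 : HasDerivAt (fun t : ℝ => ((x : Fin m → ℝ), t)) ((0 : Fin m → ℝ), (1:ℝ)) t :=
        (hasDerivAt_const _ _).prodMk (hasDerivAt_id _)
      have h2 : HasDerivAt w (fderiv ℝ ω (x, t) ((0 : Fin m → ℝ), (1:ℝ))) t := by
        have := (hωd.hasFDerivAt).comp_hasDerivAt t h1
        exact this
      have h3 := h2.exp
      have h4 := (hasDerivAt_id t).mul h3
      have h5 : HasDerivAt Φ (1 * Real.exp (w t) +
          t * (Real.exp (w t) * fderiv ℝ ω (x, t) ((0 : Fin m → ℝ), (1:ℝ)))) t := by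
        exact h4
      have hval : DΦ t = 1 * Real.exp (w t) +
          t * (Real.exp (w t) * fderiv ℝ ω (x, t) ((0 : Fin m → ℝ), (1:ℝ))) := by
        rw [hDΦdef]
        ring
      rw [hval]
      exact h5
    have hDΦcont : ContinuousOn DΦ (Ioo (-δ) δ) := by
      apply ContinuousOn.mul
      · exact hwsmooth.continuousOn.rexp
      · apply ContinuousOn.add continuousOn_const
        apply ContinuousOn.mul continuousOn_id
        have hfd : ContinuousOn (fun v : (Fin m → ℝ) × ℝ => fderiv ℝ ω v
            ((0 : Fin m → ℝ), (1:ℝ))) {p : (Fin m → ℝ) × ℝ | |p.2| < δ} :=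
          (hω_smooth.continuousOn_fderiv_of_isOpen hUopen (by simp)).clm_apply continuousOn_const
        exact hfd.comp (continuous_const.prodMk continuous_id).continuousOn hmemδ
    set c₁ : ℝ := Real.exp (w 0) / 2 with hc₁def
    have hc₁pos : 0 < c₁ := by positivity
    have hδmem : (0:ℝ) ∈ Ioo (-δ) δ := ⟨by linarith, hδ⟩
    have hDΦ0 : DΦ 0 = Real.exp (w 0) := by simp [hDΦdef]
    have hev1 : ∀ᶠ t in 𝓝 (0:ℝ), c₁ < DΦ t := by
      have hlt : c₁ < DΦ 0 := by
        rw [hDΦ0, hc₁def]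
        linarith [Real.exp_pos (w 0)]
      exact (hDΦcont.continuousAt (isOpen_Ioo.mem_nhds hδmem)).eventually (eventually_gt_nhds hlt)
    obtain ⟨η, hηpos, hηball⟩ : ∃ η > 0, ∀ t : ℝ, |t| < η → (c₁ < DΦ t ∧ t ∈ Ioo (-δ) δ) := by
      have h := hev1.and (isOpen_Ioo.eventually_mem hδmem)
      rw [Metric.eventually_nhds_iff] at h
      obtain ⟨η, hη, h⟩ := h
      exact ⟨η, hη, fun t ht => h (by simpa [Real.dist_eq] using ht)⟩
    -- reverse Lipschitz bound for Φ on the ball of radius η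
    have hkeyMVT : ∀ u u' : ℝ, u < u' → |u| < η → |u'| < η → c₁ * (u' - u) ≤ |Φ u' - Φ u| := by
      intro u u' huu hu hu'
      have hIccmem : ∀ t ∈ Icc u u', |t| < η := by
        intro t ht
        rw [abs_lt] at hu hu' ⊢
        exact ⟨by linarith [ht.1], by linarith [ht.2]⟩
      have hcont : ContinuousOn Φ (Icc u u') := by
        intro t ht
        exact ((hΦder t (hηball t (hIccmem t ht)).2).continuousAt).continuousWithinAt
      have hderiv : ∀ t ∈ Ioo u u', HasDerivAt Φ (DΦ t) t := fun t ht =>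
        hΦder t (hηball t (hIccmem t (Ioo_subset_Icc_self ht))).2
      obtain ⟨ξ, hξ, hslope⟩ := exists_hasDerivAt_eq_slope Φ DΦ huu hcont hderiv
      have hξη : |ξ| < η := hIccmem ξ (Ioo_subset_Icc_self hξ)
      have hc₁ξ : c₁ < DΦ ξ := (hηball ξ hξη).1
      have hpos : 0 < u' - u := by linarith
      have h1 : c₁ * (u' - u) ≤ DΦ ξ * (u' - u) := by nlinarith
      rw [hslope] at h1
      have h2 : (Φ u' - Φ u) / (u' - u) * (u' - u) = Φ u' - Φ u := by
        field_simp
      rw [h2] at h1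
      exact le_trans h1 (le_abs_self _)
    have hrev : ∀ u u' : ℝ, |u| < η → |u'| < η → c₁ * |u - u'| ≤ |Φ u - Φ u'| := by
      intro u u' hu hu'
      rcases lt_trichotomy u u' with hlt | heq | hgt
      · have h := hkeyMVT u u' hlt hu hu'
        have h1 : c₁ * |u - u'| = c₁ * (u' - u) := by
          rw [abs_sub_comm, abs_of_pos (by linarith : (0:ℝ) < u' - u)]
        rw [h1, abs_sub_comm (Φ u) (Φ u')]
        exact h
      · subst heq
        simp
      · have h := hkeyMVT u' u hgt hu' hu
        calc c₁ * |u - u'| = c₁ * (u - u') := by rw [abs_of_pos (by linarith : (0:ℝ) < u - u')]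
          _ ≤ |Φ u - Φ u'| := h
    -- base values of the two implicit functions agree
    have hβ0 : φ (x, 0) = Real.exp (-(w 0)) := by
      have hm := (hmemV 0 h0mem).1
      have h1 := hφeq _ hm
      have h2 : ((x, (0:ℝ)) : (Fin m → ℝ) × ℝ).2 * φ (x, 0) = 0 := by simp
      rw [h2] at h1
      rw [Real.exp_neg]
      exact eq_inv_of_mul_eq_one_left h1
    have hβ'0 : φ' (x, 0) = Real.exp (-(w 0)) := by
      have hm := (hmemV 0 h0mem).2
      have h1 := hφ'eq _ hm
      have h2 : ((x, (0:ℝ)) : (Fin m → ℝ) × ℝ).2 * φ' (x, 0) = 0 := by simp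
      rw [h2] at h1
      have h3 : ω' (x, 0) = w 0 := by
        simp only [hω'def, hwdef, neg_zero]
        ring
      rw [h3] at h1
      rw [Real.exp_neg]
      exact eq_inv_of_mul_eq_one_left h1
    -- the two radial functions
    set r : ℝ → ℝ := fun s => s * φ (x, s) with hrdef
    set r' : ℝ → ℝ := fun s => s * φ' (x, s) with hr'def
    have hβct : ContinuousAt (fun s => φ (x, s)) 0 :=
      (hβsmoothOn.contDiffAt (isOpen_Ioo.mem_nhds h0mem)).continuousAt
    have hβ'ct : ContinuousAt (fun s => φ' (x, s)) 0 :=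
      (hβ'smoothOn.contDiffAt (isOpen_Ioo.mem_nhds h0mem)).continuousAt
    have hr0 : Tendsto r (𝓝 0) (𝓝 0) := by
      have hct : ContinuousAt r 0 := continuousAt_id.mul hβct
      have h00 : r 0 = 0 := by simp [hrdef]
      have := hct.tendsto
      rwa [h00] at this
    have hr'0 : Tendsto r' (𝓝 0) (𝓝 0) := by
      have hct : ContinuousAt r' 0 := continuousAt_id.mul hβ'ct
      have h00 : r' 0 = 0 := by simp [hr'def]
      have := hct.tendsto
      rwa [h00] at this
    have hevabs : ∀ᶠ t in 𝓝 (0:ℝ), |t| < η := by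
      filter_upwards [Metric.ball_mem_nhds (0:ℝ) hηpos] with t ht
      simpa [Real.dist_eq] using ht
    have hE1 : ∀ᶠ s in 𝓝 (0:ℝ), s ∈ Ioo (-δ') δ' := isOpen_Ioo.eventually_mem h0mem
    have hE2 : ∀ᶠ s in 𝓝 (0:ℝ), |r s| < η := hr0.eventually hevabs
    have hE3 : ∀ᶠ s in 𝓝 (0:ℝ), |r' s| < η := hr'0.eventually hevabs
    have hOct : ContinuousAt O 0 := (hOsmooth.contDiffAt (isOpen_Ioo.mem_nhds hδmem)).continuousAt
    have hO0 : O 0 = 0 := by simp [hOdef]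
    have hE4 : ∀ᶠ s in 𝓝 (0:ℝ), |O (r' s)| ≤ 1 := by
      have ht : Tendsto (fun s => O (r' s)) (𝓝 0) (𝓝 0) := by
        have := hOct.tendsto.comp hr'0
        rwa [hO0] at this
      have : ∀ᶠ u in 𝓝 (0:ℝ), |u| ≤ 1 := by
        filter_upwards [Metric.ball_mem_nhds (0:ℝ) one_pos] with u hu
        have : |u| < 1 := by simpa [Real.dist_eq] using hu
        linarith
      exact ht.eventually this
    set M : ℝ := Real.exp (w 0) + 1 with hMdef
    have hE5 : ∀ᶠ s in 𝓝 (0:ℝ), Real.exp (w (r' s)) ≤ M := by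
      have hwct : ContinuousAt w 0 :=
        (hwsmooth.contDiffAt (isOpen_Ioo.mem_nhds hδmem)).continuousAt
      have ht : Tendsto (fun s => Real.exp (w (r' s))) (𝓝 0) (𝓝 (Real.exp (w 0))) :=
        (Real.continuous_exp.continuousAt.tendsto.comp hwct.tendsto).comp hr'0
      have hlt : Real.exp (w 0) < M := by rw [hMdef]; linarith
      have := ht.eventually (eventually_lt_nhds hlt)
      filter_upwards [this] with s hs
      linarith
    have hE6 : ∀ᶠ s in 𝓝 (0:ℝ), |φ' (x, s)| ≤ a + ε' := by
      filter_upwards [hE1] with s hs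
      have := hφ'near _ (hmemV s hs).2
      rw [abs_lt] at this
      rw [abs_le]
      constructor <;> [linarith [hapos, hε'pos]; linarith]
    -- the key pointwise estimate
    have hMpos : 0 < M := by rw [hMdef]; positivity
    have hkey : ∀ᶠ s in 𝓝 (0:ℝ), |r s - r' s| ≤ (2 * M / c₁) * |r' s * O (r' s)| := by
      filter_upwards [hE1, hE2, hE3, hE4, hE5] with s h1 h2 h3 h4 h5
      have hΦr : Φ (r s) = s := by
        have heq : φ (x, s) * Real.exp (ω (x, s * φ (x, s))) = 1 := hφeq _ (hmemV s h1).1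
        calc Φ (r s) = s * (φ (x, s) * Real.exp (ω (x, s * φ (x, s)))) := by
              simp only [hΦdef, hrdef, hwdef]
              ring
          _ = s := by rw [heq]; ring
      have hΦ'r' : r' s * Real.exp (ω' (x, r' s)) = s := by
        have heq : φ' (x, s) * Real.exp (ω' (x, s * φ' (x, s))) = 1 := hφ'eq _ (hmemV s h1).2
        calc r' s * Real.exp (ω' (x, r' s))
            = s * (φ' (x, s) * Real.exp (ω' (x, s * φ' (x, s)))) := by
              simp only [hr'def]
              ring
          _ = s := by rw [heq]; ring
      have hw'O : ω' (x, r' s) = w (r' s) - O (r' s) := by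
        simp only [hω'def, hOdef, hwdef]
        ring
      -- bound |Φ (r s) - Φ (r' s)|
      have hdiff : Φ (r s) - Φ (r' s) = r' s * (Real.exp (w (r' s) - O (r' s)) - Real.exp (w (r' s))) := by
        calc Φ (r s) - Φ (r' s) = r' s * Real.exp (ω' (x, r' s)) - Φ (r' s) := by
              rw [hΦr, hΦ'r']
          _ = r' s * (Real.exp (w (r' s) - O (r' s)) - Real.exp (w (r' s))) := by
              rw [hw'O]
              simp only [hΦdef]
              ring
      have hexp : |Real.exp (w (r' s) - O (r' s)) - Real.exp (w (r' s))|
          ≤ M * (2 * |O (r' s)|) := by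
        have hfac : Real.exp (w (r' s) - O (r' s)) - Real.exp (w (r' s))
            = Real.exp (w (r' s)) * (Real.exp (-O (r' s)) - 1) := by
          rw [mul_sub, ← Real.exp_add, mul_one, ← sub_eq_add_neg]
        rw [hfac, abs_mul, abs_of_pos (Real.exp_pos _)]
        have habs : |Real.exp (-O (r' s)) - 1| ≤ 2 * |(-O (r' s))| := by
          apply Real.abs_exp_sub_one_le
          rw [abs_neg]
          exact h4
        rw [abs_neg] at habs
        nlinarith [Real.exp_pos (w (r' s)), abs_nonneg (Real.exp (-O (r' s)) - 1),
          abs_nonneg (O (r' s)), mul_le_mul h5 habs (abs_nonneg _) (le_of_lt hMpos)]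
      have hΦbound : |Φ (r s) - Φ (r' s)| ≤ |r' s| * (M * (2 * |O (r' s)|)) := by
        rw [hdiff, abs_mul]
        exact mul_le_mul_of_nonneg_left hexp (abs_nonneg _)
      have hlip := hrev (r s) (r' s) h2 h3
      rw [abs_mul]
      have : c₁ * |r s - r' s| ≤ |r' s| * (M * (2 * |O (r' s)|)) := le_trans hlip hΦbound
      rw [div_mul_eq_mul_div, le_div_iff₀ hc₁pos]
      nlinarith [abs_nonneg (r s - r' s), abs_nonneg (r' s), abs_nonneg (O (r' s))]
    -- assemble the asymptotics
    have hbigO : (fun s => r s - r' s) =O[𝓝 (0:ℝ)] fun s => r' s * O (r' s) := by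
      rw [isBigO_iff]
      exact ⟨2 * M / c₁, by
        filter_upwards [hkey] with s hs
        simpa [Real.norm_eq_abs, abs_mul] using hs⟩
    have hr'bigO : r' =O[𝓝 (0:ℝ)] fun s => s := by
      rw [isBigO_iff]
      refine ⟨a + ε', ?_⟩
      filter_upwards [hE6] with s hs
      rw [Real.norm_eq_abs, Real.norm_eq_abs, hr'def]
      calc |s * φ' (x, s)| = |s| * |φ' (x, s)| := abs_mul _ _
        _ ≤ |s| * (a + ε') := mul_le_mul_of_nonneg_left hs (abs_nonneg s)
        _ = (a + ε') * |s| := by ring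
    have hOcomp : (fun s => O (r' s)) =o[𝓝 (0:ℝ)] fun s => (r' s) ^ (k+1) := by
      have := hO.comp_tendsto hr'0
      simpa [Function.comp_def] using this
    have hOcomp2 : (fun s => O (r' s)) =o[𝓝 (0:ℝ)] fun s => s ^ (k+1) :=
      hOcomp.trans_isBigO (hr'bigO.pow (k+1))
    have hprod : (fun s => r' s * O (r' s)) =o[𝓝 (0:ℝ)] fun s => s * s ^ (k+1) :=
      hr'bigO.mul_isLittleO hOcomp2
    have hrr' : (fun s => r s - r' s) =o[𝓝 (0:ℝ)] fun s => s ^ (k+2) := by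
      have h1 := hbigO.trans_isLittleO hprod
      have h2 : (fun s : ℝ => s * s ^ (k+1)) = fun s : ℝ => s ^ (k+2) := by
        funext s
        ring
      rwa [h2] at h1
    -- the difference of the slices is o(s^(k+1))
    have hβdiff : (fun s => φ (x, s) - φ' (x, s)) =o[𝓝 (0:ℝ)] fun s : ℝ => s ^ (k+1) := by
      rw [isLittleO_iff] at hrr' ⊢
      intro c hc
      filter_upwards [hrr' hc] with s hs
      by_cases hs0 : s = 0
      · subst hs0
        rw [hβ0, hβ'0]
        simp
      · have hrdiff : r s - r' s = s * (φ (x, s) - φ' (x, s)) := by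
          rw [hrdef, hr'def]
          ring
        rw [hrdiff] at hs
        rw [Real.norm_eq_abs, Real.norm_eq_abs, abs_mul] at hs
        rw [Real.norm_eq_abs, Real.norm_eq_abs]
        have habs : (0:ℝ) < |s| := abs_pos.2 hs0
        have hps : |s ^ (k+2)| = |s ^ (k+1)| * |s| := by
          rw [abs_pow, abs_pow, pow_succ]
        rw [hps] at hs
        have : |s| * |φ (x, s) - φ' (x, s)| ≤ |s| * (c * |s ^ (k+1)|) := by
          calc |s| * |φ (x, s) - φ' (x, s)| ≤ c * (|s ^ (k+1)| * |s|) := hs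
            _ = |s| * (c * |s ^ (k+1)|) := by ring
        exact le_of_mul_le_mul_left this habs
    -- conclude via Taylor
    have hsm : ContDiffOn ℝ (⊤ : ℕ∞) (fun s => φ (x, s) - φ' (x, s)) (Ioo (-δ') δ') :=
      hβsmoothOn.sub hβ'smoothOn
    have hiter := peano_reverse hδ'pos (k+1) _ hsm hβdiff q hqle
    rw [iteratedDeriv_sub_local hδ'pos hβsmoothOn hβ'smoothOn q] at hiter
    have hodd := hβ'odd q hqodd
    linarith [hiter, hodd]


end AuxGW9
end
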